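/- arXiv:2310.19437 — 6 statements merged into one kernel-verified Lean document; each statement's English description precedes it below -/
import Mathlib

section
/- Let m, p, ℓ be positive integers and let t be an edge labeling of K_n (n ≥ 2) of (m,ℓ)_p type. Then for any two distinct vertices u, v and any p-swap t′ of t, |s(t′,u) − s(t′,v)| ≤ |s(t,u) − s(t,v)| + 2mp² + 2p(n − ℓ − 1). -/
open Finset

namespace Swap

noncomputable section
open scoped Classical

def eps (n : ℕ) : ℕ := n * (n - 1) / 2

def incEdges (n : ℕ) (v : Fin n) : Finset (Sym2 (Fin n)) :=
  Finset.univ.filter fun e => v ∈ e ∧ ¬ e.IsDiag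

def IsEdgeLabeling (n : ℕ) (t : Sym2 (Fin n) → ℕ) : Prop :=
  Set.BijOn t {e : Sym2 (Fin n) | ¬ e.IsDiag} (Set.Icc 1 (eps n))

def labelSum (n : ℕ) (t : Sym2 (Fin n) → ℕ) (v : Fin n) : ℤ :=
  ∑ e ∈ incEdges n v, (t e : ℤ)

def labelSet (n : ℕ) (t : Sym2 (Fin n) → ℕ) (v : Fin n) : Finset ℕ :=
  (incEdges n v).image t

def AlmostSupermagic (n α : ℕ) (t : Sym2 (Fin n) → ℕ) : Prop :=
  IsEdgeLabeling n t ∧ ∀ u v : Fin n, |labelSum n t u - labelSum n t v| ≤ (α : ℤ)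

def IsPSwap (n p : ℕ) (t t' : Sym2 (Fin n) → ℕ) : Prop :=
  IsEdgeLabeling n t' ∧ ∀ e : Sym2 (Fin n), ¬ e.IsDiag → |(t' e : ℤ) - (t e : ℤ)| ≤ (p : ℤ)

def robustness (n p : ℕ) (t : Sym2 (Fin n) → ℕ) : ℕ :=
  sSup {d : ℕ | ∃ t' : Sym2 (Fin n) → ℕ, IsPSwap n p t t' ∧
    ∃ u v : Fin n, u ≠ v ∧ (d : ℤ) = |labelSum n t' u - labelSum n t' v|}

def Uplus (n p : ℕ) (t : Sym2 (Fin n) → ℕ) (v : Fin n) : Finset (Sym2 (Fin n)) :=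
  (incEdges n v).filter fun e => ∃ e' ∈ incEdges n v, t e' = t e + p

def Uminus (n p : ℕ) (t : Sym2 (Fin n) → ℕ) (v : Fin n) : Finset (Sym2 (Fin n)) :=
  (incEdges n v).filter fun e => ∃ e' ∈ incEdges n v, t e' + p = t e

def badPairsI (n p : ℕ) (t : Sym2 (Fin n) → ℕ) (u v : Fin n) :
    Finset (Sym2 (Sym2 (Fin n))) :=
  Finset.univ.filter fun P => ∃ e₁ e₂ : Sym2 (Fin n), P = s(e₁, e₂) ∧
    ¬ e₁.IsDiag ∧ ¬ e₂.IsDiag ∧ u ∈ e₁ ∧ v ∈ e₂ ∧ ((t e₁ : ℤ) - (t e₂ : ℤ)).natAbs = p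

def badPairsII (n p : ℕ) (t : Sym2 (Fin n) → ℕ) (u v : Fin n) :
    Finset (Sym2 (Sym2 (Fin n))) :=
  Finset.univ.filter fun P => ∃ e₁ e₂ : Sym2 (Fin n), P = s(e₁, e₂) ∧
    ¬ e₁.IsDiag ∧ ¬ e₂.IsDiag ∧ u ∈ e₁ ∧ v ∈ e₂ ∧ ((t e₁ : ℤ) - (t e₂ : ℤ)).natAbs = 2 * p

def badPairs (n p : ℕ) (t : Sym2 (Fin n) → ℕ) (u v : Fin n) :
    Finset (Sym2 (Sym2 (Fin n))) :=
  badPairsI n p t u v ∪ badPairsII n p t u v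

def IsAP1 (I : Finset ℕ) : Prop := ∃ a b : ℕ, a ≤ b ∧ I = Finset.Icc a b

def SetHasType (p m ℓ : ℕ) (S : Finset ℕ) : Prop :=
  ∃ 𝒜 : Finset (Finset ℕ), 𝒜.card ≤ m ∧
    (∀ I ∈ 𝒜, IsAP1 I ∧ I ⊆ S ∧ 2 * p ≤ I.card) ∧
    (𝒜 : Set (Finset ℕ)).PairwiseDisjoint id ∧
    ℓ ≤ ∑ I ∈ 𝒜, I.card

def LabelingHasType (n p m ℓ : ℕ) (t : Sym2 (Fin n) → ℕ) : Prop :=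
  ∀ v : Fin n, SetHasType p m ℓ (labelSet n t v)

def AstrayGood (n b : ℕ) (t : Sym2 (Fin n) → ℕ) : Prop :=
  IsEdgeLabeling n t ∧
  ∃ A : Finset (Sym2 (Fin n)), (∀ e ∈ A, ¬ e.IsDiag) ∧
    A.card % 2 = eps n % 2 ∧
    A.image t = Finset.Icc ((eps n - A.card) / 2 + 1) ((eps n + A.card) / 2) ∧
    ∀ v : Fin n,
      (incEdges n v ∩ A).card ≤ b ∧
      ((incEdges n v).filter fun e => t e ≤ (eps n - A.card) / 2).card
        = ((incEdges n v).filter fun e => (eps n + A.card) / 2 < t e).card ∧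
      2 * ∑ e ∈ incEdges n v \ A, t e = (incEdges n v \ A).card * (eps n + 1)

def Admissible (p : ℕ → ℕ) : Prop :=
  Filter.Tendsto (fun n => (p n : ℝ) / n) Filter.atTop (nhds 0) ∧
  Filter.Tendsto p Filter.atTop Filter.atTop

end
end Swap

/-!
Call `∑_{t e < k} (t' e - t e)` the displacement of the label prefix below `k`. As `t'` permutes
the labels of `t` and moves each by at most `p`, the edges entering the prefix and those leaving it
carry distinct labels on either side of `k` within distance `p`, and a sharp bound on sums of
distinct integers puts every prefix displacement in `[0, p²]`. A 1-AP `[a, b]` inside `S(t, w)`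
carries exactly the edges of `K_n` labelled in `[a, b]` (labels are distinct), so the displacement
at `w` over that block is a difference of two prefix displacements, of absolute value at most
`p²`. The at most `m` blocks contribute at most `m p²`, the at most `n - 1 - ℓ` other edges at `w`
at most `p` each, and the triangle inequality at `u` and `v` gives the bound.
-/

namespace Finset

variable {ι : Type*} {s : Finset ι} {f : ι → ℤ} {c : ℤ}

lemma sum_le_sum_range_of_injOn (hf : Set.InjOn f s) (hs : ∀ x ∈ s, f x ≤ c) :
    ∑ x ∈ s, f x ≤ ∑ n ∈ range #s, (c - n) := by
  classical
  simpa [sum_image hf, card_image_of_injOn hf] using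
    sum_le_sum_range (s := s.image f) (c := c) (by simpa using hs)

lemma sum_range_le_sum_of_injOn (hf : Set.InjOn f s) (hs : ∀ x ∈ s, c ≤ f x) :
    ∑ n ∈ range #s, (c + n) ≤ ∑ x ∈ s, f x := by
  classical
  simpa [sum_image hf, card_image_of_injOn hf] using
    sum_range_le_sum (s := s.image f) (c := c) (by simpa using hs)

lemma sum_range_sub_sub_sum_range_add (a b : ℤ) (r : ℕ) :
    ∑ n ∈ range r, (a - n) - ∑ n ∈ range r, (b + n) = r * (a - b - r + 1) := by
  induction r with
  | zero => simp
  | succ r ih =>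
    rw [sum_range_succ, sum_range_succ]
    push_cast
    linear_combination ih

end Finset

namespace Swap

open Finset

section Relabeling

variable {α : Type*} {E : Finset α} {t t' : α → ℕ} {p : ℕ}

lemma card_filter_lt_eq (hinj : Set.InjOn t E) (hinj' : Set.InjOn t' E)
    (himage : E.image t = E.image t') (k : ℕ) :
    #(E.filter (t · < k)) = #(E.filter (t' · < k)) := by
  rw [← card_image_of_injOn (hinj.mono (filter_subset _ _)),
    ← card_image_of_injOn (hinj'.mono (filter_subset _ _)),
    ← filter_image (p := (· < k)), ← filter_image (p := (· < k)), himage]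

lemma sum_filter_lt_eq (hinj : Set.InjOn t E) (hinj' : Set.InjOn t' E)
    (himage : E.image t = E.image t') (k : ℕ) :
    ∑ e ∈ E.filter (t · < k), (t e : ℤ) = ∑ e ∈ E.filter (t' · < k), (t' e : ℤ) := by
  rw [← sum_image (f := fun x : ℕ => (x : ℤ)) (hinj.mono (filter_subset _ _)),
    ← sum_image (f := fun x : ℕ => (x : ℤ)) (hinj'.mono (filter_subset _ _)),
    ← filter_image (p := (· < k)), ← filter_image (p := (· < k)), himage]

lemma sum_filter_lt_sub_mem_Icc [DecidableEq α] (hinj : Set.InjOn t E) (hinj' : Set.InjOn t' E)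
    (himage : E.image t = E.image t') (hdisp : ∀ e ∈ E, |(t' e : ℤ) - t e| ≤ p) (k : ℕ) :
    ∑ e ∈ E.filter (t · < k), ((t' e : ℤ) - t e) ∈ Set.Icc 0 ((p : ℤ) ^ 2) := by
  set A := E.filter (t · < k)
  set B := E.filter (t' · < k)
  -- `t'` takes distinct values in `[k, k + p)` on `A \ B` and in `[k - p, k)` on `B \ A`, two sets
  -- of the same size `r`; so the displacement of `A` is at most `r (2p - r) ≤ p ^ 2`.
  have hsplit : ∑ e ∈ A, ((t' e : ℤ) - t e)
      = ∑ e ∈ A \ B, (t' e : ℤ) - ∑ e ∈ B \ A, (t' e : ℤ) := by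
    rw [sum_sub_distrib, sum_filter_lt_eq hinj hinj' himage, sum_sdiff_sub_sum_sdiff]
  have hcard : #(A \ B) = #(B \ A) := card_sdiff_comm (card_filter_lt_eq hinj hinj' himage k)
  have hAB : ∀ e ∈ A \ B, (k : ℤ) ≤ t' e ∧ (t' e : ℤ) ≤ k + p - 1 := by
    intro e he
    simp only [A, B, mem_sdiff, mem_filter, not_and, not_lt] at he
    have := abs_le.mp (hdisp e he.1.1)
    have := he.2 he.1.1
    omega
  have hBA : ∀ e ∈ B \ A, (k : ℤ) - p ≤ t' e ∧ (t' e : ℤ) ≤ k := by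
    intro e he
    simp only [A, B, mem_sdiff, mem_filter, not_and, not_lt] at he
    have := abs_le.mp (hdisp e he.1.1)
    have := he.2 he.1.1
    omega
  have hinjAB : Set.InjOn (fun e => (t' e : ℤ)) ↑(A \ B) :=
    (Nat.cast_injective.comp_injOn hinj').mono (by grind)
  have hinjBA : Set.InjOn (fun e => (t' e : ℤ)) ↑(B \ A) :=
    (Nat.cast_injective.comp_injOn hinj').mono (by grind)
  rw [hsplit, Set.mem_Icc]
  constructor
  · refine sub_nonneg.mpr ?_
    calc ∑ e ∈ B \ A, (t' e : ℤ)
        ≤ #(B \ A) • (k : ℤ) := sum_le_card_nsmul _ _ _ fun e he => (hBA e he).2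
      _ = #(A \ B) • (k : ℤ) := by rw [hcard]
      _ ≤ ∑ e ∈ A \ B, (t' e : ℤ) := card_nsmul_le_sum _ _ _ fun e he => (hAB e he).1
  · have hup := sum_le_sum_range_of_injOn hinjAB fun e he => (hAB e he).2
    have hlo := sum_range_le_sum_of_injOn hinjBA fun e he => (hBA e he).1
    have hgap := sum_range_sub_sub_sum_range_add ((k : ℤ) + p - 1) (k - p) #(A \ B)
    rw [hcard] at hup hgap
    nlinarith [sq_nonneg ((p : ℤ) - #(B \ A))]

lemma abs_sum_filter_mem_Icc_sub_le [DecidableEq α] (hinj : Set.InjOn t E)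
    (hinj' : Set.InjOn t' E) (himage : E.image t = E.image t')
    (hdisp : ∀ e ∈ E, |(t' e : ℤ) - t e| ≤ p) {a b : ℕ} (hab : a ≤ b) :
    |∑ e ∈ E.filter (t · ∈ Icc a b), ((t' e : ℤ) - t e)| ≤ (p : ℤ) ^ 2 := by
  have hsdiff : E.filter (t · ∈ Icc a b) = E.filter (t · < b + 1) \ E.filter (t · < a) := by
    ext e
    simp only [mem_filter, mem_sdiff, mem_Icc]
    grind
  have hsub : E.filter (t · < a) ⊆ E.filter (t · < b + 1) := by
    intro e
    simp only [mem_filter]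
    grind
  obtain ⟨hb₀, hb⟩ := sum_filter_lt_sub_mem_Icc hinj hinj' himage hdisp (b + 1)
  obtain ⟨ha₀, ha⟩ := sum_filter_lt_sub_mem_Icc hinj hinj' himage hdisp a
  rw [hsdiff, sum_sdiff_eq_sub hsub]
  exact abs_sub_le_of_nonneg_of_le hb₀ hb ha₀ ha

lemma abs_sum_sub_le_of_subset_image [DecidableEq α] (hinj : Set.InjOn t E)
    (hinj' : Set.InjOn t' E) (himage : E.image t = E.image t')
    (hdisp : ∀ e ∈ E, |(t' e : ℤ) - t e| ≤ p) {D : Finset α} (hD : D ⊆ E)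
    {𝒜 : Finset (Finset ℕ)} (h𝒜 : ∀ I ∈ 𝒜, IsAP1 I ∧ I ⊆ D.image t)
    (hdisj : (𝒜 : Set (Finset ℕ)).PairwiseDisjoint id) :
    |∑ e ∈ D, ((t' e : ℤ) - t e)| ≤ #𝒜 * (p : ℤ) ^ 2 + p * (#D - ∑ I ∈ 𝒜, (#I : ℤ)) := by
  set C : Finset ℕ → Finset α := fun I => D.filter (t · ∈ I)
  have hCE : ∀ I ∈ 𝒜, C I = E.filter (t · ∈ I) := by
    intro I hI
    ext e
    simp only [C, mem_filter]
    refine ⟨fun he => ⟨hD he.1, he.2⟩, fun ⟨he, hte⟩ => ⟨?_, hte⟩⟩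
    obtain ⟨e', he', hte'⟩ := mem_image.mp ((h𝒜 I hI).2 hte)
    exact hinj (hD he') he hte' ▸ he'
  have hCcard : ∀ I ∈ 𝒜, #(C I) = #I := by
    intro I hI
    rw [← card_image_of_injOn (hinj.mono (subset_trans (filter_subset _ _) hD)),
      ← filter_image (p := (· ∈ I)), filter_mem_eq_inter, inter_eq_right.mpr (h𝒜 I hI).2]
  have hCdisj : (𝒜 : Set (Finset ℕ)).PairwiseDisjoint C := by
    intro I hI J hJ hIJ
    refine disjoint_filter.mpr fun e _ hI' hJ' => ?_
    exact disjoint_left.mp (hdisj hI hJ hIJ) hI' hJ'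
  have hcov : 𝒜.biUnion C ⊆ D := biUnion_subset.mpr fun I _ => filter_subset _ _
  have hblocks : |∑ I ∈ 𝒜, ∑ e ∈ C I, ((t' e : ℤ) - t e)| ≤ #𝒜 * (p : ℤ) ^ 2 := by
    refine (abs_sum_le_sum_abs _ _).trans ?_
    rw [← nsmul_eq_mul]
    refine sum_le_card_nsmul _ _ _ fun I hI => ?_
    obtain ⟨⟨a, b, hab, rfl⟩, -⟩ := h𝒜 I hI
    rw [hCE _ hI]
    exact abs_sum_filter_mem_Icc_sub_le hinj hinj' himage hdisp hab
  have hrest : |∑ e ∈ D \ 𝒜.biUnion C, ((t' e : ℤ) - t e)| ≤ p * #(D \ 𝒜.biUnion C) := by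
    refine (abs_sum_le_sum_abs _ _).trans ?_
    rw [mul_comm, ← nsmul_eq_mul]
    exact sum_le_card_nsmul _ _ _ fun e he => hdisp e (hD (sdiff_subset he))
  have hcard : (#(D \ 𝒜.biUnion C) : ℤ) = #D - ∑ I ∈ 𝒜, (#I : ℤ) := by
    rw [card_sdiff_of_subset hcov, Nat.cast_sub (card_le_card hcov), card_biUnion hCdisj,
      sum_congr rfl hCcard]
    push_cast
    rfl
  rw [← sum_sdiff hcov, sum_biUnion hCdisj, ← hcard]
  calc _ ≤ _ := abs_add_le _ _
    _ ≤ _ := add_le_add hrest hblocks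
    _ = _ := add_comm _ _

end Relabeling

def edges (n : ℕ) : Finset (Sym2 (Fin n)) := univ.filter fun e => ¬ e.IsDiag

lemma coe_edges (n : ℕ) : (edges n : Set (Sym2 (Fin n))) = {e | ¬ e.IsDiag} := by
  ext e
  simp [edges]

lemma incEdges_subset_edges (n : ℕ) (v : Fin n) : incEdges n v ⊆ edges n := by
  intro e
  simp [incEdges, edges]

lemma card_incEdges_le (n : ℕ) (v : Fin n) : #(incEdges n v) ≤ n - 1 := by
  have hsub : incEdges n v ⊆ (univ.erase v).image (s(v, ·)) := by
    intro e he
    simp only [incEdges, mem_filter, mem_univ, true_and] at he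
    obtain ⟨x, rfl⟩ := Sym2.mem_iff_exists.mp he.1
    have hxv : x ≠ v := fun h => he.2 (Sym2.mk_isDiag_iff.mpr h.symm)
    exact mem_image_of_mem _ (mem_erase.mpr ⟨hxv, mem_univ x⟩)
  calc #(incEdges n v) ≤ #((univ.erase v).image (s(v, ·))) := card_le_card hsub
    _ ≤ #(univ.erase v) := card_image_le
    _ = n - 1 := by simp

namespace IsEdgeLabeling

variable {n : ℕ} {t : Sym2 (Fin n) → ℕ}

lemma injOn_edges (ht : IsEdgeLabeling n t) : Set.InjOn t (edges n) := by
  rw [coe_edges]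
  exact ht.injOn

lemma image_edges (ht : IsEdgeLabeling n t) : (edges n).image t = Icc 1 (eps n) :=
  coe_injective (by rw [coe_image, coe_edges, ht.image_eq, coe_Icc])

end IsEdgeLabeling

lemma abs_labelSum_sub_le {n p m ℓ : ℕ} {t t' : Sym2 (Fin n) → ℕ} (ht : IsEdgeLabeling n t)
    (hsw : IsPSwap n p t t') {w : Fin n} (hw : SetHasType p m ℓ (labelSet n t w)) :
    |labelSum n t' w - labelSum n t w| ≤ m * (p : ℤ) ^ 2 + p * ((n : ℤ) - 1 - ℓ) := by
  obtain ⟨𝒜, h𝒜m, h𝒜, hdisj, hℓ⟩ := hw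
  have himage : (edges n).image t = (edges n).image t' := by
    rw [ht.image_edges, hsw.1.image_edges]
  have hdisp : ∀ e ∈ edges n, |(t' e : ℤ) - t e| ≤ p := fun e he =>
    hsw.2 e (by simpa [edges] using he)
  have hbound := abs_sum_sub_le_of_subset_image ht.injOn_edges hsw.1.injOn_edges himage hdisp
    (incEdges_subset_edges n w) (fun I hI => ⟨(h𝒜 I hI).1, (h𝒜 I hI).2.1⟩) hdisj
  have hdeg : (#(incEdges n w) : ℤ) ≤ n - 1 := by
    have := card_incEdges_le n w
    have := w.pos
    omega
  have h𝒜m' : (#𝒜 : ℤ) ≤ m := by exact_mod_cast h𝒜m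
  have hℓ' : (ℓ : ℤ) ≤ ∑ I ∈ 𝒜, (#I : ℤ) := by exact_mod_cast hℓ
  rw [labelSum, labelSum, ← sum_sub_distrib]
  refine hbound.trans ?_
  gcongr

end Swap

theorem stmt9_general (n p m ℓ : ℕ)
    (t : Sym2 (Fin n) → ℕ) (ht : Swap.IsEdgeLabeling n t)
    (htype : Swap.LabelingHasType n p m ℓ t)
    (u v : Fin n)
    (t' : Sym2 (Fin n) → ℕ) (hsw : Swap.IsPSwap n p t t') :
    |Swap.labelSum n t' u - Swap.labelSum n t' v|
      ≤ |Swap.labelSum n t u - Swap.labelSum n t v|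
        + 2 * m * (p : ℤ) ^ 2 + 2 * p * ((n : ℤ) - ℓ - 1) := by
  have hu := Swap.abs_labelSum_sub_le ht hsw (htype u)
  have hv := Swap.abs_labelSum_sub_le ht hsw (htype v)
  have htri := abs_add_three (Swap.labelSum n t u - Swap.labelSum n t v)
    (Swap.labelSum n t' u - Swap.labelSum n t u) (Swap.labelSum n t v - Swap.labelSum n t' v)
  rw [abs_sub_comm (Swap.labelSum n t v)] at htri
  have hsplit : Swap.labelSum n t' u - Swap.labelSum n t' v
      = (Swap.labelSum n t u - Swap.labelSum n t v) + (Swap.labelSum n t' u - Swap.labelSum n t u)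
        + (Swap.labelSum n t v - Swap.labelSum n t' v) := by ring
  rw [hsplit]
  linarith

theorem stmt9 (n p m ℓ : ℕ) (hn : 2 ≤ n) (hp : 0 < p) (hm : 0 < m) (hℓ : 0 < ℓ)
    (t : Sym2 (Fin n) → ℕ) (ht : Swap.IsEdgeLabeling n t)
    (htype : Swap.LabelingHasType n p m ℓ t)
    (u v : Fin n) (huv : u ≠ v)
    (t' : Sym2 (Fin n) → ℕ) (hsw : Swap.IsPSwap n p t t') :
    |Swap.labelSum n t' u - Swap.labelSum n t' v|
      ≤ |Swap.labelSum n t u - Swap.labelSum n t v|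
        + 2 * m * (p : ℤ) ^ 2 + 2 * p * ((n : ℤ) - ℓ - 1) :=
  stmt9_general n p m ℓ t ht htype u v t' hsw
end

section
/- Let m be a constant positive integer, let β be a real number with 0 < β < 1, let p : ℕ → ℕ be admissible, and let α : ℕ → ℕ satisfy α(n) = O(n). If for each n ≥ 2, t_n is an α(n)-almost supermagic edge labeling of K_n which is of (m, ℓ(n))_{p(n)} type for some ℓ(n) ≥ βn, then limsup_{n→∞} R(p(n), t_n, n)/(2·p(n)·n) ≤ 1 − β. -/
open Finset

section Aux
open Finset

lemma layer (M : ℕ) (S : Finset ℕ) (hS : S ⊆ Finset.Icc 1 M) :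
    ∑ w ∈ S, w = ∑ k ∈ Finset.Icc 1 M, (S.filter (fun w => k ≤ w)).card := by
  have h1 : ∀ w ∈ S, w = ∑ k ∈ Finset.Icc 1 M, (if k ≤ w then 1 else 0) := by
    intro w hw
    have hwM := hS hw
    simp only [Finset.mem_Icc] at hwM
    rw [← Finset.card_filter]
    have : (Finset.Icc 1 M).filter (fun k => k ≤ w) = Finset.Icc 1 w := by
      ext k; simp only [Finset.mem_filter, Finset.mem_Icc]; omega
    rw [this, Nat.card_Icc]; omega
  rw [Finset.sum_congr rfl h1, Finset.sum_comm]
  exact Finset.sum_congr rfl fun k _ => (Finset.card_filter _ _).symm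

lemma sandwich (p c : ℕ) (V : Finset ℕ) (hcard : V.card = c)
    (hub : V ⊆ Finset.Icc 1 (c + p)) (hlb : Finset.Icc 1 (c - p) ⊆ V) :
    ∑ w ∈ Finset.Icc 1 c, w ≤ ∑ w ∈ V, w ∧
      ∑ w ∈ V, w ≤ (∑ w ∈ Finset.Icc 1 c, w) + 2 * p * p := by
  set M := c + p with hM
  have hA : Finset.Icc 1 c ⊆ Finset.Icc 1 M := Finset.Icc_subset_Icc_right (by omega)
  rw [layer M V hub, layer M (Finset.Icc 1 c) hA]
  have hcA : ∀ k, 1 ≤ k → ((Finset.Icc 1 c).filter (fun w => k ≤ w)).card = c + 1 - k := by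
    intro k hk
    have : (Finset.Icc 1 c).filter (fun w => k ≤ w) = Finset.Icc k c := by
      ext w; simp only [Finset.mem_filter, Finset.mem_Icc]; omega
    rw [this, Nat.card_Icc]
  have hsplit : ∀ k : ℕ, (V.filter (fun w => k ≤ w)).card + (V.filter (fun w => w < k)).card = c := by
    intro k
    rw [← hcard]
    rw [← Finset.card_filter_add_card_filter_not (s := V) (p := fun w => k ≤ w)]
    congr 2
    ext w
    simp only [Finset.mem_filter, not_le]
  have hlow : ∀ k, (V.filter (fun w => w < k)).card ≤ k - 1 := by
    intro k
    have : V.filter (fun w => w < k) ⊆ Finset.Icc 1 (k - 1) := by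
      intro w hw
      simp only [Finset.mem_filter] at hw
      have := hub hw.1
      simp only [Finset.mem_Icc] at this ⊢
      omega
    calc (V.filter (fun w => w < k)).card ≤ (Finset.Icc 1 (k-1)).card := Finset.card_le_card this
      _ = k - 1 := by rw [Nat.card_Icc]; omega
  constructor
  · apply Finset.sum_le_sum
    intro k hk
    simp only [Finset.mem_Icc] at hk
    rw [hcA k hk.1]
    have := hsplit k
    have := hlow k
    omega
  · have hpoint : ∀ k ∈ Finset.Icc 1 M, (V.filter (fun w => k ≤ w)).card ≤
        ((Finset.Icc 1 c).filter (fun w => k ≤ w)).card + (if c - p < k then p else 0) := by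
      intro k hk
      simp only [Finset.mem_Icc] at hk
      rw [hcA k hk.1]
      by_cases hcase : c - p < k
      · simp only [hcase, if_pos]
        have hsub : V.filter (fun w => k ≤ w) ⊆ V \ Finset.Icc 1 (c - p) := by
          intro w hw
          simp only [Finset.mem_filter] at hw
          simp only [Finset.mem_sdiff, Finset.mem_Icc]
          exact ⟨hw.1, by omega⟩
        have hcardlb : (Finset.Icc 1 (c - p)).card = c - p := by rw [Nat.card_Icc]; omega
        have := Finset.card_le_card hsub
        rw [Finset.card_sdiff_of_subset hlb, hcard, hcardlb] at this
        omega
      · simp only [hcase, if_neg, if_false]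
        have hlb2 : k - 1 ≤ (V.filter (fun w => w < k)).card := by
          have hsub : Finset.Icc 1 (k - 1) ⊆ V.filter (fun w => w < k) := by
            intro w hw
            simp only [Finset.mem_Icc] at hw
            simp only [Finset.mem_filter]
            constructor
            · apply hlb; simp only [Finset.mem_Icc]; omega
            · omega
          calc k - 1 = (Finset.Icc 1 (k-1)).card := by rw [Nat.card_Icc]; omega
            _ ≤ _ := Finset.card_le_card hsub
        have := hsplit k
        omega
    calc ∑ k ∈ Finset.Icc 1 M, (V.filter (fun w => k ≤ w)).card
        ≤ ∑ k ∈ Finset.Icc 1 M, (((Finset.Icc 1 c).filter (fun w => k ≤ w)).card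
            + (if c - p < k then p else 0)) := Finset.sum_le_sum hpoint
      _ = (∑ k ∈ Finset.Icc 1 M, ((Finset.Icc 1 c).filter (fun w => k ≤ w)).card)
            + ∑ k ∈ Finset.Icc 1 M, (if c - p < k then p else 0) := Finset.sum_add_distrib
      _ ≤ _ := by
          gcongr
          rw [← Finset.sum_filter]
          have hss : (Finset.Icc 1 M).filter (fun k => c - p < k) ⊆ Finset.Icc (c - p + 1) M := by
            intro k hk
            simp only [Finset.mem_filter, Finset.mem_Icc] at hk ⊢
            omega
          calc ∑ _k ∈ (Finset.Icc 1 M).filter (fun k => c - p < k), p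
              = ((Finset.Icc 1 M).filter (fun k => c - p < k)).card * p := by
                rw [Finset.sum_const, smul_eq_mul]
            _ ≤ (2 * p) * p := by
                apply Nat.mul_le_mul_right
                calc _ ≤ (Finset.Icc (c - p + 1) M).card := Finset.card_le_card hss
                  _ ≤ 2 * p := by rw [Nat.card_Icc]; omega
            _ = 2 * p * p := rfl

lemma delta_bounds (n p : ℕ) (t t' : Sym2 (Fin n) → ℕ)
    (ht : Swap.IsEdgeLabeling n t) (ht' : Swap.IsEdgeLabeling n t')
    (hswap : ∀ e : Sym2 (Fin n), ¬ e.IsDiag → |(t' e : ℤ) - (t e : ℤ)| ≤ (p : ℤ)) (x : ℕ) :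
    0 ≤ ∑ e ∈ Finset.univ.filter (fun e : Sym2 (Fin n) => ¬ e.IsDiag ∧ t e ≤ x),
          ((t' e : ℤ) - (t e : ℤ)) ∧
    ∑ e ∈ Finset.univ.filter (fun e : Sym2 (Fin n) => ¬ e.IsDiag ∧ t e ≤ x),
          ((t' e : ℤ) - (t e : ℤ)) ≤ 2 * (p : ℤ) * p := by
  classical
  set F := Finset.univ.filter (fun e : Sym2 (Fin n) => ¬ e.IsDiag ∧ t e ≤ x) with hF
  have hFnd : ∀ e ∈ F, ¬ e.IsDiag := by
    intro e he; exact ((Finset.mem_filter.mp he).2).1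
  set c := min x (Swap.eps n) with hc
  have himg : F.image t = Finset.Icc 1 c := by
    ext w
    simp only [Finset.mem_image, Finset.mem_Icc]
    constructor
    · rintro ⟨e, he, rfl⟩
      obtain ⟨hnd, hle⟩ := (Finset.mem_filter.mp he).2
      have := ht.mapsTo hnd
      simp only [Set.mem_Icc] at this
      omega
    · rintro ⟨h1, h2⟩
      obtain ⟨e, hnde, rfl⟩ := ht.surjOn (Set.mem_Icc.mpr ⟨h1, le_trans h2 (min_le_right _ _)⟩)
      exact ⟨e, Finset.mem_filter.mpr ⟨Finset.mem_univ _, hnde, by omega⟩, rfl⟩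
  have hinjF : Set.InjOn t ↑F := ht.injOn.mono (fun e he => hFnd e he)
  have hinjF' : Set.InjOn t' ↑F := ht'.injOn.mono (fun e he => hFnd e he)
  have hcF : F.card = c := by
    rw [← Finset.card_image_of_injOn hinjF, himg, Nat.card_Icc]; omega
  set V := F.image t' with hV
  have hVcard : V.card = c := by rw [hV, Finset.card_image_of_injOn hinjF', hcF]
  have hub : V ⊆ Finset.Icc 1 (c + p) := by
    intro w hw
    obtain ⟨e, he, rfl⟩ := Finset.mem_image.mp hw
    obtain ⟨hnd, hle⟩ := (Finset.mem_filter.mp he).2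
    have h1 : 1 ≤ t' e ∧ t' e ≤ Swap.eps n := Set.mem_Icc.mp (ht'.mapsTo hnd)
    have h2 : (t' e : ℤ) - t e ≤ p := (abs_le.mp (hswap e hnd)).2
    have h3 : t e ≤ Swap.eps n := (Set.mem_Icc.mp (ht.mapsTo hnd)).2
    have h4 : t' e ≤ t e + p := by zify; linarith
    simp only [Finset.mem_Icc]
    omega
  have hlbV : Finset.Icc 1 (c - p) ⊆ V := by
    intro w hw
    simp only [Finset.mem_Icc] at hw
    have hwe : w ∈ Set.Icc 1 (Swap.eps n) := by
      constructor
      · exact hw.1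
      · have := min_le_right x (Swap.eps n); omega
    obtain ⟨e, hnde, rfl⟩ := ht'.surjOn hwe
    have h2 : (t e : ℤ) - t' e ≤ p := by
      have := (abs_le.mp (hswap e hnde)).1; omega
    have h4 : t e ≤ t' e + p := by zify; linarith
    have h5 : t e ≤ x := by
      have := min_le_left x (Swap.eps n); omega
    exact Finset.mem_image.mpr ⟨e, Finset.mem_filter.mpr ⟨Finset.mem_univ _, hnde, h5⟩, rfl⟩
  have hsum_t : ∑ e ∈ F, (t e : ℤ) = ∑ w ∈ Finset.Icc 1 c, (w : ℤ) := by
    rw [← himg, Finset.sum_image (fun a ha b hb h => hinjF ha hb h)]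
  have hsum_t' : ∑ e ∈ F, (t' e : ℤ) = ∑ w ∈ V, (w : ℤ) := by
    rw [hV, Finset.sum_image (fun a ha b hb h => hinjF' ha hb h)]
  obtain ⟨hlo, hhi⟩ := sandwich p c V hVcard hub hlbV
  rw [Finset.sum_sub_distrib, hsum_t, hsum_t']
  zify at hlo hhi
  constructor <;> [linarith; linarith]

end Aux
section Aux2
open Finset

lemma card_incEdges (n : ℕ) (v : Fin n) : (Swap.incEdges n v).card = n - 1 := by
  classical
  have heq : Swap.incEdges n v = (Finset.univ.erase v).image (fun w => s(v, w)) := by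
    ext e
    simp only [Swap.incEdges, Finset.mem_filter, Finset.mem_univ, true_and, Finset.mem_image,
      Finset.mem_erase]
    constructor
    · rintro ⟨hv, hnd⟩
      refine ⟨Sym2.Mem.other hv, ⟨?_, trivial⟩, Sym2.other_spec hv⟩
      intro hcon
      apply hnd
      rw [← Sym2.other_spec hv, hcon]
      exact Sym2.mk_isDiag_iff.mpr rfl
    · rintro ⟨w, ⟨hw, -⟩, rfl⟩
      exact ⟨Sym2.mem_mk_left v w, fun h => hw (Sym2.mk_isDiag_iff.mp h).symm⟩
  rw [heq, Finset.card_image_of_injOn (fun a _ b _ h => Sym2.congr_right.mp h),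
    Finset.card_erase_of_mem (Finset.mem_univ v), Finset.card_univ, Fintype.card_fin]

lemma gain_bound (n p m ℓ : ℕ) (t t' : Sym2 (Fin n) → ℕ)
    (ht : Swap.IsEdgeLabeling n t) (ht' : Swap.IsEdgeLabeling n t')
    (hswap : ∀ e : Sym2 (Fin n), ¬ e.IsDiag → |(t' e : ℤ) - (t e : ℤ)| ≤ (p : ℤ))
    (v : Fin n) (htype : Swap.SetHasType p m ℓ (Swap.labelSet n t v)) :
    ℓ ≤ n - 1 ∧
    |∑ e ∈ Swap.incEdges n v, ((t' e : ℤ) - (t e : ℤ))| ≤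
      2 * m * p * p + p * (((n : ℤ) - 1) - ℓ) := by
  classical
  obtain ⟨𝒜, hAm, hAI, hdisj, hℓ⟩ := htype
  set D := Swap.incEdges n v with hD
  have hndInc : ∀ e ∈ D, ¬ e.IsDiag := fun e he => (Finset.mem_filter.mp he).2.2
  set Blk : Finset ℕ → Finset (Sym2 (Fin n)) :=
    fun I => Finset.univ.filter (fun e => ¬ e.IsDiag ∧ t e ∈ I) with hBlk
  have hBlkSub : ∀ I ∈ 𝒜, Blk I ⊆ D := by
    intro I hI e he
    obtain ⟨hnd, hmem⟩ := (Finset.mem_filter.mp he).2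
    have hLS : t e ∈ Swap.labelSet n t v := (hAI I hI).2.1 hmem
    obtain ⟨e₀, he₀, hteq⟩ := Finset.mem_image.mp hLS
    have : e = e₀ := ht.injOn hnd (hndInc e₀ he₀) hteq.symm
    rwa [this]
  have hBlkImg : ∀ I ∈ 𝒜, (Blk I).image t = I := by
    intro I hI
    ext w
    simp only [Finset.mem_image]
    constructor
    · rintro ⟨e, he, rfl⟩
      exact (Finset.mem_filter.mp he).2.2
    · intro hw
      have hLS : w ∈ Swap.labelSet n t v := (hAI I hI).2.1 hw
      obtain ⟨e₀, he₀, hteq⟩ := Finset.mem_image.mp hLS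
      exact ⟨e₀, Finset.mem_filter.mpr ⟨Finset.mem_univ _, hndInc e₀ he₀, by rw [hteq]; exact hw⟩,
        hteq⟩
  have hBlkCard : ∀ I ∈ 𝒜, (Blk I).card = I.card := by
    intro I hI
    have hinj : Set.InjOn t ↑(Blk I) := by
      refine ht.injOn.mono ?_
      intro e he
      simp only [hBlk, Finset.coe_filter, Set.mem_setOf_eq] at he
      exact he.2.1
    have hcc := Finset.card_image_of_injOn hinj
    rw [hBlkImg I hI] at hcc
    exact hcc.symm
  have hdisjBlk : (𝒜 : Set (Finset ℕ)).PairwiseDisjoint Blk := by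
    intro I hI J hJ hIJ
    have hIJ' : Disjoint I J := hdisj hI hJ hIJ
    show Disjoint (Blk I) (Blk J)
    rw [Finset.disjoint_left]
    intro e heI heJ
    have h1 := (Finset.mem_filter.mp heI).2.2
    have h2 := (Finset.mem_filter.mp heJ).2.2
    exact Finset.disjoint_left.mp hIJ' h1 h2
  set U := 𝒜.biUnion Blk with hU
  have hUsub : U ⊆ D := Finset.biUnion_subset.mpr hBlkSub
  have hUcard : ℓ ≤ U.card := by
    rw [hU, Finset.card_biUnion hdisjBlk]
    calc ℓ ≤ ∑ I ∈ 𝒜, I.card := hℓ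
      _ = ∑ I ∈ 𝒜, (Blk I).card := by
          exact Finset.sum_congr rfl (fun I hI => (hBlkCard I hI).symm)
  have hDcard : D.card = n - 1 := card_incEdges n v
  have hℓn : ℓ ≤ n - 1 := by
    calc ℓ ≤ U.card := hUcard
      _ ≤ D.card := Finset.card_le_card hUsub
      _ = n - 1 := hDcard
  refine ⟨hℓn, ?_⟩
  -- block sums
  have hblkbd : ∀ I ∈ 𝒜, |∑ e ∈ Blk I, ((t' e : ℤ) - (t e : ℤ))| ≤ 2 * p * p := by
    intro I hI
    obtain ⟨a, b, hab, hIeq⟩ := (hAI I hI).1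
    have ha1 : 1 ≤ a := by
      have haI : a ∈ I := by rw [hIeq]; exact Finset.mem_Icc.mpr ⟨le_refl a, hab⟩
      have hLS : a ∈ Swap.labelSet n t v := (hAI I hI).2.1 haI
      obtain ⟨e₀, he₀, hteq⟩ := Finset.mem_image.mp hLS
      have := (ht.mapsTo (hndInc e₀ he₀)).1
      omega
    set Fb := Finset.univ.filter (fun e : Sym2 (Fin n) => ¬ e.IsDiag ∧ t e ≤ b) with hFb
    set Fa := Finset.univ.filter (fun e : Sym2 (Fin n) => ¬ e.IsDiag ∧ t e ≤ a - 1) with hFa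
    have hFsub : Fa ⊆ Fb := by
      intro e he
      simp only [hFa, hFb, Finset.mem_filter] at he ⊢
      exact ⟨he.1, he.2.1, by omega⟩
    have hBlkEq : Blk I = Fb \ Fa := by
      ext e
      simp only [hBlk, hFa, hFb, hIeq, Finset.mem_sdiff, Finset.mem_filter, Finset.mem_univ,
        true_and, Finset.mem_Icc]
      constructor
      · rintro ⟨hnd, h1, h2⟩
        exact ⟨⟨hnd, h2⟩, by intro h; omega⟩
      · rintro ⟨⟨hnd, h2⟩, h3⟩
        refine ⟨hnd, ?_, h2⟩
        by_contra hcon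
        exact h3 ⟨hnd, by omega⟩
    have hsumEq : ∑ e ∈ Blk I, ((t' e : ℤ) - (t e : ℤ)) =
        (∑ e ∈ Fb, ((t' e : ℤ) - (t e : ℤ))) - ∑ e ∈ Fa, ((t' e : ℤ) - (t e : ℤ)) := by
      rw [hBlkEq, eq_sub_iff_add_eq, Finset.sum_sdiff hFsub]
    obtain ⟨hb0, hb1⟩ := delta_bounds n p t t' ht ht' hswap b
    obtain ⟨ha0, ha1⟩ := delta_bounds n p t t' ht ht' hswap (a - 1)
    rw [hsumEq, abs_le]
    constructor <;> [linarith; linarith]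
  -- decomposition
  have hsplit : ∑ e ∈ D, ((t' e : ℤ) - (t e : ℤ)) =
      (∑ e ∈ U, ((t' e : ℤ) - (t e : ℤ))) + ∑ e ∈ D \ U, ((t' e : ℤ) - (t e : ℤ)) := by
    rw [add_comm, Finset.sum_sdiff hUsub]
  have hUbd : |∑ e ∈ U, ((t' e : ℤ) - (t e : ℤ))| ≤ 2 * m * p * p := by
    rw [hU, Finset.sum_biUnion hdisjBlk]
    calc |∑ I ∈ 𝒜, ∑ e ∈ Blk I, ((t' e : ℤ) - (t e : ℤ))|
        ≤ ∑ I ∈ 𝒜, |∑ e ∈ Blk I, ((t' e : ℤ) - (t e : ℤ))| := Finset.abs_sum_le_sum_abs _ _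
      _ ≤ ∑ _I ∈ 𝒜, (2 * (p:ℤ) * p) := Finset.sum_le_sum hblkbd
      _ = 𝒜.card * (2 * (p:ℤ) * p) := by rw [Finset.sum_const, nsmul_eq_mul]
      _ ≤ m * (2 * (p:ℤ) * p) := by
          have hAm' : ((𝒜.card : ℤ)) ≤ (m : ℤ) := by exact_mod_cast hAm
          exact mul_le_mul_of_nonneg_right hAm' (by positivity)
      _ = 2 * m * p * p := by ring
  have hrest : |∑ e ∈ D \ U, ((t' e : ℤ) - (t e : ℤ))| ≤ p * (((n:ℤ) - 1) - ℓ) := by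
    calc |∑ e ∈ D \ U, ((t' e : ℤ) - (t e : ℤ))|
        ≤ ∑ e ∈ D \ U, |(t' e : ℤ) - (t e : ℤ)| := Finset.abs_sum_le_sum_abs _ _
      _ ≤ ∑ _e ∈ D \ U, (p : ℤ) := by
          apply Finset.sum_le_sum
          intro e he
          exact hswap e (hndInc e (Finset.mem_sdiff.mp he).1)
      _ = (D \ U).card * (p : ℤ) := by rw [Finset.sum_const, nsmul_eq_mul]
      _ ≤ (((n:ℤ) - 1) - ℓ) * p := by
          refine mul_le_mul_of_nonneg_right ?_ (by positivity)
          have h1 : (D \ U).card = D.card - U.card := Finset.card_sdiff_of_subset hUsub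
          have h2 : U.card ≤ D.card := Finset.card_le_card hUsub
          have h3 : ((D \ U).card : ℤ) = (D.card : ℤ) - U.card := by
            rw [h1]; exact_mod_cast Int.ofNat_sub h2
          rw [h3, hDcard]
          have h4 : ((n - 1 : ℕ) : ℤ) = (n : ℤ) - 1 := by
            have hn1 : 1 ≤ n := Fin.pos v
            omega
          rw [h4]
          have : (ℓ : ℤ) ≤ (U.card : ℤ) := by exact_mod_cast hUcard
          linarith
      _ = p * (((n:ℤ) - 1) - ℓ) := by ring
  calc |∑ e ∈ D, ((t' e : ℤ) - (t e : ℤ))|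
      ≤ |∑ e ∈ U, ((t' e : ℤ) - (t e : ℤ))| + |∑ e ∈ D \ U, ((t' e : ℤ) - (t e : ℤ))| := by
        rw [hsplit]; exact abs_add_le _ _
    _ ≤ 2 * m * p * p + p * (((n:ℤ) - 1) - ℓ) := add_le_add hUbd hrest

lemma rob_bound (n pp m ℓ a : ℕ) (hn : 2 ≤ n) (t : Sym2 (Fin n) → ℕ)
    (hsm : Swap.AlmostSupermagic n a t)
    (htype : Swap.LabelingHasType n pp m ℓ t) :
    ℓ ≤ n - 1 ∧ Swap.robustness n pp t ≤ a + 4 * m * pp * pp + 2 * pp * (n - 1 - ℓ) := by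
  classical
  have hv0 : (0 : ℕ) < n := by omega
  set v0 : Fin n := ⟨0, hv0⟩ with hv0def
  have hswap0 : ∀ e : Sym2 (Fin n), ¬ e.IsDiag → |(t e : ℤ) - (t e : ℤ)| ≤ (pp : ℤ) := by
    intro e _; simp
  have hℓn : ℓ ≤ n - 1 := (gain_bound n pp m ℓ t t hsm.1 hsm.1 hswap0 v0 (htype v0)).1
  refine ⟨hℓn, ?_⟩
  apply csSup_le'
  rintro d ⟨t', ⟨ht'lab, ht'swap⟩, u, v, -, hdeq⟩
  have hgu := (gain_bound n pp m ℓ t t' hsm.1 ht'lab ht'swap u (htype u)).2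
  have hgv := (gain_bound n pp m ℓ t t' hsm.1 ht'lab ht'swap v (htype v)).2
  have hsum : ∀ w : Fin n, Swap.labelSum n t' w =
      Swap.labelSum n t w + ∑ e ∈ Swap.incEdges n w, ((t' e : ℤ) - (t e : ℤ)) := by
    intro w
    unfold Swap.labelSum
    rw [Finset.sum_sub_distrib]
    ring
  have hXb := abs_le.mp (hsm.2 u v)
  have hgub := abs_le.mp hgu
  have hgvb := abs_le.mp hgv
  have key : (d : ℤ) ≤ (a : ℤ) + 4 * m * pp * pp + 2 * pp * (((n:ℤ) - 1) - ℓ) := by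
    rw [hdeq, hsum u, hsum v]
    rw [abs_le]
    constructor <;> nlinarith [sq_nonneg ((pp:ℤ))]
  have hcast : ((a + 4 * m * pp * pp + 2 * pp * (n - 1 - ℓ) : ℕ) : ℤ) =
      (a : ℤ) + 4 * m * pp * pp + 2 * pp * (((n:ℤ) - 1) - ℓ) := by
    push_cast [Nat.cast_sub hℓn, Nat.cast_sub (show 1 ≤ n by omega)]
    ring
  exact_mod_cast key.trans_eq hcast.symm

end Aux2
theorem stmt10 (m : ℕ) (hm : 0 < m) (β : ℝ) (hβ0 : 0 < β) (hβ1 : β < 1)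
    (p α : ℕ → ℕ) (hadm : Swap.Admissible p)
    (hα : ∃ C : ℝ, ∀ n : ℕ, (α n : ℝ) ≤ C * n)
    (t : ∀ n : ℕ, Sym2 (Fin n) → ℕ)
    (ht : ∀ n : ℕ, 2 ≤ n → Swap.AlmostSupermagic n (α n) (t n) ∧
      ∃ ℓ : ℕ, β * n ≤ (ℓ : ℝ) ∧ Swap.LabelingHasType n (p n) m ℓ (t n)) :
    Filter.limsup
      (fun n : ℕ => (Swap.robustness n (p n) (t n) : ℝ) / (2 * p n * n)) Filter.atTop
      ≤ 1 - β := by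
  classical
  obtain ⟨C, hC⟩ := hα
  set f := fun n : ℕ => (Swap.robustness n (p n) (t n) : ℝ) / (2 * p n * n) with hf
  set g := fun n : ℕ => C / (2 * (p n : ℝ)) + 2 * m * (p n : ℝ) / n + (1 - β) with hg
  have hf0 : ∀ n, 0 ≤ f n := by
    intro n
    apply div_nonneg (by positivity) (by positivity)
  have hfg : ∀ᶠ n in Filter.atTop, f n ≤ g n := by
    filter_upwards [Filter.eventually_ge_atTop 2] with n hn
    obtain ⟨hsm, ℓ, hβℓ, htype⟩ := ht n hn
    obtain ⟨hℓn, hrob⟩ := rob_bound n (p n) m ℓ (α n) hn (t n) hsm htype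
    by_cases hp0 : p n = 0
    · have hfn : f n = 0 := by simp [hf, hp0]
      have hgn : g n = 1 - β := by simp [hg, hp0]
      rw [hfn, hgn]; linarith
    · have hP : (0 : ℝ) < (p n : ℝ) := by
        have : 1 ≤ p n := Nat.one_le_iff_ne_zero.mpr hp0
        exact_mod_cast Nat.lt_of_lt_of_le Nat.zero_lt_one this
      have hN : (0 : ℝ) < (n : ℝ) := by
        have : 0 < n := by omega
        exact_mod_cast this
      have h1n : 1 ≤ n := by omega
      have hrobR : (Swap.robustness n (p n) (t n) : ℝ) ≤
          (α n : ℝ) + 4 * m * (p n) * (p n) + 2 * (p n) * ((n : ℝ) - 1 - ℓ) := by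
        have := hrob
        have hcast : ((α n + 4 * m * p n * p n + 2 * p n * (n - 1 - ℓ) : ℕ) : ℝ) =
            (α n : ℝ) + 4 * m * (p n) * (p n) + 2 * (p n) * ((n : ℝ) - 1 - ℓ) := by
          push_cast [Nat.cast_sub hℓn, Nat.cast_sub h1n]
          ring
        calc (Swap.robustness n (p n) (t n) : ℝ)
            ≤ ((α n + 4 * m * p n * p n + 2 * p n * (n - 1 - ℓ) : ℕ) : ℝ) := by
              exact_mod_cast this
          _ = _ := hcast
      have hdenom : (0 : ℝ) < 2 * (p n : ℝ) * n := by positivity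
      have hstep1 : f n ≤
          ((α n : ℝ) + 4 * m * (p n) * (p n) + 2 * (p n) * ((n : ℝ) - 1 - ℓ)) /
            (2 * (p n : ℝ) * n) := by
        simp only [hf]
        gcongr
      have hT1 : (α n : ℝ) / (2 * (p n : ℝ) * n) ≤ C / (2 * (p n : ℝ)) := by
        have h1 : (α n : ℝ) / (2 * (p n : ℝ) * n) ≤ (C * n) / (2 * (p n : ℝ) * n) := by
          gcongr
          exact hC n
        have h2 : (C * n) / (2 * (p n : ℝ) * n) = C / (2 * (p n : ℝ)) := by
          field_simp
        linarith
      have hT2 : (4 * (m:ℝ) * (p n) * (p n)) / (2 * (p n : ℝ) * n) = 2 * m * (p n : ℝ) / n := by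
        field_simp
        ring
      have hT3 : (2 * (p n : ℝ) * ((n : ℝ) - 1 - ℓ)) / (2 * (p n : ℝ) * n) ≤ 1 - β := by
        have heq : (2 * (p n : ℝ) * ((n : ℝ) - 1 - ℓ)) / (2 * (p n : ℝ) * n)
            = ((n : ℝ) - 1 - ℓ) / n := by
          rw [mul_div_mul_left _ _ (by positivity : (2 : ℝ) * (p n : ℝ) ≠ 0)]
        rw [heq, div_le_iff₀ hN]
        nlinarith [hβℓ]
      calc f n ≤ _ := hstep1
        _ = (α n : ℝ) / (2 * (p n : ℝ) * n) + (4 * (m:ℝ) * (p n) * (p n)) / (2 * (p n : ℝ) * n)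
            + (2 * (p n : ℝ) * ((n : ℝ) - 1 - ℓ)) / (2 * (p n : ℝ) * n) := by
          rw [← add_div, ← add_div]
        _ ≤ C / (2 * (p n : ℝ)) + 2 * m * (p n : ℝ) / n + (1 - β) := by
          rw [hT2]
          exact add_le_add (add_le_add hT1 le_rfl) hT3
        _ = g n := rfl
  have hP : Filter.Tendsto (fun n => ((p n : ℝ))) Filter.atTop Filter.atTop :=
    tendsto_natCast_atTop_atTop.comp hadm.2
  have h2P : Filter.Tendsto (fun n => 2 * (p n : ℝ)) Filter.atTop Filter.atTop :=
    hP.const_mul_atTop (by norm_num)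
  have h1 : Filter.Tendsto (fun n => C / (2 * (p n : ℝ))) Filter.atTop (nhds 0) := by
    have := h2P.inv_tendsto_atTop.const_mul C
    simpa [div_eq_mul_inv] using this
  have h2 : Filter.Tendsto (fun n => 2 * (m : ℝ) * (p n : ℝ) / n) Filter.atTop (nhds 0) := by
    have := hadm.1.const_mul (2 * (m : ℝ))
    simp only [mul_zero] at this
    refine this.congr (fun n => ?_)
    rw [mul_div_assoc]
  have hgt : Filter.Tendsto g Filter.atTop (nhds (1 - β)) := by
    have := (h1.add h2).add (tendsto_const_nhds (x := 1 - β) (f := Filter.atTop))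
    simpa using this
  calc Filter.limsup f Filter.atTop ≤ Filter.limsup g Filter.atTop := by
        refine Filter.limsup_le_limsup hfg ?_ ?_
        · exact Filter.isCoboundedUnder_le_of_eventually_le Filter.atTop
            (Filter.Eventually.of_forall hf0)
        · exact hgt.isBoundedUnder_le
    _ = 1 - β := hgt.limsup_eq
end

section
/- For every positive integer q, the weaving square W_{4q} satisfies: (i) the map (i,j) ↦ W_{4q}(i,j) is a bijection from [4q]×[4q] onto {1,2,…,16q²}; and (ii) for every i ∈ [4q], Σ_{j=1}^{4q} W_{4q}(i,j) = 32q³ + 2q and Σ_{j=1}^{4q} W_{4q}(j,i) = 32q³ + 2q (all row sums and all column sums equal 32q³ + 2q). -/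
namespace Weaving

/-- The four little squares of order `q`, as rotations of the basic square
`L⁰(i,j) = q(i−1)+j` by `0, π/2, π, 3π/2`; indices `i, j` range over `[1, q]`. -/
def littleSq (q : ℕ) : ℕ → ℕ → ℕ → ℕ
  | 0, i, j => q * (i - 1) + j
  | 1, i, j => q * (q - j) + i
  | 2, i, j => q * (q - i) + (q + 1 - j)
  | _, i, j => q * (j - 1) + (q + 1 - i)

/-- The `4 × 4` base square `B` (1-based indices). -/
def baseSq : ℕ → ℕ → ℕ
  | 1, 1 => 1 | 1, 2 => 6 | 1, 3 => 11 | 1, 4 => 16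
  | 2, 1 => 7 | 2, 2 => 4 | 2, 3 => 13 | 2, 4 => 10
  | 3, 1 => 12 | 3, 2 => 15 | 3, 3 => 2 | 3, 4 => 5
  | 4, 1 => 14 | 4, 2 => 9 | 4, 3 => 8 | 4, 4 => 3
  | _, _ => 0

/-- The weaving square `W_{4q}` with 1-based indices `i, j ∈ [1, 4q]`:
writing `i = q(i₁−1)+i₂`, `j = q(j₁−1)+j₂` with `i₁, j₁ ∈ [4]` and `i₂, j₂ ∈ [q]`,
`W_{4q}(i,j) = (B(i₁,j₁)−1)·q² + L^{(j₁−i₁ mod 4)}(i₂,j₂)`. -/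
def weaving (q : ℕ) (i j : ℕ) : ℕ :=
  let i₁ := (i - 1) / q + 1
  let i₂ := (i - 1) % q + 1
  let j₁ := (j - 1) / q + 1
  let j₂ := (j - 1) % q + 1
  (baseSq i₁ j₁ - 1) * q ^ 2 + littleSq q ((j₁ + 4 - i₁) % 4) i₂ j₂

def IsAP1 (I : Finset ℕ) : Prop := ∃ a b : ℕ, a ≤ b ∧ I = Finset.Icc a b

end Weaving

/-!
Write `i = q(a-1)+b` and `j = q(a'-1)+b'` with `a, a' ∈ [1,4]` and `b, b' ∈ [1,q]`. Then
`W(i,j) = q²(B(a,a')-1) + L^k(b,b')` with `k = a'-a mod 4`, so `W(i,j) - 1` has the base-`q²`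
digits `B(a,a') - 1` and `L^k(b,b') - 1`. Each `L^k` is `L⁰` precomposed with `k` quarter turns of
`[q]²`, so it is a bijection onto `[1,q²]`, as is `B` onto `[1,16]`. Hence `W` is injective
into `[1,16q²]`, which has as many elements as `[4q]²`.

Along row `i`, for fixed `b'` the exponent `k` runs once through all residues mod 4 and
`L⁰ + L¹ + L² + L³ = 2q² + 2` pointwise, while every row and column of `B - 1` sums to `30`;
so a row sums to `q · q² · 30 + q(2q² + 2) = 32q³ + 2q`. Columns are symmetric.
-/

namespace Weaving

open Finset

def blockIndex (q a b : ℕ) : ℕ := q * (a - 1) + b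

def blockCoords (q i : ℕ) : ℕ × ℕ := ((i - 1) / q + 1, (i - 1) % q + 1)

section Blocks

variable {m q : ℕ}

lemma blockCoords_blockIndex {a b : ℕ} (ha : 1 ≤ a) (hb : b ∈ Set.Icc 1 q) :
    blockCoords q (blockIndex q a b) = (a, b) := by
  obtain ⟨hb₁, hb₂⟩ := hb
  have hq : 0 < q := by omega
  have h : blockIndex q a b - 1 = b - 1 + q * (a - 1) := by unfold blockIndex; omega
  simp only [blockCoords, h, Nat.add_mul_div_left _ _ hq, Nat.add_mul_mod_self_left,
    Nat.div_eq_of_lt (by omega : b - 1 < q), Nat.mod_eq_of_lt (by omega : b - 1 < q)]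
  ext <;> simp only <;> omega

lemma blockIndex_blockCoords {i : ℕ} (hi : 1 ≤ i) :
    blockIndex q (blockCoords q i).1 (blockCoords q i).2 = i := by
  have := Nat.div_add_mod (i - 1) q
  simp only [blockIndex, blockCoords, Nat.add_sub_cancel]
  omega

lemma blockIndex_mem_Icc {a b : ℕ} (ha : a ∈ Set.Icc 1 m) (hb : b ∈ Set.Icc 1 q) :
    blockIndex q a b ∈ Set.Icc 1 (m * q) := by
  obtain ⟨⟨ha₁, ha₂⟩, hb₁, hb₂⟩ := And.intro ha hb
  have : q * (a - 1) + q ≤ m * q := by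
    rw [mul_comm m, ← Nat.mul_succ]
    exact Nat.mul_le_mul_left q (by omega)
  constructor <;> simp only [blockIndex] <;> omega

lemma blockIndex_inj {a b a' b' : ℕ} (ha : 1 ≤ a) (hb : b ∈ Set.Icc 1 q) (ha' : 1 ≤ a')
    (hb' : b' ∈ Set.Icc 1 q) (h : blockIndex q a b = blockIndex q a' b') : a = a' ∧ b = b' := by
  rw [← Prod.mk.injEq, ← blockCoords_blockIndex ha hb, ← blockCoords_blockIndex ha' hb', h]

lemma blockCoords_mapsTo :
    Set.MapsTo (blockCoords q) (Set.Icc 1 (m * q)) (Set.Icc 1 m ×ˢ Set.Icc 1 q) := by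
  rintro i ⟨hi₁, hi₂⟩
  have hdiv : (i - 1) / q < m := Nat.div_lt_of_lt_mul (by rw [mul_comm]; omega)
  have hmod : (i - 1) % q < q := Nat.mod_lt _ (Nat.pos_of_mul_pos_left (by omega : 0 < m * q))
  exact ⟨⟨Nat.le_add_left 1 _, hdiv⟩, Nat.le_add_left 1 _, hmod⟩

lemma sum_Icc_mul_eq_sum_blockIndex {M : Type*} [AddCommMonoid M] (f : ℕ → M) :
    ∑ i ∈ Icc 1 (m * q), f i = ∑ p ∈ Icc 1 m ×ˢ Icc 1 q, f (blockIndex q p.1 p.2) := by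
  refine sum_nbij' (blockCoords q) (fun p => blockIndex q p.1 p.2) ?_ ?_ ?_ ?_ ?_
  · intro i hi
    simpa only [mem_product, mem_Icc, Set.mem_prod, Set.mem_Icc]
      using blockCoords_mapsTo (m := m) (mem_Icc.1 hi)
  · rintro ⟨a, b⟩ hp
    simp only [mem_product, mem_Icc] at hp ⊢
    exact blockIndex_mem_Icc (m := m) hp.1 hp.2
  · intro i hi
    exact blockIndex_blockCoords (mem_Icc.1 hi).1
  · rintro ⟨a, b⟩ hp
    simp only [mem_product, mem_Icc] at hp
    exact blockCoords_blockIndex hp.1.1 hp.2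
  · intro i hi
    rw [blockIndex_blockCoords (mem_Icc.1 hi).1]

end Blocks

section LittleSquares

variable {q : ℕ}

def quarterTurn (q : ℕ) (p : ℕ × ℕ) : ℕ × ℕ := (q + 1 - p.2, p.1)

lemma quarterTurn_mapsTo :
    Set.MapsTo (quarterTurn q) (Set.Icc 1 q ×ˢ Set.Icc 1 q) (Set.Icc 1 q ×ˢ Set.Icc 1 q) := by
  rintro ⟨i, j⟩ ⟨⟨hi₁, hi₂⟩, hj₁, hj₂⟩
  refine ⟨⟨?_, ?_⟩, hi₁, hi₂⟩ <;> simp only [quarterTurn] <;> omega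

lemma quarterTurn_injOn : Set.InjOn (quarterTurn q) (Set.Icc 1 q ×ˢ Set.Icc 1 q) := by
  rintro ⟨i, j⟩ ⟨-, -, hj⟩ ⟨i', j'⟩ ⟨-, -, hj'⟩ h
  simp only [quarterTurn, Prod.mk.injEq] at h
  ext <;> simp only <;> omega

lemma littleSq_eq_blockIndex_iterate_quarterTurn {k i j : ℕ} (hk : k < 4)
    (hi : i ∈ Set.Icc 1 q) (hj : j ∈ Set.Icc 1 q) :
    littleSq q k i j =
      blockIndex q ((quarterTurn q)^[k] (i, j)).1 ((quarterTurn q)^[k] (i, j)).2 := by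
  obtain ⟨⟨hi₁, hi₂⟩, hj₁, hj₂⟩ := And.intro hi hj
  interval_cases k
  · rfl
  · simp only [littleSq, blockIndex, quarterTurn, Function.iterate_one]
    rw [show q + 1 - j - 1 = q - j by omega]
  · simp only [littleSq, blockIndex, quarterTurn, Function.iterate_succ, Function.iterate_zero,
      Function.comp_apply, id]
    rw [show q + 1 - i - 1 = q - i by omega]
  · simp only [littleSq, blockIndex, quarterTurn, Function.iterate_succ, Function.iterate_zero,
      Function.comp_apply, id]
    rw [show q + 1 - (q + 1 - j) = j by omega]

lemma littleSq_mem_Icc {k i j : ℕ} (hk : k < 4) (hi : i ∈ Set.Icc 1 q)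
    (hj : j ∈ Set.Icc 1 q) :
    littleSq q k i j ∈ Set.Icc 1 (q ^ 2) := by
  obtain ⟨hr₁, hr₂⟩ := quarterTurn_mapsTo.iterate k (show (i, j) ∈ _ from ⟨hi, hj⟩)
  rw [littleSq_eq_blockIndex_iterate_quarterTurn hk hi hj, sq]
  exact blockIndex_mem_Icc hr₁ hr₂

lemma littleSq_inj {k i j i' j' : ℕ} (hk : k < 4) (hi : i ∈ Set.Icc 1 q)
    (hj : j ∈ Set.Icc 1 q) (hi' : i' ∈ Set.Icc 1 q) (hj' : j' ∈ Set.Icc 1 q)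
    (h : littleSq q k i j = littleSq q k i' j') : i = i' ∧ j = j' := by
  have hp : (i, j) ∈ Set.Icc 1 q ×ˢ Set.Icc 1 q := ⟨hi, hj⟩
  have hp' : (i', j') ∈ Set.Icc 1 q ×ˢ Set.Icc 1 q := ⟨hi', hj'⟩
  obtain ⟨hr₁, hr₂⟩ := quarterTurn_mapsTo.iterate k hp
  obtain ⟨hr'₁, hr'₂⟩ := quarterTurn_mapsTo.iterate k hp'
  rw [littleSq_eq_blockIndex_iterate_quarterTurn hk hi hj,
    littleSq_eq_blockIndex_iterate_quarterTurn hk hi' hj'] at h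
  rw [← Prod.mk.injEq]
  exact quarterTurn_injOn.iterate quarterTurn_mapsTo k hp hp' <|
    Prod.ext_iff.2 (blockIndex_inj hr₁.1 hr₂ hr'₁.1 hr'₂ h)

lemma sum_littleSq_range_four {i j : ℕ} (hi : i ∈ Set.Icc 1 q) (hj : j ∈ Set.Icc 1 q) :
    ∑ k ∈ range 4, littleSq q k i j = 2 * q ^ 2 + 2 := by
  obtain ⟨hi₁, hi₂⟩ := hi
  obtain ⟨hj₁, hj₂⟩ := hj
  simp only [sum_range_succ, sum_range_zero, littleSq]
  zify [hi₁, hi₂, hj₁, hj₂, (by omega : i ≤ q + 1), (by omega : j ≤ q + 1)]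
  ring

end LittleSquares

lemma sum_Icc_one_four_sub_mod {M : Type*} [AddCommMonoid M] (g : ℕ → M) {a : ℕ}
    (ha : a ∈ Icc 1 4) :
    ∑ a' ∈ Icc 1 4, g ((a' + 4 - a) % 4) = ∑ k ∈ range 4, g k ∧
      ∑ a' ∈ Icc 1 4, g ((a + 4 - a') % 4) = ∑ k ∈ range 4, g k := by
  obtain ⟨ha₁, ha₂⟩ := mem_Icc.1 ha
  rw [show Icc 1 4 = {1, 2, 3, 4} from rfl]
  interval_cases a <;> simp [sum_range_succ, add_comm, add_left_comm, add_assoc]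

lemma baseSq_mem_Icc {a b : ℕ} (ha : a ∈ Set.Icc 1 4) (hb : b ∈ Set.Icc 1 4) :
    baseSq a b ∈ Set.Icc 1 16 := by
  obtain ⟨⟨ha₁, ha₂⟩, hb₁, hb₂⟩ := And.intro ha hb
  interval_cases a <;> interval_cases b <;> decide

lemma baseSq_inj {a b a' b' : ℕ} (ha : a ∈ Set.Icc 1 4) (hb : b ∈ Set.Icc 1 4)
    (ha' : a' ∈ Set.Icc 1 4) (hb' : b' ∈ Set.Icc 1 4) (h : baseSq a b = baseSq a' b') :
    a = a' ∧ b = b' := by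
  have key : ∀ a ∈ Icc 1 4, ∀ b ∈ Icc 1 4, ∀ a' ∈ Icc 1 4, ∀ b' ∈ Icc 1 4,
      baseSq a b = baseSq a' b' → a = a' ∧ b = b' := by decide
  simp only [Set.mem_Icc, ← mem_Icc] at ha hb ha' hb'
  exact key a ha b hb a' ha' b' hb' h

lemma sum_baseSq_sub_one_row : ∀ a ∈ Icc 1 4, ∑ b ∈ Icc 1 4, (baseSq a b - 1) = 30 := by
  decide

lemma sum_baseSq_sub_one_col : ∀ b ∈ Icc 1 4, ∑ a ∈ Icc 1 4, (baseSq a b - 1) = 30 := by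
  decide

section WeavingSquare

variable {q : ℕ}

lemma weaving_eq (i j : ℕ) :
    weaving q i j = blockIndex (q ^ 2) (baseSq (blockCoords q i).1 (blockCoords q j).1)
      (littleSq q (((blockCoords q j).1 + 4 - (blockCoords q i).1) % 4)
        (blockCoords q i).2 (blockCoords q j).2) := by
  simp only [weaving, blockIndex, blockCoords]
  ring

lemma weaving_blockIndex {a b a' b' : ℕ} (ha : 1 ≤ a) (hb : b ∈ Set.Icc 1 q) (ha' : 1 ≤ a')
    (hb' : b' ∈ Set.Icc 1 q) :
    weaving q (blockIndex q a b) (blockIndex q a' b') =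
      blockIndex (q ^ 2) (baseSq a a') (littleSq q ((a' + 4 - a) % 4) b b') := by
  rw [weaving_eq, blockCoords_blockIndex ha hb, blockCoords_blockIndex ha' hb']

lemma weaving_mapsTo :
    Set.MapsTo (fun x : ℕ × ℕ => weaving q x.1 x.2)
      (Set.Icc 1 (4 * q) ×ˢ Set.Icc 1 (4 * q)) (Set.Icc 1 (16 * q ^ 2)) := by
  rintro ⟨i, j⟩ ⟨hi, hj⟩
  dsimp only at hi hj ⊢
  obtain ⟨hi₁, hi₂⟩ := blockCoords_mapsTo hi
  obtain ⟨hj₁, hj₂⟩ := blockCoords_mapsTo hj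
  rw [weaving_eq]
  exact blockIndex_mem_Icc (baseSq_mem_Icc hi₁ hj₁)
    (littleSq_mem_Icc (Nat.mod_lt _ four_pos) hi₂ hj₂)

lemma weaving_injOn :
    Set.InjOn (fun x : ℕ × ℕ => weaving q x.1 x.2)
      (Set.Icc 1 (4 * q) ×ˢ Set.Icc 1 (4 * q)) := by
  rintro ⟨i, j⟩ ⟨hi, hj⟩ ⟨i', j'⟩ ⟨hi', hj'⟩ h
  dsimp only at hi hj hi' hj' h
  obtain ⟨hi₁, hi₂⟩ := blockCoords_mapsTo hi
  obtain ⟨hj₁, hj₂⟩ := blockCoords_mapsTo hj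
  obtain ⟨hi'₁, hi'₂⟩ := blockCoords_mapsTo hi'
  obtain ⟨hj'₁, hj'₂⟩ := blockCoords_mapsTo hj'
  have hk : ∀ n, n % 4 < 4 := fun n => Nat.mod_lt _ four_pos
  simp only [weaving_eq] at h
  obtain ⟨hB, hL⟩ := blockIndex_inj
    (baseSq_mem_Icc hi₁ hj₁).1 (littleSq_mem_Icc (hk _) hi₂ hj₂)
    (baseSq_mem_Icc hi'₁ hj'₁).1 (littleSq_mem_Icc (hk _) hi'₂ hj'₂) h
  obtain ⟨hblock_i, hblock_j⟩ := baseSq_inj hi₁ hj₁ hi'₁ hj'₁ hB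
  rw [hblock_i, hblock_j] at hL
  obtain ⟨hcell_i, hcell_j⟩ := littleSq_inj (hk _) hi₂ hj₂ hi'₂ hj'₂ hL
  rw [Prod.mk.injEq, ← blockIndex_blockCoords hi.1, ← blockIndex_blockCoords hj.1,
    hblock_i, hblock_j, hcell_i, hcell_j, blockIndex_blockCoords hi'.1,
    blockIndex_blockCoords hj'.1]
  exact ⟨rfl, rfl⟩

lemma weaving_bijOn :
    Set.BijOn (fun x : ℕ × ℕ => weaving q x.1 x.2)
      (Set.Icc 1 (4 * q) ×ˢ Set.Icc 1 (4 * q)) (Set.Icc 1 (16 * q ^ 2)) := by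
  refine ⟨weaving_mapsTo, weaving_injOn, ?_⟩
  have hcoe : ((Icc 1 (4 * q) ×ˢ Icc 1 (4 * q) : Finset (ℕ × ℕ)) : Set (ℕ × ℕ)) =
      Set.Icc 1 (4 * q) ×ˢ Set.Icc 1 (4 * q) := by
    rw [coe_product, coe_Icc]
  have hcard : #(Icc 1 (16 * q ^ 2)) ≤ #(Icc 1 (4 * q) ×ˢ Icc 1 (4 * q)) := by
    simp only [card_product, Nat.card_Icc, add_tsub_cancel_right]
    exact (by ring : 16 * q ^ 2 = 4 * q * (4 * q)).le
  have := surjOn_of_injOn_of_card_le _ (by rw [hcoe, coe_Icc]; exact weaving_mapsTo)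
    (by rw [hcoe]; exact weaving_injOn) hcard
  rwa [hcoe, coe_Icc] at this

lemma sum_blockIndex_sq_line (c : ℕ → ℕ) (ℓ : ℕ → ℕ → ℕ)
    (hc : ∑ a ∈ Icc 1 4, (c a - 1) = 30)
    (hℓ : ∀ b ∈ Icc 1 q, ∑ a ∈ Icc 1 4, ℓ a b = 2 * q ^ 2 + 2) :
    ∑ p ∈ Icc 1 4 ×ˢ Icc 1 q, blockIndex (q ^ 2) (c p.1) (ℓ p.1 p.2) =
      32 * q ^ 3 + 2 * q := by
  simp only [blockIndex, sum_add_distrib]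
  rw [sum_product, sum_product_right, sum_congr rfl hℓ]
  simp only [sum_const, Nat.card_Icc, add_tsub_cancel_right, smul_eq_mul, ← mul_sum, hc]
  ring

lemma sum_weaving_row {i : ℕ} (hi : i ∈ Icc 1 (4 * q)) :
    ∑ j ∈ Icc 1 (4 * q), weaving q i j = 32 * q ^ 3 + 2 * q := by
  obtain ⟨ha, hb⟩ := blockCoords_mapsTo (mem_Icc.1 hi)
  rw [sum_Icc_mul_eq_sum_blockIndex, ← blockIndex_blockCoords (mem_Icc.1 hi).1,
    sum_congr rfl fun p hp => by
      obtain ⟨ha', hb'⟩ := mem_product.1 hp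
      exact weaving_blockIndex ha.1 hb (mem_Icc.1 ha').1 (mem_Icc.1 hb')]
  exact sum_blockIndex_sq_line _ _ (sum_baseSq_sub_one_row _ (mem_Icc.2 ha)) fun b' hb' => by
    rw [(sum_Icc_one_four_sub_mod _ (mem_Icc.2 ha)).1]
    exact sum_littleSq_range_four hb (mem_Icc.1 hb')

lemma sum_weaving_col {j : ℕ} (hj : j ∈ Icc 1 (4 * q)) :
    ∑ i ∈ Icc 1 (4 * q), weaving q i j = 32 * q ^ 3 + 2 * q := by
  obtain ⟨ha, hb⟩ := blockCoords_mapsTo (mem_Icc.1 hj)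
  rw [sum_Icc_mul_eq_sum_blockIndex, ← blockIndex_blockCoords (mem_Icc.1 hj).1,
    sum_congr rfl fun p hp => by
      obtain ⟨ha', hb'⟩ := mem_product.1 hp
      exact weaving_blockIndex (mem_Icc.1 ha').1 (mem_Icc.1 hb') ha.1 hb]
  exact sum_blockIndex_sq_line _ _ (sum_baseSq_sub_one_col _ (mem_Icc.2 ha)) fun b' hb' => by
    rw [(sum_Icc_one_four_sub_mod _ (mem_Icc.2 ha)).2]
    exact sum_littleSq_range_four (mem_Icc.1 hb') hb

end WeavingSquare

end Weaving

theorem stmt11_general (q : ℕ) :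
    Set.BijOn (fun x : ℕ × ℕ => Weaving.weaving q x.1 x.2)
      (Set.Icc 1 (4 * q) ×ˢ Set.Icc 1 (4 * q)) (Set.Icc 1 (16 * q ^ 2)) ∧
    (∀ i ∈ Finset.Icc 1 (4 * q),
      (∑ j ∈ Finset.Icc 1 (4 * q), Weaving.weaving q i j) = 32 * q ^ 3 + 2 * q ∧
      (∑ j ∈ Finset.Icc 1 (4 * q), Weaving.weaving q j i) = 32 * q ^ 3 + 2 * q) :=
  ⟨Weaving.weaving_bijOn, fun _ hi =>
    ⟨Weaving.sum_weaving_row hi, Weaving.sum_weaving_col hi⟩⟩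

theorem stmt11 (q : ℕ) (hq : 0 < q) :
    Set.BijOn (fun x : ℕ × ℕ => Weaving.weaving q x.1 x.2)
      (Set.Icc 1 (4 * q) ×ˢ Set.Icc 1 (4 * q)) (Set.Icc 1 (16 * q ^ 2)) ∧
    (∀ i ∈ Finset.Icc 1 (4 * q),
      (∑ j ∈ Finset.Icc 1 (4 * q), Weaving.weaving q i j) = 32 * q ^ 3 + 2 * q ∧
      (∑ j ∈ Finset.Icc 1 (4 * q), Weaving.weaving q j i) = 32 * q ^ 3 + 2 * q) :=
  stmt11_general q
end

section
/- For every positive integer q, the weaving square W_{4q} satisfies: (i) for every i ∈ [4q], the set of row entries {W_{4q}(i,j) : j ∈ [4q]} contains two disjoint 1-APs (sets of consecutive integers) each of length q, and likewise the set of column entries {W_{4q}(j,i) : j ∈ [4q]} contains two disjoint 1-APs each of length q; and (ii) for all (i,j) ∈ [4q]×[4q], W_{4q}(i,j) ≤ 8q² if and only if either (i ≤ 2q and j ≤ 2q) or (i > 2q and j > 2q). -/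
/-!
Writing `i = q(i₁−1)+i₂`, the offset `j₁ − i₁` runs through all residues mod 4 along a block row,
in particular through `0` and `2`. A row of `L⁰` or of `L²` is a run of `q` consecutive integers,
so each row of `W_{4q}` contains two such runs, shifted by `(B(i₁,j₁)−1)q²` for two different
entries of `B`; as every little square takes its values in `[1, q²]`, the runs lie in the disjoint
windows `((B−1)q², Bq²]`. Columns are handled in the same way with `L¹` and `L³`. The same window
argument gives `W(i,j) ≤ 8q² ↔ B(i₁,j₁) ≤ 8`, and the entries `1, …, 8` of `B` fill exactly its
two diagonal `2 × 2` blocks.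
-/

namespace Weaving

open Finset

def HasTwoDisjointRuns (q : ℕ) (S : Finset ℕ) : Prop :=
  ∃ I₁ I₂ : Finset ℕ, IsAP1 I₁ ∧ IsAP1 I₂ ∧ I₁.card = q ∧ I₂.card = q ∧ Disjoint I₁ I₂ ∧
    I₁ ⊆ S ∧ I₂ ⊆ S

variable {q : ℕ}

lemma mul_add_lt_mul_iff {a s m : ℕ} (hs : s < q) : q * a + s < q * m ↔ a < m := by
  have hq : 0 < q := by omega
  have h := Nat.div_lt_iff_lt_mul (x := q * a + s) (y := m) hq
  rw [Nat.mul_add_div hq, Nat.div_eq_of_lt hs, add_zero, mul_comm m q] at h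
  exact h.symm

lemma mul_add_add_one_mem_Icc {a s m : ℕ} (ha : a < m) (hs : s < q) :
    q * a + s + 1 ∈ Icc 1 (m * q) := by
  have := (mul_add_lt_mul_iff hs).2 ha
  rw [mem_Icc, mul_comm m]
  omega

lemma exists_eq_mul_add_add_one {i m : ℕ} (hi : i ∈ Icc 1 (m * q)) :
    ∃ a < m, ∃ s < q, i = q * a + s + 1 := by
  rw [mem_Icc] at hi
  have hq : 0 < q := Nat.pos_of_ne_zero (by rintro rfl; omega)
  refine ⟨(i - 1) / q, Nat.div_lt_of_lt_mul (by rw [mul_comm]; omega), (i - 1) % q,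
    Nat.mod_lt _ hq, ?_⟩
  have := Nat.div_add_mod (i - 1) q
  omega

lemma littleSq_mem_Icc_s12 (r : ℕ) {s t : ℕ} (hs : s < q) (ht : t < q) :
    littleSq q r (s + 1) (t + 1) ∈ Icc 1 (q ^ 2) := by
  have key {k u : ℕ} (hk : k < q) (hu : u < q) : q * k + (u + 1) ∈ Icc 1 (q ^ 2) := by
    rw [sq, ← add_assoc]
    exact mul_add_add_one_mem_Icc hk hu
  rcases r with _ | _ | _ | r
  · show q * (s + 1 - 1) + (t + 1) ∈ _
    rw [Nat.add_sub_cancel]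
    exact key hs ht
  · exact key (by omega) hs
  · show q * (q - (s + 1)) + (q + 1 - (t + 1)) ∈ _
    rw [show q + 1 - (t + 1) = q - (t + 1) + 1 by omega]
    exact key (by omega) (by omega)
  · show q * (t + 1 - 1) + (q + 1 - (s + 1)) ∈ _
    rw [show q + 1 - (s + 1) = q - (s + 1) + 1 by omega, Nat.add_sub_cancel]
    exact key ht (by omega)

-- 0-based block coordinates: `a = i₁ − 1`, `s = i₂ − 1`, and likewise `b`, `t` for `j`.
lemma weaving_mul_add_add_one {a b s t : ℕ} (hs : s < q) (ht : t < q) :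
    weaving q (q * a + s + 1) (q * b + t + 1) =
      (baseSq (a + 1) (b + 1) - 1) * q ^ 2 + littleSq q ((b + 4 - a) % 4) (s + 1) (t + 1) := by
  have hq : 0 < q := by omega
  simp [weaving, Nat.mul_add_div hq, Nat.div_eq_of_lt hs, Nat.div_eq_of_lt ht,
    Nat.mod_eq_of_lt hs, Nat.mod_eq_of_lt ht, show b + 1 + 4 - (a + 1) = b + 4 - a by omega]

lemma div_sq_eq_of_mem_Icc {c k x : ℕ} (hk : k < q)
    (hx : x ∈ Icc (c * q ^ 2 + q * k + 1) (c * q ^ 2 + q * k + q)) : (x - 1) / q ^ 2 = c := by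
  have : q * k + (q - 1) < q ^ 2 := by
    rw [sq]
    exact (mul_add_lt_mul_iff (by omega)).2 hk
  rw [mem_Icc] at hx
  refine Nat.div_eq_of_lt_le (by omega) ?_
  rw [add_one_mul]
  omega

lemma hasTwoDisjointRuns_of_Icc_subset {S : Finset ℕ} {c c' k k' : ℕ} (hc : c ≠ c')
    (hk : k < q) (hk' : k' < q) (h : Icc (c * q ^ 2 + q * k + 1) (c * q ^ 2 + q * k + q) ⊆ S)
    (h' : Icc (c' * q ^ 2 + q * k' + 1) (c' * q ^ 2 + q * k' + q) ⊆ S) :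
    HasTwoDisjointRuns q S := by
  refine ⟨_, _, ⟨_, _, by omega, rfl⟩, ⟨_, _, by omega, rfl⟩, by simp, by simp, ?_, h, h'⟩
  rw [disjoint_left]
  exact fun _ hx hx' =>
    hc ((div_sq_eq_of_mem_Icc hk hx).symm.trans (div_sq_eq_of_mem_Icc hk' hx'))

lemma Icc_subset_image_of_forall_lt {f : ℕ → ℕ} {S : Finset ℕ} {n : ℕ}
    (h : ∀ t < q, ∃ j ∈ S, f j = n + t + 1) : Icc (n + 1) (n + q) ⊆ S.image f := by
  intro x hx
  rw [mem_Icc] at hx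
  obtain ⟨j, hj, hfj⟩ := h (x - n - 1) (by omega)
  exact mem_image.2 ⟨j, hj, by omega⟩

lemma littleSq_row_run {r s : ℕ} (hr : r = 0 ∨ r = 2) (hs : s < q) :
    ∃ k < q, ∀ t < q, ∃ u < q, littleSq q r (s + 1) (u + 1) = q * k + t + 1 := by
  rcases hr with rfl | rfl
  · exact ⟨s, hs, fun t ht => ⟨t, ht, by simp only [littleSq, Nat.add_sub_cancel]; omega⟩⟩
  · refine ⟨q - (s + 1), by omega, fun t ht => ⟨q - (t + 1), by omega, ?_⟩⟩
    simp only [littleSq]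
    omega

lemma littleSq_col_run {r s : ℕ} (hr : r = 1 ∨ r = 3) (hs : s < q) :
    ∃ k < q, ∀ t < q, ∃ u < q, littleSq q r (u + 1) (s + 1) = q * k + t + 1 := by
  rcases hr with rfl | rfl
  · exact ⟨q - (s + 1), by omega, fun t ht => ⟨t, ht, by simp only [littleSq]; omega⟩⟩
  · refine ⟨s, hs, fun t ht => ⟨q - (t + 1), by omega, ?_⟩⟩
    simp only [littleSq, Nat.add_sub_cancel]
    omega

lemma Icc_subset_row_image {a b s : ℕ} (hb : b < 4) (hs : s < q)
    (hr : (b + 4 - a) % 4 = 0 ∨ (b + 4 - a) % 4 = 2) :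
    ∃ k < q, Icc ((baseSq (a + 1) (b + 1) - 1) * q ^ 2 + q * k + 1)
        ((baseSq (a + 1) (b + 1) - 1) * q ^ 2 + q * k + q) ⊆
      (Icc 1 (4 * q)).image fun j => weaving q (q * a + s + 1) j := by
  obtain ⟨k, hk, hrun⟩ := littleSq_row_run hr hs
  refine ⟨k, hk, Icc_subset_image_of_forall_lt fun t ht => ?_⟩
  obtain ⟨u, hu, hL⟩ := hrun t ht
  refine ⟨q * b + u + 1, mul_add_add_one_mem_Icc hb hu, ?_⟩
  rw [weaving_mul_add_add_one hs hu, hL]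
  ring

lemma Icc_subset_col_image {a b s : ℕ} (ha : a < 4) (hs : s < q)
    (hr : (b + 4 - a) % 4 = 1 ∨ (b + 4 - a) % 4 = 3) :
    ∃ k < q, Icc ((baseSq (a + 1) (b + 1) - 1) * q ^ 2 + q * k + 1)
        ((baseSq (a + 1) (b + 1) - 1) * q ^ 2 + q * k + q) ⊆
      (Icc 1 (4 * q)).image fun i => weaving q i (q * b + s + 1) := by
  obtain ⟨k, hk, hrun⟩ := littleSq_col_run hr hs
  refine ⟨k, hk, Icc_subset_image_of_forall_lt fun t ht => ?_⟩
  obtain ⟨u, hu, hL⟩ := hrun t ht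
  refine ⟨q * a + u + 1, mul_add_add_one_mem_Icc ha hu, ?_⟩
  rw [weaving_mul_add_add_one hu hs, hL]
  ring

lemma hasTwoDisjointRuns_row {i : ℕ} (hi : i ∈ Icc 1 (4 * q)) :
    HasTwoDisjointRuns q ((Icc 1 (4 * q)).image fun j => weaving q i j) := by
  obtain ⟨a, ha, s, hs, rfl⟩ := exists_eq_mul_add_add_one hi
  obtain ⟨k, hk, h⟩ := Icc_subset_row_image (a := a) (b := a) ha hs (by omega)
  obtain ⟨k', hk', h'⟩ :=
    Icc_subset_row_image (a := a) (b := (a + 2) % 4) (by omega) hs (by omega)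
  refine hasTwoDisjointRuns_of_Icc_subset ?_ hk hk' h h'
  interval_cases a <;> decide

lemma hasTwoDisjointRuns_col {j : ℕ} (hj : j ∈ Icc 1 (4 * q)) :
    HasTwoDisjointRuns q ((Icc 1 (4 * q)).image fun i => weaving q i j) := by
  obtain ⟨b, hb, s, hs, rfl⟩ := exists_eq_mul_add_add_one hj
  obtain ⟨k, hk, h⟩ := Icc_subset_col_image (a := (b + 3) % 4) (b := b) (by omega) hs (by omega)
  obtain ⟨k', hk', h'⟩ :=
    Icc_subset_col_image (a := (b + 1) % 4) (b := b) (by omega) hs (by omega)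
  refine hasTwoDisjointRuns_of_Icc_subset ?_ hk hk' h h'
  interval_cases b <;> decide

lemma sub_one_mul_add_le_mul_iff {c m n L : ℕ} (hm : 0 < m) (hL : L ∈ Icc 1 n) :
    (c - 1) * n + L ≤ m * n ↔ c ≤ m := by
  rw [mem_Icc] at hL
  constructor
  · intro h
    by_contra! hc
    have : m * n ≤ (c - 1) * n := Nat.mul_le_mul_right n (by omega)
    omega
  · intro hc
    have : (c - 1) * n + n ≤ m * n := by
      rw [← add_one_mul]
      exact Nat.mul_le_mul_right n (by omega)
    omega

lemma baseSq_le_eight_iff {a b : ℕ} (ha : a < 4) (hb : b < 4) :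
    baseSq (a + 1) (b + 1) ≤ 8 ↔ (a < 2 ∧ b < 2) ∨ (2 ≤ a ∧ 2 ≤ b) := by
  interval_cases a <;> interval_cases b <;> decide

lemma weaving_le_eight_mul_sq_iff {i j : ℕ} (hi : i ∈ Icc 1 (4 * q))
    (hj : j ∈ Icc 1 (4 * q)) :
    weaving q i j ≤ 8 * q ^ 2 ↔ (i ≤ 2 * q ∧ j ≤ 2 * q) ∨ (2 * q < i ∧ 2 * q < j) := by
  obtain ⟨a, ha, s, hs, rfl⟩ := exists_eq_mul_add_add_one hi
  obtain ⟨b, hb, t, ht, rfl⟩ := exists_eq_mul_add_add_one hj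
  have hi2 := mul_add_lt_mul_iff (a := a) (m := 2) hs
  have hj2 := mul_add_lt_mul_iff (a := b) (m := 2) ht
  rw [weaving_mul_add_add_one hs ht, sub_one_mul_add_le_mul_iff (by norm_num)
    (littleSq_mem_Icc_s12 _ hs ht), baseSq_le_eight_iff ha hb]
  omega

end Weaving

theorem stmt12_general (q : ℕ) :
    (∀ i ∈ Finset.Icc 1 (4 * q),
      (∃ I₁ I₂ : Finset ℕ, Weaving.IsAP1 I₁ ∧ Weaving.IsAP1 I₂ ∧
        I₁.card = q ∧ I₂.card = q ∧ Disjoint I₁ I₂ ∧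
        I₁ ⊆ (Finset.Icc 1 (4 * q)).image (fun j => Weaving.weaving q i j) ∧
        I₂ ⊆ (Finset.Icc 1 (4 * q)).image (fun j => Weaving.weaving q i j)) ∧
      (∃ I₁ I₂ : Finset ℕ, Weaving.IsAP1 I₁ ∧ Weaving.IsAP1 I₂ ∧
        I₁.card = q ∧ I₂.card = q ∧ Disjoint I₁ I₂ ∧
        I₁ ⊆ (Finset.Icc 1 (4 * q)).image (fun j => Weaving.weaving q j i) ∧
        I₂ ⊆ (Finset.Icc 1 (4 * q)).image (fun j => Weaving.weaving q j i))) ∧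
    (∀ i ∈ Finset.Icc 1 (4 * q), ∀ j ∈ Finset.Icc 1 (4 * q),
      (Weaving.weaving q i j ≤ 8 * q ^ 2 ↔
        (i ≤ 2 * q ∧ j ≤ 2 * q) ∨ (2 * q < i ∧ 2 * q < j))) :=
  ⟨fun _ hi => ⟨Weaving.hasTwoDisjointRuns_row hi, Weaving.hasTwoDisjointRuns_col hi⟩,
    fun _ hi _ hj => Weaving.weaving_le_eight_mul_sq_iff hi hj⟩

theorem stmt12 (q : ℕ) (hq : 0 < q) :
    (∀ i ∈ Finset.Icc 1 (4 * q),
      (∃ I₁ I₂ : Finset ℕ, Weaving.IsAP1 I₁ ∧ Weaving.IsAP1 I₂ ∧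
        I₁.card = q ∧ I₂.card = q ∧ Disjoint I₁ I₂ ∧
        I₁ ⊆ (Finset.Icc 1 (4 * q)).image (fun j => Weaving.weaving q i j) ∧
        I₂ ⊆ (Finset.Icc 1 (4 * q)).image (fun j => Weaving.weaving q i j)) ∧
      (∃ I₁ I₂ : Finset ℕ, Weaving.IsAP1 I₁ ∧ Weaving.IsAP1 I₂ ∧
        I₁.card = q ∧ I₂.card = q ∧ Disjoint I₁ I₂ ∧
        I₁ ⊆ (Finset.Icc 1 (4 * q)).image (fun j => Weaving.weaving q j i) ∧
        I₂ ⊆ (Finset.Icc 1 (4 * q)).image (fun j => Weaving.weaving q j i))) ∧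
    (∀ i ∈ Finset.Icc 1 (4 * q), ∀ j ∈ Finset.Icc 1 (4 * q),
      (Weaving.weaving q i j ≤ 8 * q ^ 2 ↔
        (i ≤ 2 * q ∧ j ≤ 2 * q) ∨ (2 * q < i ∧ 2 * q < j))) :=
  stmt12_general q
end

section
/- Let b ≥ 0 be an integer and let t be a b-astray good edge labeling of K_n (n ≥ 2). Then t is (b²n/2)-almost supermagic; that is, for all vertices u, v of K_n, 2·|s(t,u) − s(t,v)| ≤ b²·n. -/
open Finset

/-!
Put `c = ε + 1`. Off the astray part the labels at a vertex `v` average to `c / 2`, so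
`2 s(t,v) = (n - 1) c + ∑_{e ∈ D(v) ∩ A} (2 t(e) - c)`. An astray label lies in the central
interval of length `a`, hence `|2 t(e) - c| ≤ a`, and at most `b` astray edges meet `v`; thus
`2 s(t,v)` is within `a b` of `(n - 1) c`. Counting the astray edges from their endpoints gives
`2 a ≤ b n`, so `2 |s(t,u) - s(t,v)| ≤ 2 a b ≤ b² n`.
-/

theorem Sym2.sum_card_filter_mem {α : Type*} [Fintype α] [DecidableEq α] {A : Finset (Sym2 α)}
    (hA : ∀ e ∈ A, ¬ e.IsDiag) : ∑ v, #{e ∈ A | v ∈ e} = 2 * #A := by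
  calc ∑ v, #{e ∈ A | v ∈ e} = ∑ e ∈ A, #{v | v ∈ e} := by
        simp only [card_filter]
        exact sum_comm
    _ = ∑ _e ∈ A, 2 := sum_congr rfl fun e he => by
        rw [← Sym2.card_toFinset_of_not_isDiag e (hA e he)]
        congr 1
        ext
        simp [Sym2.mem_toFinset]
    _ = 2 * #A := by rw [sum_const, smul_eq_mul, mul_comm]

theorem Finset.abs_sum_le_card_mul {ι R : Type*} [Ring R] [LinearOrder R] [IsOrderedRing R]
    {s : Finset ι} {f : ι → R} {a : R} (h : ∀ i ∈ s, |f i| ≤ a) : |∑ i ∈ s, f i| ≤ #s * a := by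
  calc |∑ i ∈ s, f i| ≤ ∑ i ∈ s, |f i| := abs_sum_le_sum_abs f s
    _ ≤ #s • a := sum_le_card_nsmul s _ a h
    _ = #s * a := nsmul_eq_mul _ _

theorem Finset.two_mul_sum_eq_of_two_mul_sum_sdiff {ι R : Type*} [CommRing R] [DecidableEq ι]
    {s A : Finset ι} {f : ι → R} {c : R} (h : 2 * ∑ i ∈ s \ A, f i = #(s \ A) * c) :
    2 * ∑ i ∈ s, f i = #s * c + ∑ i ∈ s ∩ A, (2 * f i - c) := by
  rw [← sum_inter_add_sum_sdiff s A, ← card_inter_add_card_sdiff s A, mul_add, h,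
    sum_sub_distrib, ← mul_sum, sum_const, nsmul_eq_mul]
  push_cast
  ring

theorem abs_two_mul_sub_le_of_mem_Icc {N a x : ℕ} (hx : x ∈ Icc ((N - a) / 2 + 1) ((N + a) / 2)) :
    |2 * (x : ℤ) - (N + 1)| ≤ a := by
  rw [mem_Icc] at hx
  rw [abs_le]
  omega

namespace Swap

theorem mem_incEdges {n : ℕ} {v : Fin n} {e : Sym2 (Fin n)} :
    e ∈ incEdges n v ↔ v ∈ e ∧ ¬ e.IsDiag := by
  simp [incEdges]

theorem card_incEdges {n : ℕ} (v : Fin n) : #(incEdges n v) = n - 1 := by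
  have : incEdges n v = (univ.erase v).image (fun w => s(v, w)) := by
    ext e
    induction e with
    | _ x y =>
      simp only [mem_incEdges, Sym2.mem_iff, Sym2.mk_isDiag_iff, mem_image, mem_erase, mem_univ,
        and_true, Sym2.eq_iff]
      constructor
      · rintro ⟨rfl | rfl, hxy⟩
        exacts [⟨y, Ne.symm hxy, by tauto⟩, ⟨x, hxy, by tauto⟩]
      · rintro ⟨w, hwv, ⟨rfl, rfl⟩ | ⟨rfl, rfl⟩⟩
        exacts [⟨Or.inl rfl, Ne.symm hwv⟩, ⟨Or.inr rfl, hwv⟩]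
  rw [this, card_image_of_injective _ (fun _ _ => Sym2.congr_right.1),
    card_erase_of_mem (mem_univ v), card_univ, Fintype.card_fin]

theorem sum_card_incEdges_inter {n : ℕ} {A : Finset (Sym2 (Fin n))} (hA : ∀ e ∈ A, ¬ e.IsDiag) :
    ∑ v, #(incEdges n v ∩ A) = 2 * #A := by
  rw [← Sym2.sum_card_filter_mem hA]
  refine sum_congr rfl fun v _ => congrArg card ?_
  ext e
  simp only [mem_inter, mem_incEdges, mem_filter]
  exact ⟨fun ⟨⟨hv, _⟩, he⟩ => ⟨he, hv⟩, fun ⟨he, hv⟩ => ⟨⟨hv, hA e he⟩, he⟩⟩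

theorem abs_two_mul_labelSum_sub_le {n b : ℕ} {t : Sym2 (Fin n) → ℕ} {A : Finset (Sym2 (Fin n))}
    (himg : A.image t = Icc ((eps n - #A) / 2 + 1) ((eps n + #A) / 2)) (v : Fin n)
    (hb : #(incEdges n v ∩ A) ≤ b)
    (hv : 2 * ∑ e ∈ incEdges n v \ A, t e = #(incEdges n v \ A) * (eps n + 1)) :
    |2 * labelSum n t v - (n - 1 : ℕ) * (eps n + 1 : ℤ)| ≤ b * #A := by
  have hv' : 2 * ∑ e ∈ incEdges n v \ A, (t e : ℤ) = #(incEdges n v \ A) * (eps n + 1 : ℤ) := by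
    exact_mod_cast hv
  have hsplit : 2 * labelSum n t v = (n - 1 : ℕ) * (eps n + 1 : ℤ)
      + ∑ e ∈ incEdges n v ∩ A, (2 * (t e : ℤ) - (eps n + 1)) := by
    rw [labelSum, two_mul_sum_eq_of_two_mul_sum_sdiff hv', card_incEdges]
  rw [hsplit, add_sub_cancel_left]
  calc _ ≤ #(incEdges n v ∩ A) * (#A : ℤ) := abs_sum_le_card_mul fun e he =>
        abs_two_mul_sub_le_of_mem_Icc (himg ▸ mem_image_of_mem t (mem_inter.1 he).2)
    _ ≤ b * #A := by gcongr

end Swap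

theorem stmt13_general (n b : ℕ)
    (t : Sym2 (Fin n) → ℕ) (ht : Swap.AstrayGood n b t) :
    ∀ u v : Fin n,
      2 * |Swap.labelSum n t u - Swap.labelSum n t v| ≤ (b : ℤ) ^ 2 * n := by
  obtain ⟨-, A, hAdiag, -, himg, hA⟩ := ht
  have hdev (w : Fin n) := Swap.abs_two_mul_labelSum_sub_le himg w (hA w).1 (hA w).2.2
  have hcard : 2 * #A ≤ b * n :=
    calc 2 * #A = ∑ w, #(Swap.incEdges n w ∩ A) := (Swap.sum_card_incEdges_inter hAdiag).symm
      _ ≤ ∑ _w : Fin n, b := sum_le_sum fun w _ => (hA w).1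
      _ = b * n := by simp [mul_comm]
  intro u v
  set c : ℤ := (n - 1 : ℕ) * (Swap.eps n + 1 : ℤ)
  calc 2 * |Swap.labelSum n t u - Swap.labelSum n t v|
      = |(2 * Swap.labelSum n t u - c) - (2 * Swap.labelSum n t v - c)| := by
        rw [← abs_two, ← abs_mul]
        ring_nf
    _ ≤ b * #A + b * #A := (abs_sub _ _).trans (add_le_add (hdev u) (hdev v))
    _ = b * (2 * #A : ℕ) := by push_cast; ring
    _ ≤ b * (b * n : ℕ) := by gcongr
    _ = b ^ 2 * n := by push_cast; ring

theorem stmt13 (n b : ℕ) (hn : 2 ≤ n)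
    (t : Sym2 (Fin n) → ℕ) (ht : Swap.AstrayGood n b t) :
    ∀ u v : Fin n,
      2 * |Swap.labelSum n t u - Swap.labelSum n t v| ≤ (b : ℤ) ^ 2 * n :=
  stmt13_general n b t ht
end

section
/- For every real number ε > 0 there exist an integer N and a family (t_n)_{n ≥ N}, where t_n is a 7n-almost supermagic edge labeling of K_n for each n ≥ N, such that for every admissible magnitude sequence p : ℕ → ℕ, limsup_{n→∞} R(p(n), t_n, n)/(2·p(n)·n) ≤ 1/2 + ε. -/
open Finset

namespace SP
open Swap

def qq (n : ℕ) : ℕ := (n - 1) / 2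
def PP (n : ℕ) : ℕ := qq n / 2
def HH (n : ℕ) : ℕ := PP n / 2

def Mf (n j i : ℕ) : ℕ :=
  if i ≤ HH n then j * HH n + i
  else if i ≤ 2 * HH n then n * PP n - (j + 1) * HH n + (i - HH n)
  else n * HH n + j + 1

def lab (n o d : ℕ) : ℕ :=
  if d ≤ 2 * PP n then
    (if d % 2 = 1 then eps n + 1 - Mf n o ((d + 1) / 2) else Mf n ((o + 1) % n) (d / 2))
  else if 2 * d = n then n * PP n + (qq n % 2) * n + 1 + o
  else n * PP n + 1 + o

def Valid (n o d : ℕ) : Prop := o < n ∧ 1 ≤ d ∧ (d ≤ qq n ∨ (2 * d = n ∧ o < n / 2))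

lemma qq_id (n : ℕ) : qq n = 2 * PP n + qq n % 2 := by unfold PP; omega

lemma hh_id (n : ℕ) : PP n = 2 * HH n + PP n % 2 := by unfold HH; omega

lemma eps_eq (n : ℕ) : eps n = n * qq n + (if n % 2 = 0 then n / 2 else 0) := by
  rcases (by omega : n % 2 = 1 ∨ n % 2 = 0) with h | h
  · have h1 : n - 1 = 2 * qq n := by unfold qq; omega
    have h2 : n * (n - 1) = 2 * (n * qq n) := by rw [h1]; ring
    unfold eps
    rw [h2, Nat.mul_div_cancel_left _ (by norm_num), h]
    simp
  · have h1 : n = 0 ∨ (2 ≤ n ∧ n - 1 = 2 * qq n + 1) := by unfold qq; omega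
    rcases h1 with h1 | ⟨h2, h1⟩
    · subst h1; simp [eps, qq]
    · have hhalf : n = 2 * (n / 2) := by omega
      have h3 : n * (n - 1) = 2 * ((n / 2) * (2 * qq n + 1)) := by
        calc n * (n - 1) = (2 * (n / 2)) * (2 * qq n + 1) := by rw [← hhalf, ← h1]
        _ = 2 * ((n / 2) * (2 * qq n + 1)) := by ring
      unfold eps
      rw [h3, Nat.mul_div_cancel_left _ (by norm_num), h]
      simp only [if_true]
      calc n / 2 * (2 * qq n + 1) = (2 * (n/2)) * qq n + n / 2 := by ring
      _ = n * qq n + n / 2 := by rw [← hhalf]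

/-- zone partition identity -/
lemma zone_id (n : ℕ) :
    eps n = 2 * (n * PP n) + (qq n % 2) * n + (if n % 2 = 0 then n / 2 else 0) := by
  rw [eps_eq]
  have h4 : n * qq n = 2 * (n * PP n) + (qq n % 2) * n := by
    calc n * qq n = n * (2 * PP n + qq n % 2) := by rw [← qq_id]
    _ = 2 * (n * PP n) + (qq n % 2) * n := by ring
  omega

/-- magnitude part identity -/
lemma mzone_id (n : ℕ) : n * PP n = 2 * (n * HH n) + (PP n % 2) * n := by
  calc n * PP n = n * (2 * HH n + PP n % 2) := by rw [← hh_id]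
  _ = 2 * (n * HH n) + (PP n % 2) * n := by ring

section Mlemmas

variable {n j i : ℕ}

lemma nonlin_facts (hj : j < n) : (j + 1) * HH n ≤ n * HH n ∧ HH n ≤ (j + 1) * HH n
    ∧ n * HH n ≤ n * PP n ∧ j * HH n + HH n = (j+1) * HH n := by
  refine ⟨Nat.mul_le_mul_right _ (by omega), Nat.le_mul_of_pos_left _ (by omega), ?_, by ring⟩
  exact Nat.mul_le_mul_left _ (by unfold HH; omega)

lemma Mf_p1 (hi1 : 1 ≤ i) (hi2 : i ≤ HH n) :
    Mf n j i = j * HH n + i := by unfold Mf; rw [if_pos hi2]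

lemma Mf_p2 (hi1 : HH n < i) (hi2 : i ≤ 2 * HH n) :
    Mf n j i = n * PP n - (j + 1) * HH n + (i - HH n) := by
  unfold Mf; rw [if_neg (by omega), if_pos hi2]

lemma Mf_p3 (hi1 : 2 * HH n < i) : Mf n j i = n * HH n + j + 1 := by
  unfold Mf; rw [if_neg (by omega), if_neg (by omega)]

lemma Mf_p1_range (hj : j < n) (hi1 : 1 ≤ i) (hi2 : i ≤ HH n) :
    1 ≤ Mf n j i ∧ Mf n j i ≤ n * HH n := by
  have h := nonlin_facts (n := n) hj
  rw [Mf_p1 hi1 hi2]; omega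

lemma Mf_p2_range (hj : j < n) (hi1 : HH n < i) (hi2 : i ≤ 2 * HH n) :
    n * HH n + (PP n % 2) * n + 1 ≤ Mf n j i ∧ Mf n j i ≤ n * PP n := by
  have h := nonlin_facts (n := n) hj
  have hm := mzone_id n
  rw [Mf_p2 hi1 hi2]; omega

lemma Mf_p3_range (hj : j < n) (hi1 : 2 * HH n < i) (hi2 : i ≤ PP n) :
    n * HH n + 1 ≤ Mf n j i ∧ Mf n j i ≤ n * HH n + (PP n % 2) * n := by
  have h := nonlin_facts (n := n) hj
  have hm := mzone_id n
  have hP2 : PP n % 2 = 1 := by have := hh_id n; omega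
  rw [Mf_p3 hi1]
  rw [hP2]; omega

lemma Mf_range (hj : j < n) (hi1 : 1 ≤ i) (hi2 : i ≤ PP n) :
    1 ≤ Mf n j i ∧ Mf n j i ≤ n * PP n := by
  have h := nonlin_facts (n := n) hj
  have hm := mzone_id n
  rcases (by omega : (1 ≤ i ∧ i ≤ HH n) ∨ (HH n < i ∧ i ≤ 2 * HH n) ∨ 2 * HH n < i)
    with ⟨a, b⟩ | ⟨a, b⟩ | a
  · have := Mf_p1_range hj a b; omega
  · have := Mf_p2_range hj a b; omega
  · have := Mf_p3_range hj a hi2; omega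

/-- uniqueness helper: blocks of size H -/
lemma block_inj {j j' r r' H : ℕ} (hr : r < H) (hr' : r' < H)
    (h : j * H + r = j' * H + r') : j = j' ∧ r = r' := by
  rcases Nat.lt_trichotomy j j' with hlt | heq | hgt
  · exfalso
    have h2 : (j + 1) * H ≤ j' * H := Nat.mul_le_mul_right _ (by omega)
    have h3 : j * H + H = (j + 1) * H := by ring
    omega
  · exact ⟨heq, by subst heq; omega⟩
  · exfalso
    have h2 : (j' + 1) * H ≤ j * H := Nat.mul_le_mul_right _ (by omega)
    have h3 : j' * H + H = (j' + 1) * H := by ring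
    omega

lemma Mf_inj {j' i' : ℕ} (hj : j < n) (hj' : j' < n)
    (hi1 : 1 ≤ i) (hi2 : i ≤ PP n) (hi1' : 1 ≤ i') (hi2' : i' ≤ PP n)
    (h : Mf n j i = Mf n j' i') : j = j' ∧ i = i' := by
  have hf := nonlin_facts (n := n) hj
  have hf' := nonlin_facts (n := n) hj'
  have hm := mzone_id n
  have hhid := hh_id n
  rcases (by omega : (1 ≤ i ∧ i ≤ HH n) ∨ (HH n < i ∧ i ≤ 2 * HH n) ∨ 2 * HH n < i)
    with ⟨a, b⟩ | ⟨a, b⟩ | a <;>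
  rcases (by omega : (1 ≤ i' ∧ i' ≤ HH n) ∨ (HH n < i' ∧ i' ≤ 2 * HH n) ∨ 2 * HH n < i')
    with ⟨a', b'⟩ | ⟨a', b'⟩ | a'
  · rw [Mf_p1 a b, Mf_p1 a' b'] at h
    have := block_inj (H := HH n) (show i - 1 < HH n by omega) (show i' - 1 < HH n by omega)
      (show j * HH n + (i - 1) = j' * HH n + (i' - 1) by omega)
    omega
  · exfalso
    have r1 := Mf_p1_range hj a b
    have r2 := Mf_p2_range hj' a' b'
    omega
  · exfalso
    have r1 := Mf_p1_range hj a b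
    have r2 := Mf_p3_range hj' a' hi2'
    omega
  · exfalso
    have r1 := Mf_p2_range hj a b
    have r2 := Mf_p1_range hj' a' b'
    omega
  · rw [Mf_p2 a b, Mf_p2 a' b'] at h
    have h' : j * HH n + (2 * HH n - i) = j' * HH n + (2 * HH n - i') := by omega
    have := block_inj (H := HH n) (show 2 * HH n - i < HH n by omega)
      (show 2 * HH n - i' < HH n by omega) h'
    omega
  · exfalso
    have r1 := Mf_p2_range hj a b
    have r2 := Mf_p3_range hj' a' hi2'
    omega
  · exfalso
    have r1 := Mf_p3_range hj a hi2
    have r2 := Mf_p1_range hj' a' b'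
    omega
  · exfalso
    have r1 := Mf_p3_range hj a hi2
    have r2 := Mf_p2_range hj' a' b'
    omega
  · rw [Mf_p3 a, Mf_p3 a'] at h
    omega

lemma Mf_surj {y : ℕ} (hn : 1 ≤ n) (hy1 : 1 ≤ y) (hy2 : y ≤ n * PP n) :
    ∃ j i, j < n ∧ 1 ≤ i ∧ i ≤ PP n ∧ Mf n j i = y := by
  have hm := mzone_id n
  have hhid := hh_id n
  by_cases hH : HH n = 0
  · have hnH : n * HH n = 0 := by rw [hH]; ring
    have hP2 : PP n % 2 = 1 := by
      by_contra hc
      have h0 : PP n % 2 = 0 := by omega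
      rw [h0] at hm
      omega
    have hPn : PP n % 2 * n = n := by rw [hP2]; ring
    refine ⟨y - 1, PP n, by omega, by omega, le_refl _, ?_⟩
    rw [Mf_p3 (by omega)]
    omega
  · have hHpos : 1 ≤ HH n := by omega
    by_cases hc1 : y ≤ n * HH n
    · -- piece 1
      have hjlt : (y - 1) / HH n < n := by
        apply Nat.div_lt_of_lt_mul
        calc y - 1 < n * HH n := by omega
        _ = HH n * n := by ring
      have hmod : (y - 1) % HH n < HH n := Nat.mod_lt _ hHpos
      refine ⟨(y - 1) / HH n, (y - 1) % HH n + 1, hjlt, by omega, by omega, ?_⟩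
      rw [Mf_p1 (by omega) (by omega)]
      have hdm := Nat.div_add_mod (y - 1) (HH n)
      have e : (y - 1) / HH n * HH n = HH n * ((y - 1) / HH n) := by ring
      omega
    · by_cases hc2 : y ≤ n * HH n + PP n % 2 * n
      · -- piece 3 (P odd)
        have hP2 : PP n % 2 = 1 := by
          by_contra hc
          have h0 : PP n % 2 = 0 := by omega
          rw [h0] at hc2
          simp at hc2
          omega
        have hPn : PP n % 2 * n = n := by rw [hP2]; ring
        refine ⟨y - n * HH n - 1, PP n, by omega, by omega, le_refl _, ?_⟩
        rw [Mf_p3 (by omega)]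
        omega
      · -- piece 2
        set z := n * PP n - y with hz
        have hzlt : z < n * HH n := by omega
        have hjlt : z / HH n < n := by
          apply Nat.div_lt_of_lt_mul
          calc z < n * HH n := hzlt
          _ = HH n * n := by ring
        have hmod : z % HH n < HH n := Nat.mod_lt _ hHpos
        have hdm := Nat.div_add_mod z (HH n)
        refine ⟨z / HH n, 2 * HH n - z % HH n, hjlt, by omega, by omega, ?_⟩
        rw [Mf_p2 (by omega) (by omega)]
        have e : (z / HH n + 1) * HH n = HH n * (z / HH n) + HH n := by ring
        have hdiv_le : (z / HH n + 1) * HH n ≤ n * HH n :=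
          Nat.mul_le_mul_right _ (by omega)
        omega

end Mlemmas

end SP
namespace SP
open Swap

section LabLemmas

variable {n o d o' d' : ℕ}

lemma succ_mod_eq (ho : o < n) : (o + 1) % n = if o + 1 = n then 0 else o + 1 := by
  split_ifs with h
  · rw [h, Nat.mod_self]
  · exact Nat.mod_eq_of_lt (by omega)

lemma succ_mod_lt (hn : 1 ≤ n) (ho : o < n) : (o + 1) % n < n := Nat.mod_lt _ (by omega)

lemma succ_mod_inj (ho : o < n) (ho' : o' < n) (h : (o + 1) % n = (o' + 1) % n) : o = o' := by
  rw [succ_mod_eq ho, succ_mod_eq ho'] at h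
  split_ifs at h <;> omega

/-- every residue has a predecessor -/
lemma succ_mod_surj {j : ℕ} (hn : 1 ≤ n) (hj : j < n) :
    ∃ o, o < n ∧ (o + 1) % n = j := by
  refine ⟨if j = 0 then n - 1 else j - 1, ?_, ?_⟩
  · split_ifs <;> omega
  · split_ifs with h
    · have : n - 1 + 1 = n := by omega
      rw [this, Nat.mod_self, h]
    · rw [succ_mod_eq (by omega)]
      split_ifs with h2 <;> omega

/-- type of a valid pair: even paired / odd paired / leftover / half -/
lemma valid_cases (hV : Valid n o d) :
    (1 ≤ d ∧ d ≤ 2 * PP n ∧ d % 2 = 0) ∨ (1 ≤ d ∧ d ≤ 2 * PP n ∧ d % 2 = 1) ∨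
    (d = qq n ∧ qq n % 2 = 1 ∧ 2 * PP n < d) ∨ (2 * d = n ∧ o < n / 2 ∧ 2 * PP n < d) := by
  obtain ⟨ho, hd1, hd2⟩ := hV
  have hq := qq_id n
  rcases hd2 with h | ⟨h, h2⟩
  · by_cases hc : d ≤ 2 * PP n
    · omega
    · right; right; left; omega
  · right; right; right
    refine ⟨h, h2, ?_⟩
    unfold PP qq at *
    omega

lemma lab_even_eq (h1 : 1 ≤ d) (h2 : d ≤ 2 * PP n) (h3 : d % 2 = 0) :
    lab n o d = Mf n ((o + 1) % n) (d / 2) := by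
  unfold lab; rw [if_pos h2, if_neg (by omega)]

lemma lab_odd_eq (h2 : d ≤ 2 * PP n) (h3 : d % 2 = 1) :
    lab n o d = eps n + 1 - Mf n o ((d + 1) / 2) := by
  unfold lab; rw [if_pos h2, if_pos h3]

lemma lab_left_eq (hn : 1 ≤ n) (h1 : d = qq n) (h3 : 2 * PP n < d) :
    lab n o d = n * PP n + 1 + o := by
  unfold lab
  rw [if_neg (by omega), if_neg ?_]
  have : 2 * qq n ≤ n - 1 := by unfold qq; omega
  omega

lemma lab_half_eq (h1 : 2 * d = n) (h3 : 2 * PP n < d) :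
    lab n o d = n * PP n + (qq n % 2) * n + 1 + o := by
  unfold lab
  rw [if_neg (by omega), if_pos h1]

-- zone ranges for valid pairs
lemma lab_even_range (ho : o < n) (hn : 1 ≤ n) (h1 : 1 ≤ d) (h2 : d ≤ 2 * PP n) (h3 : d % 2 = 0) :
    1 ≤ lab n o d ∧ lab n o d ≤ n * PP n := by
  rw [lab_even_eq h1 h2 h3]
  exact Mf_range (succ_mod_lt hn ho) (by omega) (by omega)

lemma lab_odd_range (ho : o < n) (h2 : d ≤ 2 * PP n) (h3 : d % 2 = 1) :
    eps n + 1 ≤ lab n o d + n * PP n ∧ lab n o d ≤ eps n := by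
  rw [lab_odd_eq h2 h3]
  have := Mf_range (n := n) (i := (d + 1) / 2) ho (by omega) (by omega)
  have hz := zone_id n
  omega

lemma lab_left_range (hn : 1 ≤ n) (ho : o < n) (h1 : d = qq n) (hq2 : qq n % 2 = 1)
    (h3 : 2 * PP n < d) :
    n * PP n + 1 ≤ lab n o d ∧ lab n o d ≤ n * PP n + (qq n % 2) * n := by
  rw [lab_left_eq hn h1 h3, hq2]
  omega

lemma lab_half_range (h1 : 2 * d = n) (ho : o < n / 2) (h3 : 2 * PP n < d) :
    n * PP n + (qq n % 2) * n + 1 ≤ lab n o d ∧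
      lab n o d ≤ n * PP n + (qq n % 2) * n + n / 2 := by
  rw [lab_half_eq h1 h3]
  omega

lemma lab_mem (hn : 1 ≤ n) (hV : Valid n o d) : 1 ≤ lab n o d ∧ lab n o d ≤ eps n := by
  have hz := zone_id n
  have ho := hV.1
  rcases valid_cases hV with ⟨a, b, c⟩ | ⟨a, b, c⟩ | ⟨a, b, c⟩ | ⟨a, b, c⟩
  · have := lab_even_range ho hn a b c; omega
  · have := lab_odd_range ho b c; omega
  · have := lab_left_range hn ho a b c
    have : (if n % 2 = 0 then n / 2 else 0) ≤ n / 2 := by split_ifs <;> omega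
    omega
  · have := lab_half_range a b c
    have he : n % 2 = 0 := by omega
    rw [he] at hz
    simp at hz
    omega

lemma lab_inj (hn : 1 ≤ n) (hV : Valid n o d) (hV' : Valid n o' d')
    (h : lab n o d = lab n o' d') : o = o' ∧ d = d' := by
  have hz := zone_id n
  have ho := hV.1
  have ho' := hV'.1
  have hhalf : (if n % 2 = 0 then n / 2 else 0) ≤ n / 2 := by split_ifs <;> omega
  rcases valid_cases hV with ⟨a, b, c⟩ | ⟨a, b, c⟩ | ⟨a, b, c⟩ | ⟨a, b, c⟩ <;>
  rcases valid_cases hV' with ⟨a', b', c'⟩ | ⟨a', b', c'⟩ | ⟨a', b', c'⟩ | ⟨a', b', c'⟩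
  -- even/even
  · have r := lab_even_range ho hn a b c
    rw [lab_even_eq a b c, lab_even_eq a' b' c'] at h
    have := Mf_inj (succ_mod_lt hn ho) (succ_mod_lt hn ho')
      (by omega) (by omega) (by omega) (by omega) h
    have := succ_mod_inj ho ho' this.1
    omega
  · exfalso
    have r := lab_even_range ho hn a b c
    have r' := lab_odd_range ho' b' c'
    omega
  · exfalso
    have r := lab_even_range ho hn a b c
    have r' := lab_left_range hn ho' a' b' c'
    omega
  · exfalso
    have r := lab_even_range ho hn a b c
    have r' := lab_half_range a' b' c'
    omega
  · exfalso
    have r := lab_odd_range ho b c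
    have r' := lab_even_range ho' hn a' b' c'
    omega
  -- odd/odd
  · rw [lab_odd_eq b c, lab_odd_eq b' c'] at h
    have m1 := Mf_range (n := n) (i := (d + 1) / 2) ho (by omega) (by omega)
    have m2 := Mf_range (n := n) (i := (d' + 1) / 2) ho' (by omega) (by omega)
    have hMM : Mf n o ((d + 1) / 2) = Mf n o' ((d' + 1) / 2) := by omega
    have := Mf_inj ho ho' (by omega) (by omega) (by omega) (by omega) hMM
    omega
  · exfalso
    have r := lab_odd_range ho b c
    have r' := lab_left_range hn ho' a' b' c'
    omega
  · exfalso
    have r := lab_odd_range ho b c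
    have r' := lab_half_range a' b' c'
    have he : n % 2 = 0 := by omega
    rw [he] at hz
    simp at hz
    omega
  · exfalso
    have r := lab_left_range hn ho a b c
    have r' := lab_even_range ho' hn a' b' c'
    omega
  · exfalso
    have r := lab_left_range hn ho a b c
    have r' := lab_odd_range ho' b' c'
    omega
  -- left/left
  · rw [lab_left_eq hn a c, lab_left_eq hn a' c'] at h
    omega
  · exfalso
    have r := lab_left_range hn ho a b c
    have r' := lab_half_range a' b' c'
    omega
  · exfalso
    have r := lab_half_range a b c
    have r' := lab_even_range ho' hn a' b' c'
    omega
  · exfalso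
    have r := lab_half_range a b c
    have r' := lab_odd_range ho' b' c'
    have he : n % 2 = 0 := by omega
    rw [he] at hz
    simp at hz
    omega
  · exfalso
    have r := lab_half_range a b c
    have r' := lab_left_range hn ho' a' b' c'
    omega
  -- half/half
  · rw [lab_half_eq a c, lab_half_eq a' c'] at h
    omega

lemma lab_surj {x : ℕ} (hn : 4 ≤ n) (hx1 : 1 ≤ x) (hx2 : x ≤ eps n) :
    ∃ o d, Valid n o d ∧ lab n o d = x := by
  have hz := zone_id n
  have hq := qq_id n
  have hq4 : 1 ≤ qq n := by unfold qq; omega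
  by_cases hc1 : x ≤ n * PP n
  · obtain ⟨j, i, hj, hi1, hi2, hM⟩ := Mf_surj (by omega) hx1 hc1
    obtain ⟨o, ho, hoj⟩ := succ_mod_surj (by omega) hj
    refine ⟨o, 2 * i, ⟨ho, by omega, Or.inl (by omega)⟩, ?_⟩
    rw [lab_even_eq (by omega) (by omega) (by omega), hoj]
    have : 2 * i / 2 = i := by omega
    rw [this, hM]
  · by_cases hc2 : x ≤ n * PP n + (qq n % 2) * n
    · have hq2 : qq n % 2 = 1 := by
        by_contra hcon
        have h0 : qq n % 2 = 0 := by omega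
        rw [h0] at hc2
        omega
      rw [hq2] at hc2
      refine ⟨x - n * PP n - 1, qq n, ⟨by omega, hq4, Or.inl (le_refl _)⟩, ?_⟩
      rw [lab_left_eq (by omega) rfl (by omega)]
      omega
    · by_cases hc3 : x ≤ n * PP n + (qq n % 2) * n + (if n % 2 = 0 then n / 2 else 0)
      · have he : n % 2 = 0 := by
          by_contra hcon
          have h1 : n % 2 = 1 := by omega
          rw [h1] at hc3
          simp at hc3
          omega
        rw [he] at hc3
        simp at hc3
        refine ⟨x - n * PP n - (qq n % 2) * n - 1, n / 2,
          ⟨by omega, by omega, Or.inr ⟨by omega, by omega⟩⟩, ?_⟩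
        rw [lab_half_eq (by omega) ?_]
        · omega
        · unfold PP qq at *; omega
      · -- odd zone
        have hy1 : 1 ≤ eps n + 1 - x := by omega
        have hy2 : eps n + 1 - x ≤ n * PP n := by omega
        obtain ⟨j, i, hj, hi1, hi2, hM⟩ := Mf_surj (by omega) hy1 hy2
        refine ⟨j, 2 * i - 1, ⟨hj, by omega, Or.inl (by omega)⟩, ?_⟩
        rw [lab_odd_eq (by omega) (by omega)]
        have : (2 * i - 1 + 1) / 2 = i := by omega
        rw [this, hM]
        omega

end LabLemmas

end SP
namespace SP
open Swap

def dd (n a b : ℕ) : ℕ := if a ≤ b then b - a else b + n - a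

def fpair (n : ℕ) (a b : Fin n) : ℕ :=
  if dd n a.val b.val = 0 then 0
  else if 2 * dd n a.val b.val < n then lab n a.val (dd n a.val b.val)
  else if 2 * dd n a.val b.val = n then lab n (min a.val b.val) (n / 2)
  else lab n b.val (n - dd n a.val b.val)

lemma mod2n {x n : ℕ} (hn : 0 < n) (h : x < 2 * n) :
    x % n = if x < n then x else x - n := by
  split_ifs with hc
  · exact Nat.mod_eq_of_lt hc
  · rw [Nat.mod_eq_sub_mod (by omega)]
    exact Nat.mod_eq_of_lt (by omega)

section FP
variable {n : ℕ} {a b : Fin n}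

lemma dd_lt (ha : a.val < n) (hb : b.val < n) : dd n a.val b.val < n := by
  unfold dd; split_ifs <;> omega

lemma dd_zero_iff : dd n a.val b.val = 0 ↔ a = b := by
  have ha := a.isLt; have hb := b.isLt
  unfold dd
  constructor
  · intro h; apply Fin.ext; split_ifs at h <;> omega
  · intro h; subst h; simp

lemma fpair_lt (h0 : dd n a.val b.val ≠ 0) (h : 2 * dd n a.val b.val < n) :
    fpair n a b = lab n a.val (dd n a.val b.val) := by
  unfold fpair; rw [if_neg h0, if_pos h]

lemma fpair_eqn (h0 : dd n a.val b.val ≠ 0) (h : 2 * dd n a.val b.val = n) :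
    fpair n a b = lab n (min a.val b.val) (n / 2) := by
  unfold fpair; rw [if_neg h0, if_neg (by omega), if_pos h]

lemma fpair_gt (h0 : dd n a.val b.val ≠ 0) (h : n < 2 * dd n a.val b.val) :
    fpair n a b = lab n b.val (n - dd n a.val b.val) := by
  unfold fpair; rw [if_neg h0, if_neg (by omega), if_neg (by omega)]

lemma fpair_comm (a b : Fin n) : fpair n a b = fpair n b a := by
  have ha := a.isLt; have hb := b.isLt
  by_cases hab : a = b
  · subst hab; rfl
  · have h0 : dd n a.val b.val ≠ 0 := fun h => hab (dd_zero_iff.mp h)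
    have h0' : dd n b.val a.val ≠ 0 := fun h => hab (dd_zero_iff.mp h).symm
    have hsw : dd n b.val a.val = n - dd n a.val b.val := by
      unfold dd; split_ifs <;> omega
    have hx := dd_lt (n := n) ha hb
    rcases (by omega : 2 * dd n a.val b.val < n ∨ 2 * dd n a.val b.val = n ∨
        (n < 2 * dd n a.val b.val)) with h | h | h
    · rw [fpair_lt h0 h, fpair_gt h0' (by omega)]
      rw [hsw, show n - (n - dd n a.val b.val) = dd n a.val b.val from by omega]
    · rw [fpair_eqn h0 h, fpair_eqn h0' (by omega), Nat.min_comm]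
    · rw [fpair_gt h0 h, fpair_lt h0' (by omega), hsw]

end FP

def tl (n : ℕ) : Sym2 (Fin n) → ℕ := Sym2.lift ⟨fun a b => fpair n a b, fpair_comm⟩

@[simp] lemma tl_mk {n : ℕ} (a b : Fin n) : tl n s(a, b) = fpair n a b := rfl

section Repr
variable {n : ℕ}

/-- the canonical edge of a valid pair -/
def edg (n : ℕ) (hn : 0 < n) (o d : ℕ) : Sym2 (Fin n) :=
  s(⟨o % n, Nat.mod_lt _ hn⟩, ⟨(o + d) % n, Nat.mod_lt _ hn⟩)

lemma edg_eval {o d : ℕ} (hn : 0 < n) (hV : Valid n o d) :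
    tl n (edg n hn o d) = lab n o d ∧ ¬ (edg n hn o d).IsDiag ∧
    (⟨o % n, Nat.mod_lt _ hn⟩ : Fin n) ∈ edg n hn o d := by
  obtain ⟨ho, hd1, hcase⟩ := hV
  have hdn : d ≤ n / 2 := by
    rcases hcase with h | h
    · unfold qq at h; omega
    · omega
  have homod : o % n = o := Nat.mod_eq_of_lt ho
  have hbmod : (o + d) % n = if o + d < n then o + d else o + d - n :=
    mod2n hn (by omega)
  set bv := (o + d) % n with hbv
  have hb : bv = if o + d < n then o + d else o + d - n := hbmod
  have hne : bv ≠ o := by split_ifs at hb <;> omega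
  have hdd : dd n o bv = d := by
    unfold dd; split_ifs at hb ⊢ <;> omega
  constructor
  · show fpair n _ _ = _
    have h0 : dd n (⟨o % n, Nat.mod_lt _ hn⟩ : Fin n).val
        (⟨bv, Nat.mod_lt _ hn⟩ : Fin n).val ≠ 0 := by
      show dd n (o % n) bv ≠ 0
      rw [homod, hdd]; omega
    rcases hcase with hc | hc
    · have h2 : 2 * d < n := by
        have h2q : 2 * qq n ≤ n - 1 := by unfold qq; omega
        omega
      rw [fpair_lt h0 (by show 2 * dd n (o % n) bv < n; rw [homod, hdd]; omega)]
      show lab n (o % n) (dd n (o % n) bv) = lab n o d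
      rw [homod, hdd]
    · have h2 : 2 * d = n := hc.1
      rw [fpair_eqn h0 (by show 2 * dd n (o % n) bv = n; rw [homod, hdd]; omega)]
      show lab n (min (o % n) bv) (n / 2) = lab n o d
      have hmin : min (o % n) bv = o := by
        rw [homod]
        have : o + d < n := by omega
        split_ifs at hb <;> omega
      rw [hmin, show n / 2 = d from by omega]
  constructor
  · unfold edg
    rw [Sym2.mk_isDiag_iff]
    intro hcon
    have h2 := congrArg Fin.val hcon
    simp only at h2
    rw [homod] at h2
    exact hne (by omega)
  · exact Sym2.mem_mk_left _ _

/-- decode an arbitrary non-diagonal edge -/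
lemma edge_repr {a b : Fin n} (hab : a ≠ b) :
    ∃ o d, Valid n o d ∧ fpair n a b = lab n o d ∧
      s(a, b) = edg n (by omega) o d := by
  have ha := a.isLt; have hb := b.isLt
  have hn : 0 < n := by omega
  have h0 : dd n a.val b.val ≠ 0 := fun h => hab (dd_zero_iff.mp h)
  have hx := dd_lt (n := n) ha hb
  have hq2 : 2 * qq n ≤ n - 1 := by unfold qq; omega
  have hddval : dd n a.val b.val = if a.val ≤ b.val then b.val - a.val
      else b.val + n - a.val := rfl
  rcases (by omega : 2 * dd n a.val b.val < n ∨ 2 * dd n a.val b.val = n ∨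
      (n < 2 * dd n a.val b.val)) with h | h | h
  · refine ⟨a.val, dd n a.val b.val, ⟨ha, by omega, Or.inl (by unfold qq; omega)⟩,
      fpair_lt h0 h, ?_⟩
    unfold edg
    have e1 : (⟨a.val % n, Nat.mod_lt _ hn⟩ : Fin n) = a := by
      apply Fin.ext; simp [Nat.mod_eq_of_lt ha]
    have e2 : (⟨(a.val + dd n a.val b.val) % n, Nat.mod_lt _ hn⟩ : Fin n) = b := by
      apply Fin.ext
      show (a.val + dd n a.val b.val) % n = b.val
      rw [mod2n hn (by omega)]
      split_ifs at hddval ⊢ <;> omega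
    rw [e1, e2]
  · -- half column
    refine ⟨min a.val b.val, n / 2, ⟨by omega, by omega, Or.inr ⟨by omega, ?_⟩⟩,
      fpair_eqn h0 h, ?_⟩
    · split_ifs at hddval <;> omega
    · unfold edg
      have e1 : (⟨min a.val b.val % n, Nat.mod_lt _ hn⟩ : Fin n) =
          (if a.val ≤ b.val then a else b) := by
        apply Fin.ext
        show min a.val b.val % n = _
        split_ifs with hc
        · rw [Nat.mod_eq_of_lt (by omega)]; omega
        · rw [Nat.mod_eq_of_lt (by omega)]; simp; omega
      have e2 : (⟨(min a.val b.val + n / 2) % n, Nat.mod_lt _ hn⟩ : Fin n) =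
          (if a.val ≤ b.val then b else a) := by
        apply Fin.ext
        show (min a.val b.val + n / 2) % n = _
        rw [mod2n hn (by omega)]
        split_ifs at hddval ⊢ <;> omega
      rw [e1, e2]
      split_ifs
      · rfl
      · exact Sym2.eq_swap
  · refine ⟨b.val, n - dd n a.val b.val, ⟨hb, by omega, Or.inl (by unfold qq; omega)⟩,
      fpair_gt h0 h, ?_⟩
    unfold edg
    have e1 : (⟨b.val % n, Nat.mod_lt _ hn⟩ : Fin n) = b := by
      apply Fin.ext; simp [Nat.mod_eq_of_lt hb]
    have e2 : (⟨(b.val + (n - dd n a.val b.val)) % n, Nat.mod_lt _ hn⟩ : Fin n) = a := by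
      apply Fin.ext
      show (b.val + (n - dd n a.val b.val)) % n = a.val
      rw [mod2n hn (by omega)]
      split_ifs at hddval ⊢ <;> omega
    rw [e1, e2]
    exact Sym2.eq_swap

/-- the labeling is an edge labeling -/
lemma tl_bijOn (hn : 9 ≤ n) : IsEdgeLabeling n (tl n) := by
  have hn0 : 0 < n := by omega
  constructor
  · -- MapsTo
    intro e he
    induction e with
    | _ a b =>
      have hab : a ≠ b := by
        simpa [Sym2.mk_isDiag_iff] using he
      obtain ⟨o, d, hV, heq, -⟩ := edge_repr hab
      have := lab_mem (by omega) hV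
      simp only [tl_mk, Set.mem_Icc]
      omega
  constructor
  · -- InjOn
    intro e he e' he' heq
    induction e with
    | _ a b =>
      induction e' with
      | _ a' b' =>
        have hab : a ≠ b := by simpa [Sym2.mk_isDiag_iff] using he
        have hab' : a' ≠ b' := by simpa [Sym2.mk_isDiag_iff] using he'
        obtain ⟨o, d, hV, hlab, hrep⟩ := edge_repr hab
        obtain ⟨o', d', hV', hlab', hrep'⟩ := edge_repr hab'
        simp only [tl_mk] at heq
        rw [hlab, hlab'] at heq
        obtain ⟨ho, hd⟩ := lab_inj (by omega) hV hV' heq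
        rw [hrep, hrep', ho, hd]
  · -- SurjOn
    intro x hx
    simp only [Set.mem_Icc] at hx
    obtain ⟨o, d, hV, hlab⟩ := lab_surj (by omega) hx.1 hx.2
    obtain ⟨heval, hnd, -⟩ := edg_eval hn0 hV
    exact ⟨edg n hn0 o d, hnd, by rw [heval, hlab]⟩

end Repr
end SP
namespace SP
open Swap

lemma sum_Icc_split (a b c : ℕ) (h1 : a ≤ b + 1) (h2 : b ≤ c) (f : ℕ → ℤ) :
    ∑ j ∈ Finset.Icc a c, f j = ∑ j ∈ Finset.Icc a b, f j + ∑ j ∈ Finset.Icc (b+1) c, f j := by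
  rw [← Finset.Ico_add_one_right_eq_Icc a c, ← Finset.Ico_add_one_right_eq_Icc a b, ← Finset.Ico_add_one_right_eq_Icc (b+1) c]
  exact (Finset.sum_Ico_consecutive f (by omega) (by omega)).symm

lemma pair_sum (f : ℕ → ℤ) (P : ℕ) :
    ∑ d ∈ Finset.Icc 1 (2*P), f d = ∑ i ∈ Finset.Icc 1 P, (f (2*i-1) + f (2*i)) := by
  induction P with
  | zero => simp
  | succ P ih =>
    have h1 : 2*(P+1) = (2*P+1) + 1 := by ring
    rw [h1, Finset.sum_Icc_succ_top (by omega), Finset.sum_Icc_succ_top (by omega),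
      Finset.sum_Icc_succ_top (by omega), ih]
    have e1 : 2*(P+1) - 1 = 2*P+1 := by omega
    have e2 : 2*(P+1) = 2*P+1+1 := by omega
    rw [e1, e2]
    ring

section SumD

variable {n : ℕ}

lemma Mf_sum_diff {j j' : ℕ} (hj : j < n) (hj' : j' < n) :
    ∑ i ∈ Finset.Icc 1 (PP n), ((Mf n j i : ℤ) - Mf n j' i)
      = (PP n % 2 : ℤ) * ((j : ℤ) - j') := by
  have hf := nonlin_facts (n := n) hj
  have hf' := nonlin_facts (n := n) hj'
  have hhid := hh_id n
  rw [sum_Icc_split 1 (HH n) (PP n) (by omega) (by omega),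
      sum_Icc_split (HH n + 1) (2 * HH n) (PP n) (by omega) (by omega)]
  have s1 : ∑ i ∈ Finset.Icc 1 (HH n), ((Mf n j i : ℤ) - Mf n j' i)
      = (HH n : ℤ) * (((j:ℤ) - j') * HH n) := by
    rw [Finset.sum_congr rfl (g := fun _ => ((j:ℤ) - j') * HH n) ?_]
    · rw [Finset.sum_const, Nat.card_Icc]
      simp [nsmul_eq_mul]
    · intro i hi
      simp only [Finset.mem_Icc] at hi
      rw [Mf_p1 hi.1 hi.2, Mf_p1 hi.1 hi.2]
      push_cast
      ring
  have s2 : ∑ i ∈ Finset.Icc (HH n + 1) (2 * HH n), ((Mf n j i : ℤ) - Mf n j' i)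
      = (HH n : ℤ) * (((j':ℤ) - j) * HH n) := by
    rw [Finset.sum_congr rfl (g := fun _ => ((j':ℤ) - j) * HH n) ?_]
    · rw [Finset.sum_const, Nat.card_Icc]
      have : 2 * HH n + 1 - (HH n + 1) = HH n := by omega
      rw [this]
      simp [nsmul_eq_mul]
    · intro i hi
      simp only [Finset.mem_Icc] at hi
      rw [Mf_p2 (by omega) hi.2, Mf_p2 (by omega) hi.2]
      have c1 : ((n * PP n - (j + 1) * HH n + (i - HH n) : ℕ) : ℤ)
          = (n:ℤ) * PP n - ((j:ℤ) + 1) * HH n + ((i:ℤ) - HH n) := by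
        push_cast [Nat.cast_sub (show (j+1) * HH n ≤ n * PP n by omega),
          Nat.cast_sub (show HH n ≤ i by omega)]
        ring
      have c2 : ((n * PP n - (j' + 1) * HH n + (i - HH n) : ℕ) : ℤ)
          = (n:ℤ) * PP n - ((j':ℤ) + 1) * HH n + ((i:ℤ) - HH n) := by
        push_cast [Nat.cast_sub (show (j'+1) * HH n ≤ n * PP n by omega),
          Nat.cast_sub (show HH n ≤ i by omega)]
        ring
      rw [c1, c2]
      ring
  have s3 : ∑ i ∈ Finset.Icc (2 * HH n + 1) (PP n), ((Mf n j i : ℤ) - Mf n j' i)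
      = (PP n % 2 : ℤ) * ((j : ℤ) - j') := by
    rw [Finset.sum_congr rfl (g := fun _ => (j:ℤ) - j') ?_]
    · rw [Finset.sum_const, Nat.card_Icc]
      have : PP n + 1 - (2 * HH n + 1) = PP n % 2 := by omega
      rw [this]
      simp [nsmul_eq_mul]
    · intro i hi
      simp only [Finset.mem_Icc] at hi
      rw [Mf_p3 (by omega), Mf_p3 (by omega)]
      push_cast
      ring
  rw [s1, s2, s3]
  ring

-- cast evaluations of lab for paired columns
lemma lab_odd_cast {o i : ℕ} (ho : o < n) (hi1 : 1 ≤ i) (hi2 : i ≤ PP n) :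
    (lab n o (2*i-1) : ℤ) = (eps n : ℤ) + 1 - Mf n o i := by
  have hm := Mf_range (n := n) (i := i) ho hi1 hi2
  have hz := zone_id n
  have h1 : (2*i-1) % 2 = 1 := by omega
  have h2 : 2*i-1 ≤ 2 * PP n := by omega
  rw [lab_odd_eq h2 h1]
  have h3 : (2*i-1+1)/2 = i := by omega
  rw [h3]
  have hle : Mf n o i ≤ eps n + 1 := by omega
  push_cast [Nat.cast_sub hle]
  ring

lemma lab_even_cast {o i : ℕ} (ho : o < n) (hn : 1 ≤ n) (hi1 : 1 ≤ i) (hi2 : i ≤ PP n) :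
    (lab n o (2*i) : ℤ) = Mf n ((o+1) % n) i := by
  have h1 : (2*i) % 2 = 0 := by omega
  rw [lab_even_eq (by omega) (by omega) h1]
  have h3 : 2*i/2 = i := by omega
  rw [h3]

/-- owned-column pair sum -/
lemma owned_pairs (hn : 9 ≤ n) {vv : ℕ} (hv : vv < n) :
    ∑ d ∈ Finset.Icc 1 (2 * PP n), (lab n vv d : ℤ)
      = (PP n) * ((eps n : ℤ) + 1) + (PP n % 2 : ℤ) * (((vv+1) % n : ℤ) - vv) := by
  rw [pair_sum]
  have step : ∀ i ∈ Finset.Icc 1 (PP n),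
      ((lab n vv (2*i-1) : ℤ) + lab n vv (2*i))
      = ((eps n : ℤ) + 1) + ((Mf n ((vv+1) % n) i : ℤ) - Mf n vv i) := by
    intro i hi
    simp only [Finset.mem_Icc] at hi
    rw [lab_odd_cast hv hi.1 hi.2, lab_even_cast hv (by omega) hi.1 hi.2]
    ring
  rw [Finset.sum_congr rfl step, Finset.sum_add_distrib,
    Mf_sum_diff (Nat.mod_lt _ (by omega)) hv, Finset.sum_const, Nat.card_Icc]
  simp [nsmul_eq_mul]

/-- received-column pair sum : exact cancellation -/
lemma recv_pairs (hn : 9 ≤ n) {vv : ℕ} (hv : vv < n) :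
    ∑ d ∈ Finset.Icc 1 (2 * PP n), (lab n ((vv + (n - d)) % n) d : ℤ)
      = (PP n) * ((eps n : ℤ) + 1) := by
  rw [pair_sum]
  have hq2 : 2 * PP n ≤ qq n := by unfold PP; omega
  have hq3 : 2 * qq n ≤ n - 1 := by unfold qq; omega
  have step : ∀ i ∈ Finset.Icc 1 (PP n),
      ((lab n ((vv + (n - (2*i-1))) % n) (2*i-1) : ℤ) + lab n ((vv + (n - 2*i)) % n) (2*i))
      = ((eps n : ℤ) + 1) := by
    intro i hi
    simp only [Finset.mem_Icc] at hi
    have hi2n : 2 * i ≤ n := by omega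
    have hj1lt : (vv + (n - (2*i-1))) % n < n := Nat.mod_lt _ (by omega)
    have hj2lt : (vv + (n - 2*i)) % n < n := Nat.mod_lt _ (by omega)
    rw [lab_odd_cast hj1lt hi.1 hi.2, lab_even_cast hj2lt (by omega) hi.1 hi.2]
    have hkey : ((vv + (n - 2*i)) % n + 1) % n = (vv + (n - (2*i-1))) % n := by
      have e1 : vv + (n - (2*i-1)) = (vv + (n - 2*i)) + 1 := by omega
      have h1n : 1 % n = 1 := Nat.mod_eq_of_lt (by omega)
      rw [e1, Nat.add_mod (vv + (n - 2*i)) 1 n, h1n]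
    rw [hkey]
    have hm := Mf_range (n := n) (i := i) hj1lt hi.1 hi.2
    ring
  rw [Finset.sum_congr rfl step, Finset.sum_const, Nat.card_Icc]
  simp [nsmul_eq_mul]

end SumD
end SP
namespace SP
open Swap

section SumE

variable {n : ℕ}

def vplus (v : Fin n) (j : ℕ) : Fin n := ⟨(v.val + j) % n, Nat.mod_lt _ v.pos⟩

lemma vplus_val (v : Fin n) (j : ℕ) : (vplus v j).val = (v.val + j) % n := rfl

lemma vplus_cases (v : Fin n) {j : ℕ} (hj : j ≤ n - 1) :
    (vplus v j).val = if v.val + j < n then v.val + j else v.val + j - n := by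
  have := v.isLt
  rw [vplus_val]
  exact mod2n v.pos (by omega)

lemma vplus_ne (v : Fin n) {j : ℕ} (hj1 : 1 ≤ j) (hj2 : j ≤ n - 1) : vplus v j ≠ v := by
  have h := vplus_cases v hj2
  have := v.isLt
  intro hc
  have hval : (vplus v j).val = v.val := congrArg Fin.val hc
  split_ifs at h <;> omega

lemma dd_vplus (v : Fin n) {j : ℕ} (hj1 : 1 ≤ j) (hj2 : j ≤ n - 1) :
    dd n v.val (vplus v j).val = j := by
  have h := vplus_cases v hj2
  have := v.isLt
  unfold dd
  split_ifs at h ⊢ <;> omega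

lemma reindex (hn : 2 ≤ n) (v : Fin n) :
    labelSum n (tl n) v = ∑ j ∈ Finset.Icc 1 (n-1), (fpair n v (vplus v j) : ℤ) := by
  unfold labelSum
  symm
  apply Finset.sum_bij (fun j _ => s(v, vplus v j))
  · intro j hj
    simp only [Finset.mem_Icc] at hj
    unfold incEdges
    rw [Finset.mem_filter]
    refine ⟨Finset.mem_univ _, Sym2.mem_mk_left _ _, ?_⟩
    rw [Sym2.mk_isDiag_iff]
    exact fun hc => vplus_ne v hj.1 hj.2 hc.symm
  · intro j1 h1 j2 h2 heq
    simp only [Finset.mem_Icc] at h1 h2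
    rw [Sym2.eq_iff] at heq
    have hv : (vplus v j1).val = (vplus v j2).val := by
      rcases heq with ⟨-, h⟩ | ⟨h, h'⟩
      · rw [h]
      · exfalso; exact vplus_ne v h2.1 h2.2 h.symm
    have e1 := vplus_cases v h1.2
    have e2 := vplus_cases v h2.2
    rw [hv] at e1
    split_ifs at e1 e2 <;> omega
  · intro e he
    unfold incEdges at he
    rw [Finset.mem_filter] at he
    obtain ⟨-, hv, hnd⟩ := he
    induction e with
    | _ x y =>
      have hxy : x ≠ y := by simpa [Sym2.mk_isDiag_iff] using hnd
      rw [Sym2.mem_iff] at hv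
      -- u := the other endpoint
      have main : ∀ u : Fin n, u ≠ v → s(x, y) = s(v, u) →
          ∃ j, ∃ _ : j ∈ Finset.Icc 1 (n-1), s(v, vplus v j) = s(x, y) := by
        intro u hu hequ
        have hx := v.isLt
        have hu2 := u.isLt
        have h0 : dd n v.val u.val ≠ 0 := fun h => hu (dd_zero_iff.mp h).symm
        have hlt : dd n v.val u.val < n := dd_lt v.isLt u.isLt
        refine ⟨dd n v.val u.val, Finset.mem_Icc.mpr ⟨by omega, by omega⟩, ?_⟩
        have hvp : vplus v (dd n v.val u.val) = u := by
          apply Fin.ext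
          rw [vplus_cases v (by omega)]
          unfold dd at *
          split_ifs at * <;> omega
        rw [hequ, hvp]
      rcases hv with h | h
      · exact main y (fun hc => hxy (h.symm ▸ hc.symm ▸ rfl)) (by rw [h])
      · refine main x ?_ ?_
        · intro hc; exact hxy (by rw [hc, ← h])
        · rw [h]; exact Sym2.eq_swap
  · intro j hj
    rfl

lemma F_owned (v : Fin n) {j : ℕ} (hj1 : 1 ≤ j) (hj2 : 2 * j < n) :
    fpair n v (vplus v j) = lab n v.val j := by
  have hd := dd_vplus v hj1 (by omega)
  rw [fpair_lt (by omega) (by omega), hd]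

lemma F_recv (v : Fin n) {j : ℕ} (hj2 : n < 2 * j) (hj3 : j ≤ n - 1) :
    fpair n v (vplus v j) = lab n ((v.val + j) % n) (n - j) := by
  have hd := dd_vplus v (by omega) hj3
  rw [fpair_gt (by omega) (by omega), hd, vplus_val]

lemma F_half (v : Fin n) {j : ℕ} (hj : 2 * j = n) (hn : 2 ≤ n) :
    fpair n v (vplus v j) = lab n (min v.val ((v.val + j) % n)) (n / 2) := by
  have hd := dd_vplus v (j := j) (by omega) (by omega)
  rw [fpair_eqn (by omega) (by omega), vplus_val]

def CC (n : ℕ) : ℤ :=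
  (PP n : ℤ) * ((eps n : ℤ) + 1) + (PP n : ℤ) * ((eps n : ℤ) + 1)
  + ((qq n : ℤ) % 2) * ((n : ℤ) * (PP n : ℤ) + 1) + ((qq n : ℤ) % 2) * ((n : ℤ) * (PP n : ℤ) + 1)
  + (if n % 2 = 0 then ((n : ℤ) * (PP n : ℤ) + ((qq n : ℤ) % 2) * (n : ℤ) + 1) else 0)

lemma labelSum_near (hn : 9 ≤ n) (v : Fin n) :
    CC n - n ≤ labelSum n (tl n) v ∧ labelSum n (tl n) v ≤ CC n + 4 * n := by
  have hvlt := v.isLt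
  have hq2 : 2 * qq n ≤ n - 1 := by unfold qq; omega
  have hq1 : 2 ≤ qq n := by unfold qq; omega
  have hP2 : 2 * PP n ≤ qq n := by unfold PP; omega
  have hqid := qq_id n
  rw [reindex (by omega) v]
  rw [sum_Icc_split 1 (qq n) (n-1) (by omega) (by omega)]
  -- owned part
  have howned : ∑ j ∈ Finset.Icc 1 (qq n), (fpair n v (vplus v j) : ℤ)
      = (PP n : ℤ) * ((eps n : ℤ) + 1)
        + ((PP n : ℤ) % 2) * ((((v.val : ℤ) + 1) % (n : ℤ)) - (v.val : ℤ))
        + ((qq n : ℤ) % 2) * ((n : ℤ) * (PP n : ℤ) + 1 + (v.val : ℤ)) := by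
    have hcong : ∀ j ∈ Finset.Icc 1 (qq n),
        (fpair n v (vplus v j) : ℤ) = (lab n v.val j : ℤ) := by
      intro j hj
      simp only [Finset.mem_Icc] at hj
      rw [F_owned v hj.1 (by omega)]
    rw [Finset.sum_congr rfl hcong,
      sum_Icc_split 1 (2 * PP n) (qq n) (by omega) (by omega),
      owned_pairs hn hvlt]
    have hcast1 : ((PP n % 2 : ℕ) : ℤ) = (PP n : ℤ) % 2 := by push_cast; ring
    have hcast2 : (((v.val + 1) % n : ℕ) : ℤ) = ((v.val : ℤ) + 1) % (n : ℤ) := by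
      push_cast; ring
    rcases (by omega : qq n % 2 = 0 ∨ qq n % 2 = 1) with h | h
    · have he : 2 * PP n = qq n := by omega
      have hzq : (qq n : ℤ) % 2 = 0 := by omega
      rw [he, hzq]
      have hemp : Finset.Icc (qq n + 1) (qq n) = (∅ : Finset ℕ) := by
        rw [Finset.Icc_eq_empty_iff]; omega
      rw [hemp]
      push_cast
      ring
    · have he : 2 * PP n + 1 = qq n := by omega
      have hzq : (qq n : ℤ) % 2 = 1 := by omega
      rw [he, hzq, Finset.Icc_self, Finset.sum_singleton,
        lab_left_eq (by omega) rfl (by omega)]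
      push_cast
      ring
  -- received part reindex
  have hrecv0 : ∑ j ∈ Finset.Icc (n - qq n) (n-1), (fpair n v (vplus v j) : ℤ)
      = ∑ d ∈ Finset.Icc 1 (qq n), (lab n ((v.val + (n - d)) % n) d : ℤ) := by
    apply Finset.sum_nbij' (i := fun j => n - j) (j := fun d => n - d)
    · intro a ha; simp only [Finset.mem_Icc] at *; omega
    · intro a ha; simp only [Finset.mem_Icc] at *; omega
    · intro a ha; simp only [Finset.mem_Icc] at *; omega
    · intro a ha; simp only [Finset.mem_Icc] at *; omega
    · intro j hj
      simp only [Finset.mem_Icc] at hj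
      rw [F_recv v (by omega) (by omega)]
      rw [show n - (n - j) = j from by omega]
  have hrecv : ∑ d ∈ Finset.Icc 1 (qq n), (lab n ((v.val + (n - d)) % n) d : ℤ)
      = (PP n : ℤ) * ((eps n : ℤ) + 1)
        + ((qq n : ℤ) % 2) * ((n : ℤ) * (PP n : ℤ) + 1
            + (((v.val + (n - qq n)) % n : ℕ) : ℤ)) := by
    rw [sum_Icc_split 1 (2 * PP n) (qq n) (by omega) (by omega), recv_pairs hn hvlt]
    rcases (by omega : qq n % 2 = 0 ∨ qq n % 2 = 1) with h | h
    · have he : 2 * PP n = qq n := by omega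
      have hzq : (qq n : ℤ) % 2 = 0 := by omega
      rw [he, hzq]
      have hemp : Finset.Icc (qq n + 1) (qq n) = (∅ : Finset ℕ) := by
        rw [Finset.Icc_eq_empty_iff]; omega
      rw [hemp]
      simp
    · have he : 2 * PP n + 1 = qq n := by omega
      have hzq : (qq n : ℤ) % 2 = 1 := by omega
      rw [he, hzq, Finset.Icc_self, Finset.sum_singleton,
        lab_left_eq (by omega) rfl (by omega)]
      push_cast
      ring
  -- generalize the residue quantities
  obtain ⟨X, hX0, hXn, hXe⟩ : ∃ X : ℤ, 0 ≤ X ∧ X < n ∧ ((v.val : ℤ) + 1) % (n : ℤ) = X :=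
    ⟨_, Int.emod_nonneg _ (by omega), Int.emod_lt_of_pos _ (by omega), rfl⟩
  obtain ⟨R, hR0, hRn, hRe⟩ : ∃ R : ℤ, 0 ≤ R ∧ R ≤ (n : ℤ) - 1 ∧
      (((v.val + (n - qq n)) % n : ℕ) : ℤ) = R := by
    have h1 : ((v.val + (n - qq n)) % n) < n := Nat.mod_lt _ (by omega)
    exact ⟨_, by omega, by omega, rfl⟩
  rw [hXe] at howned
  rw [hRe] at hrecv
  rw [howned]
  have hVz : (0:ℤ) ≤ (v.val : ℤ) ∧ (v.val : ℤ) ≤ (n : ℤ) - 1 := by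
    constructor <;> omega
  rcases (by omega : n % 2 = 1 ∨ n % 2 = 0) with hpar | hpar
  · -- n odd : no half column, and q+1 = n-q
    have hqn : qq n + 1 = n - qq n := by unfold qq; omega
    rw [hqn, hrecv0, hrecv]
    unfold CC
    rw [hpar]
    norm_num
    rcases (by omega : qq n % 2 = 0 ∨ qq n % 2 = 1) with h | h <;>
      rcases (by omega : PP n % 2 = 0 ∨ PP n % 2 = 1) with h2 | h2 <;>
      [(have hzq : (qq n : ℤ) % 2 = 0 := by omega);
       (have hzq : (qq n : ℤ) % 2 = 0 := by omega);
       (have hzq : (qq n : ℤ) % 2 = 1 := by omega);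
       (have hzq : (qq n : ℤ) % 2 = 1 := by omega)] <;>
      [(have hzp : (PP n : ℤ) % 2 = 0 := by omega);
       (have hzp : (PP n : ℤ) % 2 = 1 := by omega);
       (have hzp : (PP n : ℤ) % 2 = 0 := by omega);
       (have hzp : (PP n : ℤ) % 2 = 1 := by omega)] <;>
      rw [hzq, hzp] <;>
      constructor <;> omega
  · -- n even : half column at j = q+1 = n/2
    have hqn : qq n + 2 = n - qq n := by unfold qq; omega
    have hhalf : 2 * (qq n + 1) = n := by unfold qq; omega
    rw [sum_Icc_split (qq n + 1) (qq n + 1) (n - 1) (by omega) (by omega),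
      Finset.Icc_self, Finset.sum_singleton]
    rw [F_half v hhalf (by omega)]
    have hmvlt : min v.val ((v.val + (qq n + 1)) % n) < n / 2 := by
      have hm2 := mod2n (n := n) (x := v.val + (qq n + 1)) (by omega) (by omega)
      rcases (by omega : v.val < n / 2 ∨ n / 2 ≤ v.val) with h | h
      · have : min v.val ((v.val + (qq n + 1)) % n) ≤ v.val := min_le_left _ _
        omega
      · have : min v.val ((v.val + (qq n + 1)) % n) ≤ (v.val + (qq n + 1)) % n :=
          min_le_right _ _
        split_ifs at hm2 <;> omega
    rw [lab_half_eq (by omega) (by unfold PP; omega)]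
    obtain ⟨MV, hM0, hMn, hMe⟩ : ∃ MV : ℤ, 0 ≤ MV ∧ 2 * MV ≤ (n : ℤ) ∧
        ((min v.val ((v.val + (qq n + 1)) % n) : ℕ) : ℤ) = MV := by
      refine ⟨_, by omega, ?_, rfl⟩
      have : 2 * (n / 2) ≤ n := by omega
      omega
    have hcast : ((n * PP n + qq n % 2 * n + 1 + min v.val ((v.val + (qq n + 1)) % n) : ℕ) : ℤ)
        = (n : ℤ) * (PP n : ℤ) + ((qq n : ℤ) % 2) * (n : ℤ) + 1
          + ((min v.val ((v.val + (qq n + 1)) % n) : ℕ) : ℤ) := by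
      push_cast
      ring
    rw [show qq n + 1 + 1 = n - qq n from by omega, hrecv0, hrecv, hcast, hMe]
    unfold CC
    rw [hpar]
    norm_num
    rcases (by omega : qq n % 2 = 0 ∨ qq n % 2 = 1) with h | h <;>
      rcases (by omega : PP n % 2 = 0 ∨ PP n % 2 = 1) with h2 | h2 <;>
      [(have hzq : (qq n : ℤ) % 2 = 0 := by omega);
       (have hzq : (qq n : ℤ) % 2 = 0 := by omega);
       (have hzq : (qq n : ℤ) % 2 = 1 := by omega);
       (have hzq : (qq n : ℤ) % 2 = 1 := by omega)] <;>
      [(have hzp : (PP n : ℤ) % 2 = 0 := by omega);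
       (have hzp : (PP n : ℤ) % 2 = 1 := by omega);
       (have hzp : (PP n : ℤ) % 2 = 0 := by omega);
       (have hzp : (PP n : ℤ) % 2 = 1 := by omega)] <;>
      rw [hzq, hzp] <;>
      constructor <;> omega

lemma almost (hn : 9 ≤ n) : AlmostSupermagic n (7 * n) (tl n) := by
  refine ⟨tl_bijOn hn, ?_⟩
  intro u v
  have h1 := labelSum_near hn u
  have h2 := labelSum_near hn v
  rw [abs_le]
  have hc : ((7 * n : ℕ) : ℤ) = 7 * (n : ℤ) := by push_cast; ring
  rw [hc]
  constructor <;> omega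

end SumE
end SP
namespace SP
open Swap

def ND (n : ℕ) : Finset (Sym2 (Fin n)) :=
  Finset.univ.filter fun e => ¬ e.IsDiag

lemma mem_ND {n : ℕ} {e : Sym2 (Fin n)} : e ∈ ND n ↔ ¬ e.IsDiag := by
  unfold ND; simp

section Prefix

variable {n p : ℕ} {t t' : Sym2 (Fin n) → ℕ}

/-- comparing a near-interval set with an interval -/
lemma image_sub_bound {B : Finset ℕ} {m c : ℕ} (hBcard : B.card = m)
    (hB1 : ∀ x ∈ B, 1 ≤ x) (hBup : ∀ x ∈ B, x ≤ m + c)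
    (hBlow : Finset.Icc 1 (m - c) ⊆ B) :
    |∑ x ∈ B, (x : ℤ) - ∑ x ∈ Finset.Icc 1 m, (x : ℤ)| ≤ 2 * (c : ℤ)^2 := by
  set I := Finset.Icc 1 m with hI
  have hIcard : I.card = m := by rw [hI, Nat.card_Icc]; omega
  have hsB := Finset.sum_inter_add_sum_sdiff B I (fun x => (x : ℤ))
  have hsI := Finset.sum_inter_add_sum_sdiff I B (fun x => (x : ℤ))
  have hcB := Finset.card_filter_add_card_filter_not
    (s := B) (p := fun x => x ∈ I)
  -- cards of the two difference sets agree
  have hBI : B ∩ I = I ∩ B := Finset.inter_comm _ _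
  have hcard1 : (B \ I).card + (B ∩ I).card = m := by
    rw [Finset.card_sdiff_add_card_inter, hBcard]
  have hcard2 : (I \ B).card + (I ∩ B).card = m := by
    rw [Finset.card_sdiff_add_card_inter, hIcard]
  have hr : (B \ I).card = (I \ B).card := by
    rw [hBI] at hcard1; omega
  set r := (B \ I).card with hrdef
  -- bound r ≤ c
  have hBd_sub : B \ I ⊆ Finset.Icc (m + 1) (m + c) := by
    intro x hx
    rw [Finset.mem_sdiff] at hx
    obtain ⟨hxB, hxI⟩ := hx
    rw [hI, Finset.mem_Icc] at hxI
    rw [Finset.mem_Icc]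
    have := hB1 x hxB
    have := hBup x hxB
    omega
  have hrc : r ≤ c := by
    have := Finset.card_le_card hBd_sub
    rw [Nat.card_Icc] at this
    omega
  -- elements of I \ B are > m - c
  have hId_sub : ∀ x ∈ I \ B, m - c + 1 ≤ x ∧ x ≤ m := by
    intro x hx
    rw [Finset.mem_sdiff, hI, Finset.mem_Icc] at hx
    obtain ⟨⟨h1, h2⟩, hxB⟩ := hx
    refine ⟨?_, h2⟩
    by_contra hc
    exact hxB (hBlow (Finset.mem_Icc.mpr ⟨h1, by omega⟩))
  -- sum bounds
  have hub1 : ∑ x ∈ B \ I, (x : ℤ) ≤ r * ((m : ℤ) + c) := by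
    calc ∑ x ∈ B \ I, (x : ℤ) ≤ (B \ I).card • ((m : ℤ) + c) := by
          apply Finset.sum_le_card_nsmul
          intro x hx
          have := hBd_sub hx
          rw [Finset.mem_Icc] at this
          have h1 : (x : ℤ) ≤ (m : ℤ) + c := by exact_mod_cast this.2
          exact h1
    _ = r * ((m : ℤ) + c) := by rw [← hrdef, nsmul_eq_mul]
  have hlb1 : (r : ℤ) * ((m : ℤ) + 1) ≤ ∑ x ∈ B \ I, (x : ℤ) := by
    calc (r:ℤ) * ((m : ℤ) + 1) = (B \ I).card • ((m : ℤ) + 1) := by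
          rw [← hrdef, nsmul_eq_mul]
    _ ≤ ∑ x ∈ B \ I, (x : ℤ) := by
          apply Finset.card_nsmul_le_sum
          intro x hx
          have := hBd_sub hx
          rw [Finset.mem_Icc] at this
          exact_mod_cast this.1
  have hub2 : ∑ x ∈ I \ B, (x : ℤ) ≤ r * (m : ℤ) := by
    calc ∑ x ∈ I \ B, (x : ℤ) ≤ (I \ B).card • (m : ℤ) := by
          apply Finset.sum_le_card_nsmul
          intro x hx
          exact_mod_cast (hId_sub x hx).2
    _ = r * (m : ℤ) := by rw [← hr, nsmul_eq_mul]
  have hlb2 : (r : ℤ) * ((m : ℤ) - c + 1) ≤ ∑ x ∈ I \ B, (x : ℤ) := by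
    have hlow : ∀ x ∈ I \ B, ((m : ℤ) - c + 1) ≤ (x : ℤ) := by
      intro x hx
      have h := (hId_sub x hx).1
      have h2 : ((m - c + 1 : ℕ) : ℤ) ≤ (x : ℤ) := by exact_mod_cast h
      have h3 : (m : ℤ) - c + 1 ≤ ((m - c + 1 : ℕ) : ℤ) := by
        push_cast
        omega
      omega
    calc (r:ℤ) * ((m : ℤ) - c + 1) = (I \ B).card • ((m : ℤ) - c + 1) := by
          rw [← hr, nsmul_eq_mul]
    _ ≤ ∑ x ∈ I \ B, (x : ℤ) := Finset.card_nsmul_le_sum _ _ _ hlow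
  -- assemble
  have hkey : ∑ x ∈ B, (x : ℤ) - ∑ x ∈ I, (x : ℤ)
      = ∑ x ∈ B \ I, (x : ℤ) - ∑ x ∈ I \ B, (x : ℤ) := by
    rw [← hsB, ← hsI, hBI]
    ring
  rw [hkey]
  have hrz : (0 : ℤ) ≤ r := by positivity
  have hrc' : (r : ℤ) ≤ c := by exact_mod_cast hrc
  rw [abs_le]
  constructor <;> nlinarith [hub1, hlb1, hub2, hlb2]

/-- the fundamental prefix displacement bound -/
lemma prefix_bound (hn : 9 ≤ n)
    (ht : IsEdgeLabeling n t) (ht' : IsEdgeLabeling n t')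
    (hp : ∀ e : Sym2 (Fin n), ¬ e.IsDiag → |(t' e : ℤ) - (t e : ℤ)| ≤ (p : ℤ)) (b : ℕ) :
    |∑ e ∈ (ND n).filter (fun e => t e ≤ b), ((t' e : ℤ) - (t e : ℤ))| ≤ 2 * (p : ℤ)^2 := by
  classical
  set m := min b (eps n) with hm
  set S := (ND n).filter (fun e => t e ≤ b) with hS
  have hSnd : ∀ e ∈ S, ¬ e.IsDiag := by
    intro e he
    rw [hS, Finset.mem_filter] at he
    exact mem_ND.mp he.1
  have htmem : ∀ e ∈ S, 1 ≤ t e ∧ t e ≤ eps n ∧ t e ≤ b := by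
    intro e he
    have h1 := ht.1 (hSnd e he)
    rw [Set.mem_Icc] at h1
    rw [hS, Finset.mem_filter] at he
    exact ⟨h1.1, h1.2, he.2⟩
  -- image of S under t is Icc 1 m
  have hA : S.image t = Finset.Icc 1 m := by
    apply Finset.ext
    intro x
    rw [Finset.mem_image, Finset.mem_Icc]
    constructor
    · rintro ⟨e, he, rfl⟩
      have := htmem e he
      omega
    · rintro ⟨h1, h2⟩
      obtain ⟨e, hend, hte⟩ := ht.2.2 (Set.mem_Icc.mpr ⟨h1, by omega⟩)
      refine ⟨e, ?_, hte⟩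
      rw [hS, Finset.mem_filter, mem_ND]
      exact ⟨hend, by omega⟩
  have htinj : ∀ x ∈ S, ∀ y ∈ S, t x = t y → x = y := by
    intro x hx y hy hxy
    exact ht.2.1 (hSnd x hx) (hSnd y hy) hxy
  have ht'inj : ∀ x ∈ S, ∀ y ∈ S, t' x = t' y → x = y := by
    intro x hx y hy hxy
    exact ht'.2.1 (hSnd x hx) (hSnd y hy) hxy
  have hScard : S.card = m := by
    have h1 : (S.image t).card = S.card := Finset.card_image_of_injOn htinj
    rw [hA, Nat.card_Icc] at h1
    omega
  -- sums via images
  have hsum_t : ∑ e ∈ S, (t e : ℤ) = ∑ x ∈ Finset.Icc 1 m, (x : ℤ) := by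
    rw [← hA, Finset.sum_image htinj]
  have hsum_t' : ∑ e ∈ S, (t' e : ℤ) = ∑ x ∈ S.image t', (x : ℤ) := by
    rw [Finset.sum_image ht'inj]
  set B := S.image t' with hB
  have hBcard : B.card = m := by
    rw [hB, Finset.card_image_of_injOn ht'inj, hScard]
  have hB1 : ∀ x ∈ B, 1 ≤ x := by
    intro x hx
    rw [hB, Finset.mem_image] at hx
    obtain ⟨e, he, rfl⟩ := hx
    have := ht'.1 (hSnd e he)
    rw [Set.mem_Icc] at this
    exact this.1
  have hBup : ∀ x ∈ B, x ≤ m + p := by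
    intro x hx
    rw [hB, Finset.mem_image] at hx
    obtain ⟨e, he, rfl⟩ := hx
    have h1 := hp e (hSnd e he)
    have h2 := htmem e he
    rw [abs_le] at h1
    omega
  have hBlow : Finset.Icc 1 (m - p) ⊆ B := by
    intro x hx
    rw [Finset.mem_Icc] at hx
    obtain ⟨e, hend, hte⟩ := ht'.2.2 (Set.mem_Icc.mpr ⟨hx.1, by omega⟩)
    rw [hB, Finset.mem_image]
    refine ⟨e, ?_, hte⟩
    have h1 := hp e hend
    have h2 := ht.1 hend
    rw [Set.mem_Icc] at h2
    rw [abs_le] at h1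
    rw [hS, Finset.mem_filter, mem_ND]
    refine ⟨hend, ?_⟩
    omega
  have hfinal := image_sub_bound hBcard hB1 hBup hBlow
  rw [Finset.sum_sub_distrib, hsum_t, hsum_t']
  exact hfinal

/-- interval version -/
lemma interval_bound (hn : 9 ≤ n)
    (ht : IsEdgeLabeling n t) (ht' : IsEdgeLabeling n t')
    (hp : ∀ e : Sym2 (Fin n), ¬ e.IsDiag → |(t' e : ℤ) - (t e : ℤ)| ≤ (p : ℤ))
    (a b : ℕ) (ha : 1 ≤ a) :
    |∑ e ∈ (ND n).filter (fun e => a ≤ t e ∧ t e ≤ b), ((t' e : ℤ) - (t e : ℤ))|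
      ≤ 4 * (p : ℤ)^2 := by
  classical
  by_cases hab : a ≤ b
  · have hdisj : Disjoint ((ND n).filter (fun e => t e ≤ a - 1))
        ((ND n).filter (fun e => a ≤ t e ∧ t e ≤ b)) := by
      rw [Finset.disjoint_left]
      intro e he1 he2
      rw [Finset.mem_filter] at he1 he2
      omega
    have hsplit : (ND n).filter (fun e => t e ≤ b)
        = (ND n).filter (fun e => t e ≤ a - 1)
          ∪ (ND n).filter (fun e => a ≤ t e ∧ t e ≤ b) := by
      ext e
      simp only [Finset.mem_union, Finset.mem_filter]
      constructor
      · rintro ⟨h1, h2⟩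
        by_cases hc : t e ≤ a - 1
        · exact Or.inl ⟨h1, hc⟩
        · exact Or.inr ⟨h1, by omega, h2⟩
      · rintro (⟨h1, h2⟩ | ⟨h1, h2, h3⟩)
        · exact ⟨h1, by omega⟩
        · exact ⟨h1, h3⟩
    have hsum : ∑ e ∈ (ND n).filter (fun e => t e ≤ b), ((t' e : ℤ) - (t e : ℤ))
        = ∑ e ∈ (ND n).filter (fun e => t e ≤ a - 1), ((t' e : ℤ) - (t e : ℤ))
          + ∑ e ∈ (ND n).filter (fun e => a ≤ t e ∧ t e ≤ b), ((t' e : ℤ) - (t e : ℤ)) := by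
      rw [hsplit]
      exact Finset.sum_union hdisj
    have h1 := prefix_bound hn ht ht' hp b
    have h2 := prefix_bound hn ht ht' hp (a - 1)
    have h3 : ∑ e ∈ (ND n).filter (fun e => a ≤ t e ∧ t e ≤ b),
        ((t' e : ℤ) - (t e : ℤ)) = ∑ e ∈ (ND n).filter (fun e => t e ≤ b),
        ((t' e : ℤ) - (t e : ℤ)) - ∑ e ∈ (ND n).filter (fun e => t e ≤ a - 1),
        ((t' e : ℤ) - (t e : ℤ)) := by
      rw [hsum]
      ring
    have h4 : |∑ e ∈ (ND n).filter (fun e => a ≤ t e ∧ t e ≤ b),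
        ((t' e : ℤ) - (t e : ℤ))| ≤ 2 * (p:ℤ)^2 + 2 * (p:ℤ)^2 := by
      rw [h3, sub_eq_add_neg]
      refine (abs_add_le _ _).trans ?_
      rw [abs_neg]
      exact add_le_add h1 h2
    linarith [h4]
  · have hemp : (ND n).filter (fun e => a ≤ t e ∧ t e ≤ b) = ∅ := by
      apply Finset.filter_false_of_mem
      intro e he
      intro hcon
      omega
    rw [hemp]
    simp


end Prefix
end SP
namespace SP
open Swap

section Credits

variable {n : ℕ}

lemma incEdges_card_le (v : Fin n) : (incEdges n v).card ≤ n - 1 := by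
  classical
  have hsub : incEdges n v ⊆ (Finset.univ.erase v).image (fun u => s(v, u)) := by
    intro e he
    unfold incEdges at he
    rw [Finset.mem_filter] at he
    obtain ⟨-, hv, hnd⟩ := he
    induction e with
    | _ x y =>
      have hxy : x ≠ y := by simpa [Sym2.mk_isDiag_iff] using hnd
      rw [Finset.mem_image]
      rw [Sym2.mem_iff] at hv
      rcases hv with h | h
      · exact ⟨y, Finset.mem_erase.mpr ⟨fun hc => hxy (h.symm.trans hc.symm),
          Finset.mem_univ _⟩, by rw [h]⟩
      · exact ⟨x, Finset.mem_erase.mpr ⟨fun hc => hxy (hc.trans h), Finset.mem_univ _⟩,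
          by rw [h]; exact Sym2.eq_swap⟩
  calc (incEdges n v).card ≤ _ := Finset.card_le_card hsub
  _ ≤ (Finset.univ.erase v).card := Finset.card_image_le
  _ = n - 1 := by rw [Finset.card_erase_of_mem (Finset.mem_univ _), Finset.card_univ,
      Fintype.card_fin]

/-- identify the vertex from an even-zone label -/
lemma even_zone_owner (hn : 9 ≤ n) {o d w x : ℕ} (hV : Valid n o d)
    (hlab : lab n o d = x) (hw : w < n)
    (hrange : w * HH n + 1 ≤ x ∧ x ≤ w * HH n + HH n
      ∨ n * PP n + 1 ≤ x + (w + 1) * HH n ∧ x + w * HH n ≤ n * PP n) :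
    (o + 1) % n = w := by
  have hfw := nonlin_facts (n := n) hw
  have hm := mzone_id n
  have hz := zone_id n
  have ho := hV.1
  have hfo := nonlin_facts (n := n) ho
  have hxle : 1 ≤ x ∧ x ≤ n * PP n := by
    rcases hrange with ⟨h1, h2⟩ | ⟨h1, h2⟩ <;> constructor <;> omega
  rcases valid_cases hV with ⟨c1, c2, c3⟩ | ⟨c1, c2, c3⟩ | ⟨c1, c2, c3⟩ | ⟨c1, c2, c3⟩
  · -- even column
    rw [lab_even_eq c1 c2 c3] at hlab
    set u := (o + 1) % n with hu
    have hult : u < n := Nat.mod_lt _ (by omega)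
    have hfu := nonlin_facts (n := n) hult
    have hi1 : 1 ≤ d / 2 := by omega
    have hi2 : d / 2 ≤ PP n := by omega
    rcases (by omega : (1 ≤ d/2 ∧ d/2 ≤ HH n) ∨ (HH n < d/2 ∧ d/2 ≤ 2 * HH n)
        ∨ 2 * HH n < d/2) with ⟨a1, b1⟩ | ⟨a1, b1⟩ | a1
    · have hr := Mf_p1_range hult a1 b1
      have hval := Mf_p1 (n := n) (j := u) a1 b1
      rcases hrange with ⟨h1, h2⟩ | ⟨h1, h2⟩
      · exact (block_inj (H := HH n) (show d/2 - 1 < HH n by omega)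
          (show x - w * HH n - 1 < HH n by omega)
          (show u * HH n + (d/2 - 1) = w * HH n + (x - w * HH n - 1) by omega)).1
      · exfalso
        -- x ≤ n*HH but x ≥ nP + 1 - (w+1)*HH ≥ nP - nH + 1 > nH
        omega
    · have hr := Mf_p2_range hult a1 b1
      have hval := Mf_p2 (n := n) (j := u) a1 b1
      rcases hrange with ⟨h1, h2⟩ | ⟨h1, h2⟩
      · exfalso
        omega
      · have hble : (u + 1) * HH n ≤ n * PP n := by omega
        have hz1 : n * PP n - x = u * HH n + (2 * HH n - d/2) := by omega
        exact (block_inj (H := HH n) (show 2 * HH n - d/2 < HH n by omega)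
          (show (n * PP n - x) - w * HH n < HH n by omega)
          (show u * HH n + (2 * HH n - d/2)
            = w * HH n + ((n * PP n - x) - w * HH n) by omega)).1
    · have hr := Mf_p3_range hult a1 hi2
      have hval := Mf_p3 (n := n) (j := u) a1
      exfalso
      rcases hrange with ⟨h1, h2⟩ | ⟨h1, h2⟩ <;> omega
  · exfalso
    have hr := lab_odd_range ho c2 c3
    omega
  · exfalso
    have hr := lab_left_range (by omega) ho c1 c2 c3
    omega
  · exfalso
    have hr := lab_half_range c1 c2 c3
    omega

/-- identify the vertex from an odd-zone (high) label -/
lemma odd_zone_owner (hn : 9 ≤ n) {o d w x : ℕ} (hV : Valid n o d)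
    (hlab : lab n o d = x) (hw : w < n) (hH : 1 ≤ HH n)
    (hrange : eps n + 1 ≤ x + w * HH n + HH n ∧ x + w * HH n ≤ eps n
      ∨ eps n + 1 + w * HH n ≤ x + n * PP n
        ∧ x + n * PP n ≤ eps n + (w + 1) * HH n) :
    o = w := by
  have hfw := nonlin_facts (n := n) hw
  have hm := mzone_id n
  have hz := zone_id n
  have ho := hV.1
  have hfo := nonlin_facts (n := n) ho
  have h2nP : 2 * (n * PP n) ≤ eps n := by omega
  have hxlow : eps n + 1 ≤ x + n * PP n ∧ x ≤ eps n := by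
    rcases hrange with ⟨h1, h2⟩ | ⟨h1, h2⟩ <;> constructor <;> omega
  rcases valid_cases hV with ⟨c1, c2, c3⟩ | ⟨c1, c2, c3⟩ | ⟨c1, c2, c3⟩ | ⟨c1, c2, c3⟩
  · exfalso
    have hr := lab_even_range ho (by omega) c1 c2 c3
    omega
  · -- odd column
    rw [lab_odd_eq c2 c3] at hlab
    set i := (d + 1) / 2 with hi
    have hi1 : 1 ≤ i := by omega
    have hi2 : i ≤ PP n := by omega
    have hMr := Mf_range (n := n) (i := i) ho hi1 hi2
    have hMx : Mf n o i + x = eps n + 1 := by omega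
    rcases (by omega : (1 ≤ i ∧ i ≤ HH n) ∨ (HH n < i ∧ i ≤ 2 * HH n)
        ∨ 2 * HH n < i) with ⟨a1, b1⟩ | ⟨a1, b1⟩ | a1
    · have hr := Mf_p1_range ho a1 b1
      have hval := Mf_p1 (n := n) (j := o) a1 b1
      rcases hrange with ⟨h1, h2⟩ | ⟨h1, h2⟩
      · exact (block_inj (H := HH n) (show i - 1 < HH n by omega)
          (show (eps n + 1 - x) - w * HH n - 1 < HH n by omega)
          (show o * HH n + (i - 1)
            = w * HH n + ((eps n + 1 - x) - w * HH n - 1) by omega)).1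
      · exfalso
        omega
    · have hr := Mf_p2_range ho a1 b1
      have hval := Mf_p2 (n := n) (j := o) a1 b1
      rcases hrange with ⟨h1, h2⟩ | ⟨h1, h2⟩
      · exfalso
        omega
      · have hble : (o + 1) * HH n ≤ n * PP n := by omega
        exact (block_inj (H := HH n) (show 2 * HH n - i < HH n by omega)
          (show (n * PP n - (eps n + 1 - x)) - w * HH n < HH n by omega)
          (show o * HH n + (2 * HH n - i)
            = w * HH n + ((n * PP n - (eps n + 1 - x)) - w * HH n) by omega)).1
    · have hr := Mf_p3_range ho a1 hi2
      have hval := Mf_p3 (n := n) (j := o) a1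
      exfalso
      rcases hrange with ⟨h1, h2⟩ | ⟨h1, h2⟩ <;> omega
  · exfalso
    have hr := lab_left_range (by omega) ho c1 c2 c3
    omega
  · exfalso
    have hr := lab_half_range c1 c2 c3
    have he2 : n % 2 = 0 := by omega
    rw [he2] at hz
    simp at hz
    omega

/-- membership from ownership -/
lemma owner_mem (hn : 9 ≤ n) (v : Fin n) {e : Sym2 (Fin n)} (he : e ∈ ND n)
    (hP : ∀ o d : ℕ, Valid n o d → lab n o d = tl n e → o = v.val) : v ∈ e := by
  induction e with
  | _ a b =>
    have hab : a ≠ b := by simpa [Sym2.mk_isDiag_iff] using (mem_ND.mp he)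
    obtain ⟨o, d, hV, hlab, hrep⟩ := edge_repr hab
    have ho := hV.1
    have hov : o = v.val := hP o d hV (by rw [← hlab, tl_mk])
    rw [hrep]
    unfold edg
    have hfin : (⟨o % n, Nat.mod_lt _ (by omega)⟩ : Fin n) = v := by
      apply Fin.ext
      show o % n = v.val
      rw [Nat.mod_eq_of_lt ho, hov]
    rw [← hfin]
    exact Sym2.mem_mk_left _ _

/-- membership from predecessor-ownership (even zone) -/
lemma owner_mem' (hn : 9 ≤ n) (v : Fin n) {e : Sym2 (Fin n)} (he : e ∈ ND n)
    (hP : ∀ o d : ℕ, Valid n o d → lab n o d = tl n e → (o + 1) % n = (v.val + 1) % n) :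
    v ∈ e := by
  apply owner_mem hn v he
  intro o d hV hlab
  exact succ_mod_inj hV.1 v.isLt (hP o d hV hlab)

end Credits
end SP
namespace SP
open Swap

section Delta

variable {n : ℕ}

set_option maxHeartbeats 2000000 in
lemma delta_bound (hn : 9 ≤ n) {p : ℕ} {t' : Sym2 (Fin n) → ℕ}
    (ht' : IsEdgeLabeling n t')
    (hp : ∀ e : Sym2 (Fin n), ¬ e.IsDiag → |(t' e : ℤ) - (tl n e : ℤ)| ≤ (p : ℤ))
    (v : Fin n) :
    |∑ e ∈ incEdges n v, ((t' e : ℤ) - (tl n e : ℤ))|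
      ≤ 16 * (p:ℤ)^2 + (p:ℤ) * ((n - 1 - 4 * HH n : ℕ) : ℤ) := by
  classical
  have ht := tl_bijOn hn
  have hH1 : 1 ≤ HH n := by unfold HH PP qq; omega
  obtain ⟨vv, hvveq, hvlt⟩ : ∃ vv, vv = v.val ∧ vv < n := ⟨v.val, rfl, v.isLt⟩
  obtain ⟨j', hj'eq, hj'lt⟩ : ∃ j', j' = (v.val + 1) % n ∧ j' < n :=
    ⟨_, rfl, Nat.mod_lt _ (by omega)⟩
  have hfj := nonlin_facts (n := n) hj'lt
  have hfv := nonlin_facts (n := n) hvlt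
  have hm := mzone_id n
  have hz := zone_id n
  have h2nP : 2 * (n * PP n) ≤ eps n := by omega
  set a1 := j' * HH n + 1 with ha1
  set b1 := j' * HH n + HH n with hb1
  set a2 := n * PP n - (j' + 1) * HH n + 1 with ha2
  set b2 := n * PP n - j' * HH n with hb2
  set a3 := eps n + 1 - (vv * HH n + HH n) with ha3
  set b3 := eps n - vv * HH n with hb3
  set a4 := eps n + 1 - (n * PP n - vv * HH n) with ha4
  set b4 := eps n + (vv + 1) * HH n - n * PP n with hb4
  set E1 := (ND n).filter (fun e => a1 ≤ tl n e ∧ tl n e ≤ b1) with hE1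
  set E2 := (ND n).filter (fun e => a2 ≤ tl n e ∧ tl n e ≤ b2) with hE2
  set E3 := (ND n).filter (fun e => a3 ≤ tl n e ∧ tl n e ≤ b3) with hE3
  set E4 := (ND n).filter (fun e => a4 ≤ tl n e ∧ tl n e ≤ b4) with hE4
  -- each Ei consists of edges at v
  have hmem1 : E1 ⊆ incEdges n v := by
    intro e he
    rw [hE1, Finset.mem_filter] at he
    obtain ⟨hnd, hl, hu⟩ := he
    unfold incEdges
    rw [Finset.mem_filter]
    refine ⟨Finset.mem_univ _, ?_, mem_ND.mp hnd⟩
    apply owner_mem' hn v hnd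
    intro o d hV hlab
    rw [← hj'eq]
    exact even_zone_owner hn hV hlab hj'lt (Or.inl (by omega))
  have hmem2 : E2 ⊆ incEdges n v := by
    intro e he
    rw [hE2, Finset.mem_filter] at he
    obtain ⟨hnd, hl, hu⟩ := he
    unfold incEdges
    rw [Finset.mem_filter]
    refine ⟨Finset.mem_univ _, ?_, mem_ND.mp hnd⟩
    apply owner_mem' hn v hnd
    intro o d hV hlab
    rw [← hj'eq]
    exact even_zone_owner hn hV hlab hj'lt (Or.inr (by omega))
  have hmem3 : E3 ⊆ incEdges n v := by
    intro e he
    rw [hE3, Finset.mem_filter] at he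
    obtain ⟨hnd, hl, hu⟩ := he
    unfold incEdges
    rw [Finset.mem_filter]
    refine ⟨Finset.mem_univ _, ?_, mem_ND.mp hnd⟩
    apply owner_mem hn v hnd
    intro o d hV hlab
    rw [← hvveq]
    exact odd_zone_owner hn hV hlab hvlt hH1 (Or.inl (by omega))
  have hmem4 : E4 ⊆ incEdges n v := by
    intro e he
    rw [hE4, Finset.mem_filter] at he
    obtain ⟨hnd, hl, hu⟩ := he
    unfold incEdges
    rw [Finset.mem_filter]
    refine ⟨Finset.mem_univ _, ?_, mem_ND.mp hnd⟩
    apply owner_mem hn v hnd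
    intro o d hV hlab
    rw [← hvveq]
    exact odd_zone_owner hn hV hlab hvlt hH1 (Or.inr (by omega))
  -- disjointness
  have hd12 : Disjoint E1 E2 := by
    rw [Finset.disjoint_left]
    intro e he1 he2
    rw [hE1, Finset.mem_filter] at he1
    rw [hE2, Finset.mem_filter] at he2
    omega
  have hd13 : Disjoint E1 E3 := by
    rw [Finset.disjoint_left]
    intro e he1 he2
    rw [hE1, Finset.mem_filter] at he1
    rw [hE3, Finset.mem_filter] at he2
    omega
  have hd14 : Disjoint E1 E4 := by
    rw [Finset.disjoint_left]
    intro e he1 he2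
    rw [hE1, Finset.mem_filter] at he1
    rw [hE4, Finset.mem_filter] at he2
    omega
  have hd23 : Disjoint E2 E3 := by
    rw [Finset.disjoint_left]
    intro e he1 he2
    rw [hE2, Finset.mem_filter] at he1
    rw [hE3, Finset.mem_filter] at he2
    omega
  have hd24 : Disjoint E2 E4 := by
    rw [Finset.disjoint_left]
    intro e he1 he2
    rw [hE2, Finset.mem_filter] at he1
    rw [hE4, Finset.mem_filter] at he2
    omega
  have hd34 : Disjoint E3 E4 := by
    rw [Finset.disjoint_left]
    intro e he1 he2
    rw [hE3, Finset.mem_filter] at he1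
    rw [hE4, Finset.mem_filter] at he2
    omega
  set U := E1 ∪ E2 ∪ E3 ∪ E4 with hU
  have hUsub : U ⊆ incEdges n v := by
    rw [hU]
    refine Finset.union_subset (Finset.union_subset (Finset.union_subset ?_ ?_) ?_) ?_
      <;> assumption
  -- cardinalities : each Ei has at least H elements
  have hcard : ∀ (a b : ℕ), 1 ≤ a → b ≤ eps n → b + 1 - a = HH n →
      HH n ≤ ((ND n).filter (fun e => a ≤ tl n e ∧ tl n e ≤ b)).card := by
    intro a b hA hB hab
    have himg : Finset.Icc a b ⊆ ((ND n).filter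
        (fun e => a ≤ tl n e ∧ tl n e ≤ b)).image (tl n) := by
      intro x hx
      rw [Finset.mem_Icc] at hx
      obtain ⟨e, hend, hte⟩ := ht.2.2
        (show x ∈ Set.Icc 1 (eps n) from Set.mem_Icc.mpr ⟨by omega, by omega⟩)
      rw [Finset.mem_image]
      exact ⟨e, Finset.mem_filter.mpr ⟨mem_ND.mpr hend, by omega, by omega⟩, hte⟩
    calc HH n = (Finset.Icc a b).card := by rw [Nat.card_Icc]; omega
    _ ≤ _ := Finset.card_le_card himg
    _ ≤ _ := Finset.card_image_le
  have hc1 : HH n ≤ E1.card := by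
    rw [hE1]; exact hcard a1 b1 (by omega) (by omega) (by omega)
  have hc2 : HH n ≤ E2.card := by
    rw [hE2]; exact hcard a2 b2 (by omega) (by omega) (by omega)
  have hc3 : HH n ≤ E3.card := by
    rw [hE3]; exact hcard a3 b3 (by omega) (by omega) (by omega)
  have hc4 : HH n ≤ E4.card := by
    rw [hE4]; exact hcard a4 b4 (by omega) (by omega) (by omega)
  have hUcard : 4 * HH n ≤ U.card := by
    rw [hU, Finset.card_union_of_disjoint (by
        simp only [Finset.disjoint_union_left]
        exact ⟨⟨hd14, hd24⟩, hd34⟩),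
      Finset.card_union_of_disjoint (by
        simp only [Finset.disjoint_union_left]
        exact ⟨hd13, hd23⟩),
      Finset.card_union_of_disjoint hd12]
    omega
  -- split the sum
  have hsum : ∑ e ∈ incEdges n v, ((t' e : ℤ) - (tl n e : ℤ))
      = ∑ e ∈ incEdges n v \ U, ((t' e : ℤ) - (tl n e : ℤ))
        + ∑ e ∈ U, ((t' e : ℤ) - (tl n e : ℤ)) := (Finset.sum_sdiff hUsub).symm
  have hsumU : ∑ e ∈ U, ((t' e : ℤ) - (tl n e : ℤ))
      = ∑ e ∈ E1, ((t' e : ℤ) - (tl n e : ℤ)) + ∑ e ∈ E2, ((t' e : ℤ) - (tl n e : ℤ))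
        + ∑ e ∈ E3, ((t' e : ℤ) - (tl n e : ℤ))
        + ∑ e ∈ E4, ((t' e : ℤ) - (tl n e : ℤ)) := by
    rw [hU, Finset.sum_union (by
        simp only [Finset.disjoint_union_left]
        exact ⟨⟨hd14, hd24⟩, hd34⟩),
      Finset.sum_union (by
        simp only [Finset.disjoint_union_left]
        exact ⟨hd13, hd23⟩),
      Finset.sum_union hd12]
  have hb1' := interval_bound hn ht ht' hp a1 b1 (by omega)
  have hb2' := interval_bound hn ht ht' hp a2 b2 (by omega)
  have hb3' := interval_bound hn ht ht' hp a3 b3 (by omega)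
  have hb4' := interval_bound hn ht ht' hp a4 b4 (by omega)
  rw [← hE1] at hb1'
  rw [← hE2] at hb2'
  rw [← hE3] at hb3'
  rw [← hE4] at hb4'
  -- the scattered part
  have hrest : |∑ e ∈ incEdges n v \ U, ((t' e : ℤ) - (tl n e : ℤ))|
      ≤ (p : ℤ) * ((n - 1 - 4 * HH n : ℕ) : ℤ) := by
    calc |∑ e ∈ incEdges n v \ U, ((t' e : ℤ) - (tl n e : ℤ))|
        ≤ ∑ e ∈ incEdges n v \ U, |(t' e : ℤ) - (tl n e : ℤ)| :=
          Finset.abs_sum_le_sum_abs _ _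
    _ ≤ (incEdges n v \ U).card • (p : ℤ) := by
        apply Finset.sum_le_card_nsmul
        intro e he
        have hnd : ¬ e.IsDiag := by
          have := Finset.mem_sdiff.mp he
          have h2 := this.1
          unfold incEdges at h2
          rw [Finset.mem_filter] at h2
          exact h2.2.2
        exact hp e hnd
    _ ≤ ((n - 1 - 4 * HH n : ℕ) : ℤ) * (p : ℤ) := by
        rw [nsmul_eq_mul]
        apply mul_le_mul_of_nonneg_right _ (by positivity)
        have hcs : (incEdges n v \ U).card ≤ n - 1 - 4 * HH n := by
          rw [Finset.card_sdiff_of_subset hUsub]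
          have := incEdges_card_le v
          omega
        exact_mod_cast hcs
    _ = (p : ℤ) * ((n - 1 - 4 * HH n : ℕ) : ℤ) := by ring
  rw [hsum]
  calc |∑ e ∈ incEdges n v \ U, ((t' e : ℤ) - (tl n e : ℤ))
      + ∑ e ∈ U, ((t' e : ℤ) - (tl n e : ℤ))|
      ≤ |∑ e ∈ incEdges n v \ U, ((t' e : ℤ) - (tl n e : ℤ))|
        + |∑ e ∈ U, ((t' e : ℤ) - (tl n e : ℤ))| := abs_add_le _ _
  _ ≤ (p : ℤ) * ((n - 1 - 4 * HH n : ℕ) : ℤ) + (4 * (p:ℤ)^2 + 4 * (p:ℤ)^2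
        + 4 * (p:ℤ)^2 + 4 * (p:ℤ)^2) := by
      apply add_le_add hrest
      rw [hsumU]
      have habs4 : ∀ (x1 x2 x3 x4 : ℤ), |x1 + x2 + x3 + x4|
          ≤ |x1| + |x2| + |x3| + |x4| := by
        intro x1 x2 x3 x4
        calc |x1 + x2 + x3 + x4| ≤ |x1 + x2 + x3| + |x4| := abs_add_le _ _
        _ ≤ |x1 + x2| + |x3| + |x4| := by
            have := abs_add_le (x1 + x2) x3
            linarith
        _ ≤ |x1| + |x2| + |x3| + |x4| := by
            have := abs_add_le x1 x2
            linarith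
      refine (habs4 _ _ _ _).trans ?_
      have h4 := add_le_add (add_le_add (add_le_add hb1' hb2') hb3') hb4'
      linarith [h4]
  _ = 16 * (p:ℤ)^2 + (p:ℤ) * ((n - 1 - 4 * HH n : ℕ) : ℤ) := by ring

lemma swap_bound (hn : 9 ≤ n) {p : ℕ} {t' : Sym2 (Fin n) → ℕ}
    (hsw : IsPSwap n p (tl n) t') (u v : Fin n) :
    |labelSum n t' u - labelSum n t' v|
      ≤ 5 * (n:ℤ) + 32 * (p:ℤ)^2 + (p:ℤ) * ((n:ℤ) + 6) := by
  obtain ⟨ht', hp⟩ := hsw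
  have hDu := delta_bound hn ht' hp u
  have hDv := delta_bound hn ht' hp v
  have hEu : labelSum n t' u - labelSum n (tl n) u
      = ∑ e ∈ incEdges n u, ((t' e : ℤ) - (tl n e : ℤ)) := by
    unfold labelSum
    rw [Finset.sum_sub_distrib]
  have hEv : labelSum n t' v - labelSum n (tl n) v
      = ∑ e ∈ incEdges n v, ((t' e : ℤ) - (tl n e : ℤ)) := by
    unfold labelSum
    rw [Finset.sum_sub_distrib]
  have h1 := labelSum_near hn u
  have h2 := labelSum_near hn v
  have hsc : 2 * ((n - 1 - 4 * HH n : ℕ) : ℤ) ≤ (n : ℤ) + 6 := by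
    have : 2 * (n - 1 - 4 * HH n) ≤ n + 6 := by unfold HH PP qq; omega
    exact_mod_cast this
  have hp0 : (0:ℤ) ≤ (p : ℤ) := by positivity
  rw [abs_le] at hDu hDv ⊢
  rw [← hEu] at hDu
  rw [← hEv] at hDv
  constructor <;> nlinarith [hDu.1, hDu.2, hDv.1, hDv.2, h1.1, h1.2, h2.1, h2.2, hsc, hp0]

lemma robustness_bound (hn : 9 ≤ n) (p : ℕ) :
    robustness n p (tl n) ≤ 5 * n + 32 * p^2 + p * (n + 6) := by
  classical
  unfold robustness
  rcases Set.eq_empty_or_nonempty {d : ℕ | ∃ t' : Sym2 (Fin n) → ℕ,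
      IsPSwap n p (tl n) t' ∧ ∃ u v : Fin n, u ≠ v ∧
        (d : ℤ) = |labelSum n t' u - labelSum n t' v|} with h | h
  · rw [h, csSup_empty]
    exact Nat.zero_le _
  · apply csSup_le h
    rintro d ⟨t', hsw, u, v, -, hd⟩
    have hb := swap_bound hn hsw u v
    rw [← hd] at hb
    have : ((5 * n + 32 * p^2 + p * (n + 6) : ℕ) : ℤ)
        = 5 * (n:ℤ) + 32 * (p:ℤ)^2 + (p:ℤ) * ((n:ℤ) + 6) := by push_cast; ring
    rw [← this] at hb
    exact_mod_cast hb

end Delta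
end SP
theorem stmt18 (ε : ℝ) (hε : 0 < ε) :
    ∃ (N : ℕ) (t : ∀ n : ℕ, Sym2 (Fin n) → ℕ),
      (∀ n : ℕ, N ≤ n → Swap.AlmostSupermagic n (7 * n) (t n)) ∧
      ∀ p : ℕ → ℕ, Swap.Admissible p →
        Filter.limsup
          (fun n : ℕ => (Swap.robustness n (p n) (t n) : ℝ) / (2 * p n * n)) Filter.atTop
          ≤ 1 / 2 + ε := by
  classical
  refine ⟨9, fun n => SP.tl n, fun n hn => SP.almost hn, ?_⟩
  intro p hadm
  obtain ⟨hp0, hpinf⟩ := hadm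
  set f : ℕ → ℝ := fun n : ℕ => (Swap.robustness n (p n) (SP.tl n) : ℝ) / (2 * p n * n)
    with hf
  have hf0 : ∀ n, 0 ≤ f n := by
    intro n
    rw [hf]
    positivity
  apply Filter.limsup_le_of_le
  · exact Filter.isCoboundedUnder_le_of_le Filter.atTop (x := 0) hf0
  · -- eventual bound
    have hA : ∀ᶠ n in Filter.atTop, max 1 ⌈(8:ℝ)/ε⌉₊ ≤ p n :=
      hpinf.eventually_ge_atTop _
    have hB : ∀ᶠ n in Filter.atTop, (p n : ℝ) / n < ε / 48 :=
      hp0.eventually (gt_mem_nhds (by positivity))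
    have hC : ∀ᶠ n in Filter.atTop, max 9 ⌈(9:ℝ)/ε⌉₊ ≤ n :=
      Filter.eventually_ge_atTop _
    filter_upwards [hA, hB, hC] with n hA' hB' hC'
    have hn9 : 9 ≤ n := le_trans (le_max_left _ _) hC'
    have hp1 : 1 ≤ p n := le_trans (le_max_left _ _) hA'
    -- real-number versions
    set P := (p n : ℝ) with hP
    set Nr := (n : ℝ) with hNr
    have hP1 : (1 : ℝ) ≤ P := by rw [hP]; exact_mod_cast hp1
    have hN9 : (9 : ℝ) ≤ Nr := by rw [hNr]; exact_mod_cast hn9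
    have hεP : 8 ≤ ε * P := by
      have h1 : ((8:ℝ)/ε) ≤ (⌈(8:ℝ)/ε⌉₊ : ℝ) := Nat.le_ceil _
      have h2 : ((⌈(8:ℝ)/ε⌉₊ : ℕ) : ℝ) ≤ P := by
        rw [hP]
        exact_mod_cast le_trans (le_max_right _ _) hA'
      have h3 : (8:ℝ)/ε ≤ P := le_trans h1 h2
      rw [div_le_iff₀ hε] at h3
      nlinarith
    have hεN : 9 ≤ ε * Nr := by
      have h1 : ((9:ℝ)/ε) ≤ (⌈(9:ℝ)/ε⌉₊ : ℝ) := Nat.le_ceil _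
      have h2 : ((⌈(9:ℝ)/ε⌉₊ : ℕ) : ℝ) ≤ Nr := by
        rw [hNr]
        exact_mod_cast le_trans (le_max_right _ _) hC'
      have h3 : (9:ℝ)/ε ≤ Nr := le_trans h1 h2
      rw [div_le_iff₀ hε] at h3
      nlinarith
    have hPN : 48 * P ≤ ε * Nr := by
      have hNpos : (0:ℝ) < Nr := by linarith
      rw [div_lt_iff₀ hNpos] at hB'
      nlinarith
    -- the robustness bound
    have hR : (Swap.robustness n (p n) (SP.tl n) : ℝ)
        ≤ 5 * Nr + 32 * P^2 + P * (Nr + 6) := by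
      have h1 := SP.robustness_bound hn9 (p n)
      have h2 : ((Swap.robustness n (p n) (SP.tl n) : ℕ) : ℝ)
          ≤ ((5 * n + 32 * (p n)^2 + p n * (n + 6) : ℕ) : ℝ) := by exact_mod_cast h1
      calc (Swap.robustness n (p n) (SP.tl n) : ℝ) ≤ _ := h2
      _ = 5 * Nr + 32 * P^2 + P * (Nr + 6) := by push_cast; ring
    have hdenom : (0:ℝ) < 2 * P * Nr := by nlinarith
    rw [hf]
    show (Swap.robustness n (p n) (SP.tl n) : ℝ) / (2 * (p n : ℝ) * n) ≤ 1/2 + ε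
    rw [div_le_iff₀ hdenom]
    have hfin : 5 * Nr + 32 * P^2 + P * (Nr + 6) ≤ (1/2 + ε) * (2 * P * Nr) := by
      nlinarith [mul_nonneg (by nlinarith : (0:ℝ) ≤ ε * P - 8) (by nlinarith : (0:ℝ) ≤ Nr),
        mul_nonneg (by nlinarith : (0:ℝ) ≤ ε * Nr - 48 * P) (by nlinarith : (0:ℝ) ≤ P),
        mul_nonneg (by nlinarith : (0:ℝ) ≤ ε * Nr - 9) (by nlinarith : (0:ℝ) ≤ P)]
    linarith [hR, hfin]
end
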